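/- arXiv:2511.22014 — 4 statements merged into one kernel-verified Lean document; each statement's English description precedes it below -/
import Mathlib

section
/- Let H=(V,E) be a connected orderly hypertree without nested edges, and let u, v ∈ V be vertices with d_H(u,v) ≥ 2. Then any two shortest paths from u to v traverse the same sequence of edges: if u e₁ v₁ ⋯ e_t v_t and u f₁ w₁ ⋯ f_t w_t are both paths from u to v of length t = d_H(u,v), then e_i = f_i for every i with 1 ≤ i ≤ t. -/
open Set

variable {V : Type*}

/-- A hypergraph (given by its edge set `E`) is *orderly* if for any two distinct
edges `e₁, e₂` with nonempty intersection `S = e₁ ∩ e₂`, every edge `e` satisfies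
`S ⊆ e` or `S ∩ e = ∅`. -/
def Orderly (E : Set (Set V)) : Prop :=
  ∀ e₁ ∈ E, ∀ e₂ ∈ E, e₁ ≠ e₂ → (e₁ ∩ e₂).Nonempty →
    ∀ e ∈ E, e₁ ∩ e₂ ⊆ e ∨ (e₁ ∩ e₂) ∩ e = ∅

/-- The private vertices of an edge `e`: vertices of `e` belonging to no other edge. -/
def PrivateVerts (E : Set (Set V)) (e : Set V) : Set V :=
  {v ∈ e | ∀ e' ∈ E, e' ≠ e → v ∉ e'}

/-- `∩²_E`: the nonempty intersections of pairs of distinct edges. -/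
def PairInts (E : Set (Set V)) : Set (Set V) :=
  {S | S.Nonempty ∧ ∃ e₁ ∈ E, ∃ e₂ ∈ E, e₁ ≠ e₂ ∧ S = e₁ ∩ e₂}

/-- A path of length `t` in the hypergraph: an alternating sequence of `t+1` pairwise
distinct vertices and `t` pairwise distinct edges, consecutive vertices lying in the
corresponding edge. -/
def IsHPath (E : Set (Set V)) (t : ℕ) (v : Fin (t + 1) → V) (e : Fin t → Set V) : Prop :=
  Function.Injective v ∧ Function.Injective e ∧
    (∀ i : Fin t, e i ∈ E) ∧ ∀ i : Fin t, v i.castSucc ∈ e i ∧ v i.succ ∈ e i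

/-- The distance between two vertices: the minimum length of a path joining them. -/
noncomputable def hDist (E : Set (Set V)) (x y : V) : ℕ :=
  sInf {t | ∃ v : Fin (t + 1) → V, ∃ e : Fin t → Set V,
    IsHPath E t v e ∧ v 0 = x ∧ v (Fin.last t) = y}

/-- A hypergraph is connected if every two vertices are joined by a path. -/
def HConnected (E : Set (Set V)) : Prop :=
  ∀ x y : V, ∃ (t : ℕ) (v : Fin (t + 1) → V) (e : Fin t → Set V),
    IsHPath E t v e ∧ v 0 = x ∧ v (Fin.last t) = y

/-- A hypergraph is a hypertree if there is a tree `T` on `V` such that every hyperedge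
induces a connected subtree of `T`. -/
def IsHypertree (E : Set (Set V)) : Prop :=
  ∃ T : SimpleGraph V, T.IsTree ∧ ∀ e ∈ E, (T.induce e).Connected

/-- No edge is (strictly or otherwise) contained in a different edge. -/
def NoNestedEdges (E : Set (Set V)) : Prop :=
  ∀ e ∈ E, ∀ e' ∈ E, e ⊆ e' → e = e'

/-- The sub-hypergraph induced on `U`: `{e ∩ U : e ∈ E} \ {∅}`. -/
def InducedH (E : Set (Set V)) (U : Set V) : Set (Set V) :=
  {s | s.Nonempty ∧ ∃ e ∈ E, s = e ∩ U}

/-- Fagin-acyclicity: there is no set of `t ≥ 3` distinct vertices on which the induced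
sub-hypergraph is an ordinary graph cycle. -/
def FaginAcyclic (E : Set (Set V)) : Prop :=
  ¬ ∃ (t : ℕ) (u : Fin (t + 3) → V), Function.Injective u ∧
    InducedH E (Set.range u) = {s : Set V | ∃ i, s = {u i, u (i + 1)}}

/-- Conformality: every set of at least two vertices that is pairwise covered by edges is
contained in a single edge. -/
def HyperConformal (E : Set (Set V)) : Prop :=
  ∀ U : Set V, 2 ≤ U.ncard →
    (∀ x ∈ U, ∀ y ∈ U, ∃ e ∈ E, x ∈ e ∧ y ∈ e) → ∃ e ∈ E, U ⊆ e

/-- α-acyclicity: acyclic and conformal. -/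
def AlphaAcyclic (E : Set (Set V)) : Prop := FaginAcyclic E ∧ HyperConformal E

/-- β-acyclicity: every subset of the edge set is α-acyclic. -/
def BetaAcyclic (E : Set (Set V)) : Prop := ∀ E' ⊆ E, AlphaAcyclic E'
namespace Stmt12

variable {V : Type*}

/-- loose walk -/
def LW (E : Set (Set V)) (n : ℕ) (v : ℕ → V) (e : ℕ → Set V) : Prop :=
  ∀ k, k < n → e k ∈ E ∧ v k ∈ e k ∧ v (k + 1) ∈ e k

lemma hDist_le_of_isHPath {E : Set (Set V)} {t : ℕ} {v : Fin (t+1) → V} {e : Fin t → Set V}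
    {x y : V} (h : IsHPath E t v e) (hx : v 0 = x) (hy : v (Fin.last t) = y) :
    hDist E x y ≤ t :=
  Nat.sInf_le ⟨v, e, h, hx, hy⟩

lemma hDist_le_of_LW {E : Set (Set V)} : ∀ n : ℕ, ∀ v : ℕ → V, ∀ e : ℕ → Set V,
    ∀ x y : V, LW E n v e → v 0 = x → v n = y → hDist E x y ≤ n := by
  intro n
  induction n using Nat.strong_induction_on with
  | _ n IH =>
  intro v e x y hw hx hy
  by_cases hv : ∃ a b, a < b ∧ b ≤ n ∧ v a = v b
  · obtain ⟨a, b, hab, hbn, hvab⟩ := hv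
    have hd : 0 < b - a := by omega
    have hw' : LW E (n - (b-a)) (fun k => if k < a then v k else v (k + (b-a)))
        (fun k => if k < a then e k else e (k + (b-a))) := by
      intro k hk
      by_cases hka : k < a
      · have h1 := hw k (by omega)
        refine ⟨by simp [hka, h1.1], by simp [hka, h1.2.1], ?_⟩
        by_cases hk1 : k + 1 < a
        · simp only [if_pos hka, if_pos hk1]; exact h1.2.2
        · have hk1a : k + 1 = a := by omega
          have : v (k + 1 + (b-a)) = v (k+1) := by
            rw [hk1a, show a + (b-a) = b by omega]; exact hvab.symm
          simp only [if_pos hka, if_neg hk1]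
          rw [this]; exact h1.2.2
      · have h1 := hw (k + (b-a)) (by omega)
        refine ⟨by simp [hka, h1.1], by simp [hka, h1.2.1], ?_⟩
        have hk1 : ¬ (k + 1 < a) := by omega
        simp only [if_neg hka, if_neg hk1]
        have : k + 1 + (b-a) = k + (b-a) + 1 := by omega
        rw [this]; exact h1.2.2
    have h0 : (fun k => if k < a then v k else v (k + (b-a))) 0 = x := by
      by_cases h0a : 0 < a
      · simp [h0a, hx]
      · have ha : a = 0 := by omega
        simp only [if_neg (by omega : ¬ (0:ℕ) < a)]
        rw [show 0 + (b-a) = b by omega, ← hvab, ha, hx]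
    have hl : (fun k => if k < a then v k else v (k + (b-a))) (n - (b-a)) = y := by
      have : ¬ (n - (b-a) < a) := by omega
      simp only [if_neg this]
      rw [show n - (b-a) + (b-a) = n by omega, hy]
    calc hDist E x y ≤ n - (b-a) := IH _ (by omega) _ _ _ _ hw' h0 hl
    _ ≤ n := by omega
  · by_cases he : ∃ a b, a < b ∧ b < n ∧ e a = e b
    · obtain ⟨a, b, hab, hbn, heab⟩ := he
      have hw' : LW E (n - (b-a)) (fun k => if k ≤ a then v k else v (k + (b-a)))
          (fun k => if k ≤ a then e k else e (k + (b-a))) := by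
        intro k hk
        by_cases hka : k ≤ a
        · have h1 := hw k (by omega)
          refine ⟨by simp [hka, h1.1], by simp [hka, h1.2.1], ?_⟩
          by_cases hk1 : k + 1 ≤ a
          · simp only [if_pos hka, if_pos hk1]; exact h1.2.2
          · have hk1a : k = a := by omega
            simp only [if_pos hka, if_neg hk1]
            have h2 := hw b (by omega)
            rw [show k + 1 + (b-a) = b + 1 by omega, hk1a, heab]
            exact h2.2.2
        · have h1 := hw (k + (b-a)) (by omega)
          refine ⟨by simp [hka, h1.1], by simp [hka, h1.2.1], ?_⟩
          have hk1 : ¬ (k + 1 ≤ a) := by omega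
          simp only [if_neg hka, if_neg hk1]
          rw [show k + 1 + (b-a) = k + (b-a) + 1 by omega]
          exact h1.2.2
      have h0 : (fun k => if k ≤ a then v k else v (k + (b-a))) 0 = x := by simp [hx]
      have hl : (fun k => if k ≤ a then v k else v (k + (b-a))) (n - (b-a)) = y := by
        have : ¬ (n - (b-a) ≤ a) := by omega
        simp only [if_neg this]
        rw [show n - (b-a) + (b-a) = n by omega, hy]
      calc hDist E x y ≤ n - (b-a) := IH _ (by omega) _ _ _ _ hw' h0 hl
      _ ≤ n := by omega
    · -- build an honest path
      push_neg at hv he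
      refine Nat.sInf_le ⟨fun i => v i.val, fun i => e i.val, ⟨?_, ?_, ?_, ?_⟩, ?_, ?_⟩
      · intro i j hij
        rcases lt_trichotomy i.val j.val with h | h | h
        · exact absurd hij (hv i.val j.val h (by omega))
        · exact Fin.ext h
        · exact absurd hij.symm (hv j.val i.val h (by omega))
      · intro i j hij
        rcases lt_trichotomy i.val j.val with h | h | h
        · exact absurd hij (he i.val j.val h (by omega))
        · exact Fin.ext h
        · exact absurd hij.symm (he j.val i.val h (by omega))
      · intro i; exact (hw i.val i.isLt).1
      · intro i
        have h1 := hw i.val i.isLt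
        constructor
        · simpa using h1.2.1
        · simpa using h1.2.2
      · simpa using hx
      · simpa using hy

end Stmt12
namespace Stmt12

variable {V : Type*}

lemma exists_shortest {E : Set (Set V)} (hconn : HConnected E) (x y : V) :
    ∃ v : Fin (hDist E x y + 1) → V, ∃ e : Fin (hDist E x y) → Set V,
      IsHPath E (hDist E x y) v e ∧ v 0 = x ∧ v (Fin.last _) = y := by
  have hne : {t | ∃ v : Fin (t + 1) → V, ∃ e : Fin t → Set V,
      IsHPath E t v e ∧ v 0 = x ∧ v (Fin.last t) = y}.Nonempty := by
    obtain ⟨t, v, e, h⟩ := hconn x y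
    exact ⟨t, v, e, h⟩
  exact Nat.sInf_mem hne

/-- extend an honest path to a loose walk -/
lemma isHPath_toLW {E : Set (Set V)} {t : ℕ} {v : Fin (t+1) → V} {e : Fin t → Set V}
    (h : IsHPath E t v e) :
    LW E t (fun k => v ⟨min k t, by omega⟩)
      (fun k => if hk : k < t then e ⟨k, hk⟩ else ∅) := by
  intro k hk
  have h1 := h.2.2.1 ⟨k, hk⟩
  have h2 := h.2.2.2 ⟨k, hk⟩
  refine ⟨by simp [hk, h1], ?_, ?_⟩
  · simp only [dif_pos hk]
    have : (⟨min k t, by omega⟩ : Fin (t+1)) = (⟨k, hk⟩ : Fin t).castSucc := by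
      apply Fin.ext; simp [Fin.castSucc]; omega
    rw [this]; exact h2.1
  · simp only [dif_pos hk]
    have : (⟨min (k+1) t, by omega⟩ : Fin (t+1)) = (⟨k, hk⟩ : Fin t).succ := by
      apply Fin.ext; simp [Fin.succ]; omega
    rw [this]; exact h2.2

lemma LW_append {E : Set (Set V)} {n1 n2 : ℕ} {v1 v2 : ℕ → V} {e1 e2 : ℕ → Set V}
    (h1 : LW E n1 v1 e1) (h2 : LW E n2 v2 e2) (hmid : v1 n1 = v2 0) :
    LW E (n1 + n2) (fun k => if k ≤ n1 then v1 k else v2 (k - n1))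
      (fun k => if k < n1 then e1 k else e2 (k - n1)) := by
  intro k hk
  by_cases hk1 : k < n1
  · obtain ⟨ha, hb, hc⟩ := h1 k hk1
    refine ⟨by simp [hk1, ha], by simp [hk1, hk1.le, hb], ?_⟩
    by_cases hk2 : k + 1 ≤ n1
    · simp only [if_pos hk1, if_pos hk2]; exact hc
    · omega
  · obtain ⟨ha, hb, hc⟩ := h2 (k - n1) (by omega)
    refine ⟨by simp [hk1, ha], ?_, ?_⟩
    · by_cases hk2 : k ≤ n1
      · have : k = n1 := by omega
        simp only [if_pos hk2, this, hmid]
        simpa [this] using hb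
      · simp only [if_neg hk2, if_neg hk1]; exact hb
    · have hk2 : ¬ (k + 1 ≤ n1) := by omega
      simp only [if_neg hk2, if_neg hk1]
      rw [show k + 1 - n1 = k - n1 + 1 by omega]
      exact hc

lemma hDist_triangle {E : Set (Set V)} (hconn : HConnected E) (x y z : V) :
    hDist E x z ≤ hDist E x y + hDist E y z := by
  obtain ⟨v1, e1, h1, h10, h1l⟩ := exists_shortest hconn x y
  obtain ⟨v2, e2, h2, h20, h2l⟩ := exists_shortest hconn y z
  have w1 := isHPath_toLW h1
  have w2 := isHPath_toLW h2
  have hmid : v1 ⟨min (hDist E x y) (hDist E x y), by omega⟩ = v2 ⟨min 0 (hDist E y z), by omega⟩ := by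
    rw [show (⟨min (hDist E x y) (hDist E x y), by omega⟩ : Fin ((hDist E x y)+1)) = Fin.last (hDist E x y) by apply Fin.ext; simp [Fin.last]]
    rw [show (⟨min 0 (hDist E y z), by omega⟩ : Fin ((hDist E y z)+1)) = 0 by apply Fin.ext; simp]
    rw [h1l, h20]
  have hw := LW_append w1 w2 hmid
  refine hDist_le_of_LW _ _ _ _ _ hw ?_ ?_
  · show (if (0:ℕ) ≤ (hDist E x y) then v1 ⟨min 0 (hDist E x y), by omega⟩ else _) = x
    rw [if_pos (Nat.zero_le _)]
    rw [show (⟨min 0 (hDist E x y), by omega⟩ : Fin ((hDist E x y)+1)) = 0 by apply Fin.ext; simp]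
    exact h10
  · show (if (hDist E x y) + (hDist E y z) ≤ (hDist E x y) then v1 ⟨min ((hDist E x y)+(hDist E y z)) (hDist E x y), by omega⟩ else v2 ⟨min ((hDist E x y)+(hDist E y z)-(hDist E x y)) (hDist E y z), by omega⟩) = z
    by_cases h : (hDist E x y) + (hDist E y z) ≤ (hDist E x y)
    · have hz : (hDist E y z) = 0 := by omega
      rw [if_pos h]
      rw [show (⟨min ((hDist E x y)+(hDist E y z)) (hDist E x y), by omega⟩ : Fin ((hDist E x y)+1)) = Fin.last (hDist E x y) by apply Fin.ext; simp [Fin.last]; try omega]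
      rw [h1l]
      have h2l' := h2l
      rw [show Fin.last (hDist E y z) = (0 : Fin (hDist E y z + 1)) by apply Fin.ext; simp [Fin.last, hz]] at h2l'
      rw [← h2l']
      exact h20.symm
    · rw [if_neg h]
      rw [show (⟨min ((hDist E x y)+(hDist E y z)-(hDist E x y)) (hDist E y z), by omega⟩ : Fin ((hDist E y z)+1)) = Fin.last (hDist E y z) by apply Fin.ext; simp [Fin.last]]
      exact h2l

end Stmt12
namespace Stmt12

variable {V : Type*}

lemma hDist_self (E : Set (Set V)) (x : V) : hDist E x x = 0 :=
  Nat.le_zero.mp (Nat.sInf_le ⟨fun _ => x, fun i => i.elim0,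
    ⟨fun a b _ => Fin.ext (by omega), fun i => i.elim0, fun i => i.elim0, fun i => i.elim0⟩,
    rfl, rfl⟩)

section PathLemmas

variable {E : Set (Set V)} {t : ℕ} {u w : V} {p : Fin (t+1) → V} {pe : Fin t → Set V}

lemma head_bound (hp : IsHPath E t p pe) (hp0 : p 0 = u)
    (i : Fin t) {x : V} (hx : x ∈ pe i) : hDist E u x ≤ i.val + 1 := by
  refine hDist_le_of_LW (i.val + 1)
    (fun k => if h : k ≤ i.val then p ⟨k, by omega⟩ else x)
    (fun k => if h : k ≤ i.val then pe ⟨k, by omega⟩ else ∅) u x ?_ ?_ ?_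
  · intro k hk
    have hki : k ≤ i.val := by omega
    have hkt : k < t := by omega
    refine ⟨by simp only [dif_pos hki]; exact hp.2.2.1 _, ?_, ?_⟩
    · simp only [dif_pos hki]
      have h1 := (hp.2.2.2 ⟨k, hkt⟩).1
      have : (⟨k, by omega⟩ : Fin (t+1)) = (⟨k, hkt⟩ : Fin t).castSucc := by
        apply Fin.ext; simp
      rw [this]; exact h1
    · by_cases hk1 : k + 1 ≤ i.val
      · simp only [dif_pos hki, dif_pos hk1]
        have h1 := (hp.2.2.2 ⟨k, hkt⟩).2
        have : (⟨k+1, by omega⟩ : Fin (t+1)) = (⟨k, hkt⟩ : Fin t).succ := by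
          apply Fin.ext; simp
        rw [this]; exact h1
      · have hki2 : k = i.val := by omega
        simp only [dif_pos hki, dif_neg hk1]
        have : (⟨k, hkt⟩ : Fin t) = i := by apply Fin.ext; simp [hki2]
        rw [this]; exact hx
  · simp only [dif_pos (Nat.zero_le _)]
    rw [show (⟨0, by omega⟩ : Fin (t+1)) = 0 by apply Fin.ext; simp]
    exact hp0
  · simp only [dif_neg (by omega : ¬ (i.val + 1 ≤ i.val))]

lemma tail_bound (hp : IsHPath E t p pe) (hpl : p (Fin.last t) = w)
    (i : Fin t) {x : V} (hx : x ∈ pe i) : hDist E x w ≤ t - i.val := by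
  refine hDist_le_of_LW (t - i.val)
    (fun k => if k = 0 then x else if h : i.val + k ≤ t then p ⟨i.val + k, by omega⟩ else w)
    (fun k => if h : i.val + k < t then pe ⟨i.val + k, h⟩ else ∅) x w ?_ ?_ ?_
  · intro k hk
    have hkt : i.val + k < t := by omega
    refine ⟨by simp only [dif_pos hkt]; exact hp.2.2.1 _, ?_, ?_⟩
    · simp only [dif_pos hkt]
      by_cases hk0 : k = 0
      · simp only [if_pos hk0]
        have : (⟨i.val + k, hkt⟩ : Fin t) = i := by apply Fin.ext; simp [hk0]
        rw [this]; exact hx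
      · simp only [if_neg hk0, dif_pos (by omega : i.val + k ≤ t)]
        have h1 := (hp.2.2.2 ⟨i.val + k, hkt⟩).1
        have : (⟨i.val + k, by omega⟩ : Fin (t+1)) = (⟨i.val + k, hkt⟩ : Fin t).castSucc := by
          apply Fin.ext; simp
        rw [this]; exact h1
    · simp only [dif_pos hkt, if_neg (by omega : ¬ (k + 1 = 0)),
        dif_pos (by omega : i.val + (k+1) ≤ t)]
      have h1 := (hp.2.2.2 ⟨i.val + k, hkt⟩).2
      have : (⟨i.val + (k+1), by omega⟩ : Fin (t+1)) = (⟨i.val + k, hkt⟩ : Fin t).succ := by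
        apply Fin.ext; simp; try omega
      rw [this]; exact h1
  · simp
  · have h0 : ¬ (t - i.val = 0) := by omega
    simp only [if_neg h0, dif_pos (by omega : i.val + (t - i.val) ≤ t)]
    rw [show (⟨i.val + (t - i.val), by omega⟩ : Fin (t+1)) = Fin.last t by
      apply Fin.ext; simp [Fin.last]; try omega]
    exact hpl

lemma vertex_head_bound (hp : IsHPath E t p pe) (hp0 : p 0 = u) (j : Fin (t+1)) :
    hDist E u (p j) ≤ j.val := by
  by_cases hj : j.val = 0
  · have : j = 0 := by apply Fin.ext; simp [hj]
    rw [this, hp0, hDist_self]; omega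
  · have hjt : j.val - 1 < t := by omega
    have h1 := (hp.2.2.2 ⟨j.val - 1, hjt⟩).2
    have : (⟨j.val - 1, hjt⟩ : Fin t).succ = j := by apply Fin.ext; simp; try omega
    rw [this] at h1
    have h2 := head_bound hp hp0 ⟨j.val - 1, hjt⟩ h1
    have h3 : (⟨j.val - 1, hjt⟩ : Fin t).val = j.val - 1 := rfl
    omega

lemma vertex_tail_bound (hp : IsHPath E t p pe) (hpl : p (Fin.last t) = w) (j : Fin (t+1)) :
    hDist E (p j) w ≤ t - j.val := by
  by_cases hj : j.val = t
  · have : j = Fin.last t := by apply Fin.ext; simp [hj, Fin.last]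
    rw [this, hpl, hDist_self]
    omega
  · have hjt : j.val < t := by omega
    have h1 := (hp.2.2.2 ⟨j.val, hjt⟩).1
    have : (⟨j.val, hjt⟩ : Fin t).castSucc = j := by apply Fin.ext; simp
    rw [this] at h1
    exact tail_bound hp hpl ⟨j.val, hjt⟩ h1

variable (hconn : HConnected E) (ht : t = hDist E u w)

include hconn ht

lemma vertex_head_eq (hp : IsHPath E t p pe) (hp0 : p 0 = u) (hpl : p (Fin.last t) = w)
    (j : Fin (t+1)) : hDist E u (p j) = j.val := by
  have h1 := vertex_head_bound hp hp0 j
  have h2 := vertex_tail_bound hp hpl j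
  have h3 := hDist_triangle hconn u (p j) w
  omega

lemma cross_disj {q : Fin (t+1) → V} {qe : Fin t → Set V}
    (hp : IsHPath E t p pe) (hp0 : p 0 = u)
    (hq : IsHPath E t q qe) (hql : q (Fin.last t) = w)
    {i j : Fin t} {x : V} (hxp : x ∈ pe i) (hxq : x ∈ qe j) (hij : i.val + 2 ≤ j.val) :
    False := by
  have h1 := head_bound hp hp0 i hxp
  have h2 := tail_bound hq hql j hxq
  have h3 := hDist_triangle hconn u x w
  have h4 : j.val < t := j.isLt
  omega

lemma cross_edge_eq {q : Fin (t+1) → V} {qe : Fin t → Set V}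
    (hp : IsHPath E t p pe) (hp0 : p 0 = u) (hpl : p (Fin.last t) = w)
    (hq : IsHPath E t q qe) (hq0 : q 0 = u) (hql : q (Fin.last t) = w)
    {i j : Fin t} (hij : pe i = qe j) : i = j := by
  by_contra hne
  have key : ∀ (p' : Fin (t+1) → V) (pe' : Fin t → Set V) (q' : Fin (t+1) → V)
      (qe' : Fin t → Set V), IsHPath E t p' pe' → p' 0 = u → p' (Fin.last t) = w →
      IsHPath E t q' qe' → q' 0 = u → q' (Fin.last t) = w →
      ∀ i j : Fin t, i.val < j.val → pe' i = qe' j → False := by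
    intro p' pe' q' qe' hp' hp0' hpl' hq' hq0' hql' i j hlt heq
    have hx : q' j.succ ∈ pe' i := by rw [heq]; exact (hq'.2.2.2 j).2
    have h1 := head_bound hp' hp0' i hx
    have h2 := vertex_tail_bound hq' hql' j.succ
    have h3 := hDist_triangle hconn u (q' j.succ) w
    have h4 : j.val < t := j.isLt
    have h5 : (j.succ : Fin (t+1)).val = j.val + 1 := by simp
    omega
  rcases lt_trichotomy i.val j.val with h | h | h
  · exact key p pe q qe hp hp0 hpl hq hq0 hql i j h hij
  · exact hne (Fin.ext h)
  · exact key q qe p pe hq hq0 hql hp hp0 hpl j i h hij.symm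

lemma cross_vertex_eq {q : Fin (t+1) → V} {qe : Fin t → Set V}
    (hp : IsHPath E t p pe) (hp0 : p 0 = u) (hpl : p (Fin.last t) = w)
    (hq : IsHPath E t q qe) (hq0 : q 0 = u) (hql : q (Fin.last t) = w)
    {a b : Fin (t+1)} (hab : p a = q b) : a = b := by
  have h1 := vertex_head_eq hconn ht hp hp0 hpl a
  have h2 := vertex_head_eq hconn ht hq hq0 hql b
  rw [hab] at h1
  apply Fin.ext; omega

end PathLemmas

end Stmt12
namespace Stmt12

open SimpleGraph

variable {V : Type*} {T : SimpleGraph V}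

noncomputable def tp (hT : T.IsTree) (a b : V) : T.Walk a b :=
  (hT.existsUnique_path a b).choose

lemma tp_isPath (hT : T.IsTree) (a b : V) : (tp hT a b).IsPath :=
  (hT.existsUnique_path a b).choose_spec.1

lemma tp_unique (hT : T.IsTree) {a b : V} (P : T.Walk a b) (hP : P.IsPath) : P = tp hT a b :=
  (hT.existsUnique_path a b).choose_spec.2 P hP

lemma tp_support_sub (hT : T.IsTree) {a b : V} {U : Set V} (W : T.Walk a b)
    (hW : ∀ x ∈ W.support, x ∈ U) : ∀ x ∈ (tp hT a b).support, x ∈ U := by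
  classical
  have hb : W.bypass.IsPath := W.bypass_isPath
  have heq : W.bypass = tp hT a b := tp_unique hT _ hb
  intro x hx
  rw [← heq] at hx
  exact hW x (W.support_bypass_subset hx)

lemma edge_walk {s : Set V} (hconn : (T.induce s).Connected) {a b : V}
    (ha : a ∈ s) (hb : b ∈ s) : ∃ W : T.Walk a b, ∀ x ∈ W.support, x ∈ s := by
  obtain ⟨W'⟩ := hconn.preconnected ⟨a, ha⟩ ⟨b, hb⟩
  refine ⟨W'.map (Embedding.induce s).toHom, ?_⟩
  intro x hx
  change x ∈ (W'.map (Embedding.induce s).toHom).support at hx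
  rw [Walk.support_map] at hx
  obtain ⟨y, hy, rfl⟩ := List.mem_map.mp hx
  exact y.2

lemma tp_mem_of_edge (hT : T.IsTree) {s : Set V} (hconn : (T.induce s).Connected)
    {a b : V} (ha : a ∈ s) (hb : b ∈ s) : ∀ x ∈ (tp hT a b).support, x ∈ s := by
  obtain ⟨W, hW⟩ := edge_walk hconn ha hb
  exact tp_support_sub hT W hW

lemma adj_dichot (hT : T.IsTree) {a b : V} (hadj : T.Adj a b) (c : V) :
    b ∈ (tp hT a c).support ∨ a ∈ (tp hT b c).support := by
  by_cases hb : b ∈ (tp hT a c).support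
  · exact Or.inl hb
  · right
    have hP : (Walk.cons hadj.symm (tp hT a c)).IsPath := (tp_isPath hT a c).cons hb
    rw [← tp_unique hT _ hP]
    rw [Walk.support_cons]
    exact List.mem_cons_of_mem _ (Walk.start_mem_support _)

lemma crossing {A B : Set V} : ∀ {a b : V} (W : T.Walk a b),
    (∀ x ∈ W.support, x ∈ A ∪ B) → (∀ x ∈ W.support, ¬(x ∈ A ∧ x ∈ B)) →
    a ∈ A → b ∈ B →
    ∃ x y, T.Adj x y ∧ x ∈ W.support ∧ y ∈ W.support ∧ x ∈ A ∧ x ∉ B ∧ y ∈ B ∧ y ∉ A := by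
  intro a b W
  induction W with
  | nil =>
    intro hsup hdisj ha hb
    exact absurd ⟨ha, hb⟩ (hdisj _ (by simp))
  | @cons a c b hadj W ih =>
    intro hsup hdisj ha hb
    by_cases hc : c ∈ A
    · obtain ⟨x, y, h1, h2, h3, h4, h5, h6, h7⟩ :=
        ih (fun x hx => hsup x (by rw [Walk.support_cons]; exact List.mem_cons_of_mem _ hx))
          (fun x hx => hdisj x (by rw [Walk.support_cons]; exact List.mem_cons_of_mem _ hx)) hc hb
      exact ⟨x, y, h1, by rw [Walk.support_cons]; exact List.mem_cons_of_mem _ h2,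
        by rw [Walk.support_cons]; exact List.mem_cons_of_mem _ h3, h4, h5, h6, h7⟩
    · have hcmem : c ∈ Walk.support (Walk.cons hadj W) := by
        rw [Walk.support_cons]; exact List.mem_cons_of_mem _ (Walk.start_mem_support _)
      have hcB : c ∈ B := by
        rcases hsup c hcmem with h | h
        · exact absurd h hc
        · exact h
      have hamem : a ∈ Walk.support (Walk.cons hadj W) := Walk.start_mem_support _
      exact ⟨a, c, hadj, hamem, hcmem, ha, fun hB => hdisj a hamem ⟨ha, hB⟩, hcB, hc⟩

section WalkChains

variable {E : Set (Set V)} {t : ℕ} {u w : V} {p : Fin (t+1) → V} {pe : Fin t → Set V}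
variable (hsub : ∀ e ∈ E, (T.induce e).Connected)

include hsub

lemma tail_walk (hp : IsHPath E t p pe) (hpl : p (Fin.last t) = w) :
    ∀ m k (hk : k < t), t - k = m → ∀ x, x ∈ pe ⟨k, hk⟩ →
      ∃ W : T.Walk x w, ∀ y ∈ W.support, ∃ j, k ≤ j ∧ ∃ (hj : j < t), y ∈ pe ⟨j, hj⟩ := by
  intro m
  induction m using Nat.strong_induction_on with
  | _ m IH =>
  intro k hk hm x hx
  by_cases hlast : k = t - 1
  · have hw : w ∈ pe ⟨k, hk⟩ := by
      have h1 := (hp.2.2.2 ⟨k, hk⟩).2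
      rw [show (⟨k, hk⟩ : Fin t).succ = Fin.last t by apply Fin.ext; simp [Fin.last]; omega] at h1
      rw [hpl] at h1; exact h1
    obtain ⟨W, hW⟩ := edge_walk (hsub _ (hp.2.2.1 ⟨k, hk⟩)) hx hw
    exact ⟨W, fun y hy => ⟨k, le_refl _, hk, hW y hy⟩⟩
  · have hk1 : k + 1 < t := by omega
    have hmid : p ⟨k+1, by omega⟩ ∈ pe ⟨k, hk⟩ := by
      have h1 := (hp.2.2.2 ⟨k, hk⟩).2
      rw [show (⟨k, hk⟩ : Fin t).succ = ⟨k+1, by omega⟩ from by apply Fin.ext; simp] at h1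
      exact h1
    obtain ⟨W1, hW1⟩ := edge_walk (hsub _ (hp.2.2.1 ⟨k, hk⟩)) hx hmid
    have hmid2 : p ⟨k+1, by omega⟩ ∈ pe ⟨k+1, hk1⟩ := by
      have h1 := (hp.2.2.2 ⟨k+1, hk1⟩).1
      rw [show (⟨k+1, hk1⟩ : Fin t).castSucc = ⟨k+1, by omega⟩ from by apply Fin.ext; simp] at h1
      exact h1
    obtain ⟨W2, hW2⟩ := IH (m-1) (by omega) (k+1) hk1 (by omega) _ hmid2
    refine ⟨W1.append W2, ?_⟩
    intro y hy
    rcases (Walk.mem_support_append_iff _ _).mp hy with h | h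
    · exact ⟨k, le_refl _, hk, hW1 y h⟩
    · obtain ⟨j, hj1, hj2, hj3⟩ := hW2 y h
      exact ⟨j, by omega, hj2, hj3⟩

lemma head_walk (hp : IsHPath E t p pe) (hp0 : p 0 = u) :
    ∀ k (hk : k < t), ∀ x, x ∈ pe ⟨k, hk⟩ →
      ∃ W : T.Walk x u, ∀ y ∈ W.support, ∃ j, j ≤ k ∧ ∃ (hj : j < t), y ∈ pe ⟨j, hj⟩ := by
  intro k
  induction k using Nat.strong_induction_on with
  | _ k IH =>
  intro hk x hx
  by_cases h0 : k = 0
  · have hu : u ∈ pe ⟨k, hk⟩ := by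
      have h1 := (hp.2.2.2 ⟨k, hk⟩).1
      rw [show (⟨k, hk⟩ : Fin t).castSucc = (0 : Fin (t+1)) from by apply Fin.ext; simp [h0]] at h1
      rw [hp0] at h1; exact h1
    obtain ⟨W, hW⟩ := edge_walk (hsub _ (hp.2.2.1 ⟨k, hk⟩)) hx hu
    exact ⟨W, fun y hy => ⟨k, le_refl _, hk, hW y hy⟩⟩
  · have hmid : p ⟨k, by omega⟩ ∈ pe ⟨k, hk⟩ := by
      have h1 := (hp.2.2.2 ⟨k, hk⟩).1
      rw [show (⟨k, hk⟩ : Fin t).castSucc = ⟨k, by omega⟩ from by apply Fin.ext; simp] at h1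
      exact h1
    obtain ⟨W1, hW1⟩ := edge_walk (hsub _ (hp.2.2.1 ⟨k, hk⟩)) hx hmid
    have hk1 : k - 1 < t := by omega
    have hmid2 : p ⟨k, by omega⟩ ∈ pe ⟨k-1, hk1⟩ := by
      have h1 := (hp.2.2.2 ⟨k-1, hk1⟩).2
      rw [show (⟨k-1, hk1⟩ : Fin t).succ = ⟨k, by omega⟩ from by apply Fin.ext; simp; omega] at h1
      exact h1
    obtain ⟨W2, hW2⟩ := IH (k-1) (by omega) hk1 _ hmid2
    refine ⟨W1.append W2, ?_⟩
    intro y hy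
    rcases (Walk.mem_support_append_iff _ _).mp hy with h | h
    · exact ⟨k, le_refl _, hk, hW1 y h⟩
    · obtain ⟨j, hj1, hj2, hj3⟩ := hW2 y h
      exact ⟨j, by omega, hj2, hj3⟩

end WalkChains

end Stmt12
namespace Stmt12

open SimpleGraph

variable {V : Type*}

section Core

variable {E : Set (Set V)} {t : ℕ} {u w : V}

lemma memc {p : Fin (t+1) → V} {pe : Fin t → Set V} (hp : IsHPath E t p pe)
    {k : ℕ} (hk : k < t) : p ⟨k, by omega⟩ ∈ pe ⟨k, hk⟩ := by
  have h1 := (hp.2.2.2 ⟨k, hk⟩).1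
  rwa [show (⟨k, hk⟩ : Fin t).castSucc = ⟨k, by omega⟩ from Fin.ext (by simp)] at h1

lemma mems {p : Fin (t+1) → V} {pe : Fin t → Set V} (hp : IsHPath E t p pe)
    {k : ℕ} (hk : k < t) : p ⟨k+1, by omega⟩ ∈ pe ⟨k, hk⟩ := by
  have h1 := (hp.2.2.2 ⟨k, hk⟩).2
  rwa [show (⟨k, hk⟩ : Fin t).succ = ⟨k+1, by omega⟩ from Fin.ext (by simp)] at h1

lemma mem_u {p : Fin (t+1) → V} {pe : Fin t → Set V} (hp : IsHPath E t p pe)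
    (hp0 : p 0 = u) {k : ℕ} (hk : k < t) (h0 : k = 0) : u ∈ pe ⟨k, hk⟩ := by
  have h1 := memc hp hk
  rwa [show (⟨k, by omega⟩ : Fin (t+1)) = 0 from Fin.ext (by simp [h0]), hp0] at h1

lemma mem_w {p : Fin (t+1) → V} {pe : Fin t → Set V} (hp : IsHPath E t p pe)
    (hpl : p (Fin.last t) = w) {k : ℕ} (hk : k < t) (hlast : k = t - 1) : w ∈ pe ⟨k, hk⟩ := by
  have h1 := mems hp hk
  rwa [show (⟨k+1, by omega⟩ : Fin (t+1)) = Fin.last t from Fin.ext (by simp [Fin.last]; omega),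
    hpl] at h1

variable (hconn : HConnected E) (hord : Orderly E) (ht : t = hDist E u w)
variable {p : Fin (t+1) → V} {pe : Fin t → Set V} {q : Fin (t+1) → V} {qe : Fin t → Set V}

include hconn ht

/-- If the distinct i-th edges share a point `z` that also lies in the previous edge, then
the whole intersection lies in the previous edge. -/
lemma subS (hord : Orderly E) (hp : IsHPath E t p pe) (hq : IsHPath E t q qe)
    {i : Fin t} (hne : pe i ≠ qe i) (h0 : 0 < i.val)
    {z : V} (hz1 : z ∈ pe i) (hz2 : z ∈ qe i) (hzp : z ∈ pe ⟨i.val - 1, by omega⟩) :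
    pe i ∩ qe i ⊆ pe ⟨i.val - 1, by omega⟩ := by
  rcases hord (pe i) (hp.2.2.1 i) (qe i) (hq.2.2.1 i) hne ⟨z, hz1, hz2⟩
      (pe ⟨i.val - 1, by omega⟩) (hp.2.2.1 _) with h | h
  · exact h
  · exact absurd h (by
      rw [Set.eq_empty_iff_forall_notMem]
      push_neg
      exact ⟨z, ⟨hz1, hz2⟩, hzp⟩)

omit ht hconn in
lemma subS' (hord : Orderly E) (hp : IsHPath E t p pe) (hq : IsHPath E t q qe)
    {i : Fin t} (hne : pe i ≠ qe i)
    {z : V} (hz1 : z ∈ pe i) (hz2 : z ∈ qe i) {s : Set V} (hs : s ∈ E) (hzs : z ∈ s) :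
    pe i ∩ qe i ⊆ s := by
  rcases hord (pe i) (hp.2.2.1 i) (qe i) (hq.2.2.1 i) hne ⟨z, hz1, hz2⟩ s hs with h | h
  · exact h
  · exact absurd h (by
      rw [Set.eq_empty_iff_forall_notMem]
      push_neg
      exact ⟨z, ⟨hz1, hz2⟩, hzs⟩)

/-- No element of `pe i ∩ qe i` can lie on a later edge. -/
lemma noSJ (hord : Orderly E)
    (hp : IsHPath E t p pe) (hp0 : p 0 = u) (hpl : p (Fin.last t) = w)
    (hq : IsHPath E t q qe) (hq0 : q 0 = u) (hql : q (Fin.last t) = w)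
    {i : Fin t} (hne : pe i ≠ qe i)
    {z : V} (hz1 : z ∈ pe i) (hz2 : z ∈ qe i) (hz3 : ∀ _ : 0 < i.val, z ∈ pe ⟨i.val - 1, by omega⟩)
    (hag : ∀ j : Fin t, j.val < i.val → pe j = qe j)
    {c : V} (hc1 : c ∈ pe i) (hc2 : c ∈ qe i) {j : ℕ} (hj1 : i.val + 1 ≤ j) (hj2 : j < t)
    (hcj : c ∈ pe ⟨j, hj2⟩ ∨ c ∈ qe ⟨j, hj2⟩) : False := by
  by_cases h0 : 0 < i.val
  · have hcs : c ∈ pe ⟨i.val - 1, by omega⟩ :=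
      subS hconn ht hord hp hq hne h0 hz1 hz2 (hz3 h0) ⟨hc1, hc2⟩
    rcases hcj with h | h
    · exact cross_disj hconn ht hp hp0 hp hpl hcs h (by simp; omega)
    · have hagq : pe ⟨i.val - 1, by omega⟩ = qe ⟨i.val - 1, by omega⟩ :=
        hag _ (by simp; omega)
      rw [hagq] at hcs
      exact cross_disj hconn ht hq hq0 hq hql hcs h (by simp; omega)
  · have h00 : i.val = 0 := by omega
    have hu1 : u ∈ pe i := by
      have := mem_u hp hp0 i.isLt h00
      rwa [show (⟨i.val, i.isLt⟩ : Fin t) = i from Fin.ext rfl] at this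
    have hu2 : u ∈ qe i := by
      have := mem_u hq hq0 i.isLt h00
      rwa [show (⟨i.val, i.isLt⟩ : Fin t) = i from Fin.ext rfl] at this
    rcases hcj with h | h
    · have hsub2 : pe i ∩ qe i ⊆ pe ⟨j, hj2⟩ :=
        subS' hord hp hq hne hc1 hc2 (hp.2.2.1 _) h
      have hu3 : u ∈ pe ⟨j, hj2⟩ := hsub2 ⟨hu1, hu2⟩
      have hb := tail_bound hp hpl ⟨j, hj2⟩ hu3
      have : (⟨j, hj2⟩ : Fin t).val = j := rfl
      omega
    · have hsub2 : pe i ∩ qe i ⊆ qe ⟨j, hj2⟩ :=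
        subS' hord hp hq hne hc1 hc2 (hq.2.2.1 _) h
      have hu3 : u ∈ qe ⟨j, hj2⟩ := hsub2 ⟨hu1, hu2⟩
      have hb := tail_bound hq hql ⟨j, hj2⟩ hu3
      have : (⟨j, hj2⟩ : Fin t).val = j := rfl
      omega

/-- the (i+1)-st vertex of `p` is not in `qe i`. -/
lemma notin_next (hord : Orderly E)
    (hp : IsHPath E t p pe) (hp0 : p 0 = u) (hpl : p (Fin.last t) = w)
    (hq : IsHPath E t q qe) (hq0 : q 0 = u) (hql : q (Fin.last t) = w)
    {i : Fin t} (hne : pe i ≠ qe i)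
    {z : V} (hz1 : z ∈ pe i) (hz2 : z ∈ qe i) (hz3 : ∀ _ : 0 < i.val, z ∈ pe ⟨i.val - 1, by omega⟩)
    (hag : ∀ j : Fin t, j.val < i.val → pe j = qe j)
    (hit : i.val + 1 < t) : p ⟨i.val + 1, by omega⟩ ∉ qe i := by
  intro hmem
  have hp1 : p ⟨i.val + 1, by omega⟩ ∈ pe i := by
    have := mems hp i.isLt
    rwa [show (⟨i.val, i.isLt⟩ : Fin t) = i from Fin.ext rfl] at this
  have hp2 : p ⟨i.val + 1, by omega⟩ ∈ pe ⟨i.val + 1, hit⟩ := memc hp hit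
  exact noSJ hconn ht hord hp hp0 hpl hq hq0 hql hne hz1 hz2 hz3 hag hp1 hmem
    (le_refl _) hit (Or.inl hp2)

end Core

end Stmt12
namespace Stmt12

set_option linter.unusedSectionVars false

open SimpleGraph

variable {V : Type*}

lemma fin_mk_eq {t j : ℕ} {hj : j < t} {i : Fin t} (h : j = i.val) : (⟨j, hj⟩ : Fin t) = i :=
  Fin.ext h

section Tree1

variable {E : Set (Set V)} {t : ℕ} {u w : V} {T : SimpleGraph V}
variable (hconn : HConnected E) (hord : Orderly E) (hT : T.IsTree)
  (hsub : ∀ e ∈ E, (T.induce e).Connected) (ht : t = hDist E u w)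
variable {p : Fin (t+1) → V} {pe : Fin t → Set V} {q : Fin (t+1) → V} {qe : Fin t → Set V}

include hconn hT hsub ht

/-- every vertex of the tree path between `x` and `w` lies on an edge of `p` with index `≥ k`. -/
lemma tp_tail_mem (hp : IsHPath E t p pe) (hpl : p (Fin.last t) = w)
    {k : ℕ} (hk : k < t) {x : V} (hx : x ∈ pe ⟨k, hk⟩) :
    ∀ y ∈ (tp hT x w).support, ∃ j, k ≤ j ∧ ∃ (hj : j < t), y ∈ pe ⟨j, hj⟩ := by
  obtain ⟨W, hW⟩ := tail_walk hsub hp hpl (t - k) k hk rfl x hx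
  exact tp_support_sub hT W hW

lemma tp_head_mem (hp : IsHPath E t p pe) (hp0 : p 0 = u)
    {k : ℕ} (hk : k < t) {x : V} (hx : x ∈ pe ⟨k, hk⟩) :
    ∀ y ∈ (tp hT x u).support, ∃ j, j ≤ k ∧ ∃ (hj : j < t), y ∈ pe ⟨j, hj⟩ := by
  obtain ⟨W, hW⟩ := head_walk hsub hp hp0 k hk x hx
  exact tp_support_sub hT W hW

/-- Step 1: the distinct `i`-th edges of two shortest paths intersect, and (for `i ≥ 1`)
in a point of the previous edge. -/
lemma step1 (hp : IsHPath E t p pe) (hp0 : p 0 = u) (hpl : p (Fin.last t) = w)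
    (hq : IsHPath E t q qe) (hq0 : q 0 = u) (hql : q (Fin.last t) = w)
    {i : Fin t} (hne : pe i ≠ qe i)
    (hag : ∀ j : Fin t, j.val < i.val → pe j = qe j) :
    ∃ z, z ∈ pe i ∧ z ∈ qe i ∧ ∀ _ : 0 < i.val, z ∈ pe ⟨i.val - 1, by omega⟩ := by
  by_cases h0 : 0 < i.val
  · -- i ≥ 1 : use the tree path between the i-th vertices
    have hi1 : i.val - 1 < t := by omega
    set a : V := p ⟨i.val, by omega⟩ with ha_def
    set b : V := q ⟨i.val, by omega⟩ with hb_def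
    have ha1 : a ∈ pe ⟨i.val - 1, hi1⟩ := by
      have := mems hp hi1
      rwa [show (⟨i.val - 1 + 1, by omega⟩ : Fin (t+1)) = ⟨i.val, by omega⟩ from
        Fin.ext (by simp; omega)] at this
    have ha2 : a ∈ pe i := by
      have := memc hp i.isLt
      rwa [show (⟨i.val, i.isLt⟩ : Fin t) = i from Fin.ext rfl] at this
    have hb1 : b ∈ qe ⟨i.val - 1, hi1⟩ := by
      have := mems hq hi1
      rwa [show (⟨i.val - 1 + 1, by omega⟩ : Fin (t+1)) = ⟨i.val, by omega⟩ from
        Fin.ext (by simp; omega)] at this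
    have hb2 : b ∈ qe i := by
      have := memc hq i.isLt
      rwa [show (⟨i.val, i.isLt⟩ : Fin t) = i from Fin.ext rfl] at this
    have hagq : pe ⟨i.val - 1, hi1⟩ = qe ⟨i.val - 1, hi1⟩ := hag _ (by simp; omega)
    have hb1' : b ∈ pe ⟨i.val - 1, hi1⟩ := by rw [hagq]; exact hb1
    -- support of tp a b lies in pe (i-1)
    have hsupp1 : ∀ y ∈ (tp hT a b).support, y ∈ pe ⟨i.val - 1, hi1⟩ :=
      tp_mem_of_edge hT (hsub _ (hp.2.2.1 _)) ha1 hb1'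
    -- support of tp a b lies in the union of later edges
    have ha3 : a ∈ pe ⟨i.val, i.isLt⟩ := by
      rwa [show (⟨i.val, i.isLt⟩ : Fin t) = i from Fin.ext rfl]
    have hb3 : b ∈ qe ⟨i.val, i.isLt⟩ := by
      rwa [show (⟨i.val, i.isLt⟩ : Fin t) = i from Fin.ext rfl]
    obtain ⟨W1, hW1⟩ := tail_walk hsub hp hpl (t - i.val) i.val i.isLt rfl a ha3
    obtain ⟨W2, hW2⟩ := tail_walk hsub hq hql (t - i.val) i.val i.isLt rfl b hb3
    have hsupp2 : ∀ y ∈ (tp hT a b).support,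
        ∃ j, i.val ≤ j ∧ ∃ (hj : j < t), y ∈ pe ⟨j, hj⟩ ∨ y ∈ qe ⟨j, hj⟩ := by
      apply tp_support_sub hT (W1.append W2.reverse)
      intro y hy
      rcases (Walk.mem_support_append_iff _ _).mp hy with h | h
      · obtain ⟨j, hj1, hj2, hj3⟩ := hW1 y h
        exact ⟨j, hj1, hj2, Or.inl hj3⟩
      · rw [Walk.support_reverse, List.mem_reverse] at h
        obtain ⟨j, hj1, hj2, hj3⟩ := hW2 y h
        exact ⟨j, hj1, hj2, Or.inr hj3⟩
    by_cases hzex : ∃ z ∈ (tp hT a b).support, z ∈ pe i ∧ z ∈ qe i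
    · obtain ⟨z, hzs, hz1, hz2⟩ := hzex
      exact ⟨z, hz1, hz2, fun _ => hsupp1 z hzs⟩
    · exfalso
      push_neg at hzex
      obtain ⟨x, y, hxy, hxs, hys, hxA, hxB, hyB, hyA⟩ :=
        crossing (A := pe i) (B := qe i) (tp hT a b)
          (by
            intro c hc
            obtain ⟨j, hj1, hj2, hj3⟩ := hsupp2 c hc
            rcases Nat.eq_or_lt_of_le hj1 with he | hlt
            · rcases hj3 with h | h
              · left; rwa [show (⟨j, hj2⟩ : Fin t) = i from fin_mk_eq (by omega)] at h
              · right; rwa [show (⟨j, hj2⟩ : Fin t) = i from fin_mk_eq (by omega)] at h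
            · exfalso
              have hcp : c ∈ pe ⟨i.val - 1, hi1⟩ := hsupp1 c hc
              rcases hj3 with h | h
              · exact cross_disj hconn ht hp hp0 hp hpl hcp h (by simp; omega)
              · rw [hagq] at hcp
                exact cross_disj hconn ht hq hq0 hq hql hcp h (by simp; omega))
          (by
            intro c hc hcc
            exact hzex c hc hcc.1 hcc.2)
          ha2 hb2
      have hxp : x ∈ pe ⟨i.val - 1, hi1⟩ := hsupp1 x hxs
      have hyp : y ∈ pe ⟨i.val - 1, hi1⟩ := hsupp1 y hys
      rcases adj_dichot hT hxy w with hcase | hcase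
      · have hmem := tp_tail_mem hconn hT hsub ht hp hpl i.isLt
          (show x ∈ pe ⟨i.val, i.isLt⟩ by
            rwa [show (⟨i.val, i.isLt⟩ : Fin t) = i from Fin.ext rfl]) y hcase
        obtain ⟨j, hj1, hj2, hj3⟩ := hmem
        rcases Nat.eq_or_lt_of_le hj1 with he | hlt
        · exact hyA (by rwa [show (⟨j, hj2⟩ : Fin t) = i from fin_mk_eq (by omega)] at hj3)
        · exact cross_disj hconn ht hp hp0 hp hpl hyp hj3 (by simp; omega)
      · have hmem := tp_tail_mem hconn hT hsub ht hq hql i.isLt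
          (show y ∈ qe ⟨i.val, i.isLt⟩ by
            rwa [show (⟨i.val, i.isLt⟩ : Fin t) = i from Fin.ext rfl]) x hcase
        obtain ⟨j, hj1, hj2, hj3⟩ := hmem
        rcases Nat.eq_or_lt_of_le hj1 with he | hlt
        · exact hxB (by rwa [show (⟨j, hj2⟩ : Fin t) = i from fin_mk_eq (by omega)] at hj3)
        · have hxq : x ∈ qe ⟨i.val - 1, hi1⟩ := by rw [← hagq]; exact hxp
          exact cross_disj hconn ht hq hq0 hq hql hxq hj3 (by simp; omega)
  · -- i = 0 : z = u works
    have h00 : i.val = 0 := by omega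
    refine ⟨u, ?_, ?_, fun h => absurd h h0⟩
    · have := mem_u hp hp0 i.isLt h00
      rwa [show (⟨i.val, i.isLt⟩ : Fin t) = i from Fin.ext rfl] at this
    · have := mem_u hq hq0 i.isLt h00
      rwa [show (⟨i.val, i.isLt⟩ : Fin t) = i from Fin.ext rfl] at this

end Tree1

end Stmt12
namespace Stmt12

set_option linter.unusedSectionVars false

open SimpleGraph

variable {V : Type*}

section Tree2

variable {E : Set (Set V)} {t : ℕ} {u w : V} {T : SimpleGraph V}
variable (hconn : HConnected E) (hord : Orderly E) (hT : T.IsTree)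
  (hsub : ∀ e ∈ E, (T.induce e).Connected) (ht : t = hDist E u w)
variable {p : Fin (t+1) → V} {pe : Fin t → Set V} {q : Fin (t+1) → V} {qe : Fin t → Set V}

include hconn hord hT hsub ht

lemma stepXY (hp : IsHPath E t p pe) (hp0 : p 0 = u) (hpl : p (Fin.last t) = w)
    (hq : IsHPath E t q qe) (hq0 : q 0 = u) (hql : q (Fin.last t) = w)
    {i : Fin t} (hne : pe i ≠ qe i)
    (hag : ∀ j : Fin t, j.val < i.val → pe j = qe j)
    (hit : i.val + 1 < t)
    {z : V} (hz1 : z ∈ pe i) (hz2 : z ∈ qe i)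
    (hz3 : ∀ _ : 0 < i.val, z ∈ pe ⟨i.val - 1, by omega⟩) :
    (∃ y, y ∈ qe i ∧ y ∈ pe ⟨i.val + 1, hit⟩ ∧ y ∉ pe i) ∨
    (∃ x, x ∈ pe i ∧ x ∈ qe ⟨i.val + 1, hit⟩ ∧ x ∉ qe i) := by
  have hag' : ∀ j : Fin t, j.val < i.val → qe j = pe j := fun j hj => (hag j hj).symm
  have hz3' : ∀ _ : 0 < i.val, z ∈ qe ⟨i.val - 1, by omega⟩ := by
    intro h
    rw [← hag _ (by simp; omega)]
    exact hz3 h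
  set a : V := p ⟨i.val + 1, by omega⟩ with ha_def
  set b : V := q ⟨i.val + 1, by omega⟩ with hb_def
  have haA : a ∈ pe i := by
    have := mems hp i.isLt
    rwa [show (⟨i.val, i.isLt⟩ : Fin t) = i from Fin.ext rfl] at this
  have haA2 : a ∈ pe ⟨i.val + 1, hit⟩ := memc hp hit
  have hbB : b ∈ qe i := by
    have := mems hq i.isLt
    rwa [show (⟨i.val, i.isLt⟩ : Fin t) = i from Fin.ext rfl] at this
  have hbB2 : b ∈ qe ⟨i.val + 1, hit⟩ := memc hq hit
  have haB : a ∉ qe i :=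
    notin_next hconn ht hord hp hp0 hpl hq hq0 hql hne hz1 hz2 hz3 hag hit
  have hbA : b ∉ pe i := by
    have := notin_next hconn ht hord hq hq0 hql hp hp0 hpl (Ne.symm hne) hz2 hz1 hz3' hag' hit
    exact this
  obtain ⟨W1, hW1⟩ := edge_walk (hsub _ (hp.2.2.1 i)) haA hz1
  obtain ⟨W2, hW2⟩ := edge_walk (hsub _ (hq.2.2.1 i)) hz2 hbB
  have hsupp1 : ∀ y ∈ (tp hT a b).support, y ∈ pe i ∨ y ∈ qe i := by
    apply tp_support_sub hT (W1.append W2)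
    intro y hy
    rcases (Walk.mem_support_append_iff _ _).mp hy with h | h
    · exact Or.inl (hW1 y h)
    · exact Or.inr (hW2 y h)
  obtain ⟨W3, hW3⟩ := tail_walk hsub hp hpl (t - (i.val+1)) (i.val+1) hit rfl a haA2
  obtain ⟨W4, hW4⟩ := tail_walk hsub hq hql (t - (i.val+1)) (i.val+1) hit rfl b hbB2
  have hsupp2 : ∀ y ∈ (tp hT a b).support,
      ∃ j, i.val + 1 ≤ j ∧ ∃ (hj : j < t), y ∈ pe ⟨j, hj⟩ ∨ y ∈ qe ⟨j, hj⟩ := by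
    apply tp_support_sub hT (W3.append W4.reverse)
    intro y hy
    rcases (Walk.mem_support_append_iff _ _).mp hy with h | h
    · obtain ⟨j, hj1, hj2, hj3⟩ := hW3 y h
      exact ⟨j, hj1, hj2, Or.inl hj3⟩
    · rw [Walk.support_reverse, List.mem_reverse] at h
      obtain ⟨j, hj1, hj2, hj3⟩ := hW4 y h
      exact ⟨j, hj1, hj2, Or.inr hj3⟩
  obtain ⟨x, y, hxy, hxs, hys, hxA, hxB, hyB, hyA⟩ :=
    crossing (A := pe i) (B := qe i) (tp hT a b)
      (fun c hc => hsupp1 c hc)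
      (by
        intro c hc hcc
        obtain ⟨j, hj1, hj2, hj3⟩ := hsupp2 c hc
        exact noSJ hconn ht hord hp hp0 hpl hq hq0 hql hne hz1 hz2 hz3 hag hcc.1 hcc.2
          hj1 hj2 hj3)
      haA hbB
  rcases adj_dichot hT hxy w with hcase | hcase
  · have hmem := tp_tail_mem hconn hT hsub ht hp hpl i.isLt
      (show x ∈ pe ⟨i.val, i.isLt⟩ by
        rwa [show (⟨i.val, i.isLt⟩ : Fin t) = i from Fin.ext rfl]) y hcase
    obtain ⟨j, hj1, hj2, hj3⟩ := hmem
    by_cases hji : j = i.val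
    · exact absurd (by rwa [show (⟨j, hj2⟩ : Fin t) = i from fin_mk_eq hji] at hj3) hyA
    · by_cases hji1 : j = i.val + 1
      · left
        refine ⟨y, hyB, ?_, hyA⟩
        rwa [show (⟨j, hj2⟩ : Fin t) = ⟨i.val + 1, hit⟩ from Fin.ext (by simp [hji1])] at hj3
      · exact absurd (cross_disj hconn ht hq hq0 hp hpl hyB hj3 (by simp; omega)) not_false
  · have hmem := tp_tail_mem hconn hT hsub ht hq hql i.isLt
      (show y ∈ qe ⟨i.val, i.isLt⟩ by
        rwa [show (⟨i.val, i.isLt⟩ : Fin t) = i from Fin.ext rfl]) x hcase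
    obtain ⟨j, hj1, hj2, hj3⟩ := hmem
    by_cases hji : j = i.val
    · exact absurd (by rwa [show (⟨j, hj2⟩ : Fin t) = i from fin_mk_eq hji] at hj3) hxB
    · by_cases hji1 : j = i.val + 1
      · right
        refine ⟨x, hxA, ?_, hxB⟩
        rwa [show (⟨j, hj2⟩ : Fin t) = ⟨i.val + 1, hit⟩ from Fin.ext (by simp [hji1])] at hj3
      · exact absurd (cross_disj hconn ht hp hp0 hq hql hxA hj3 (by simp; omega)) not_false

end Tree2

end Stmt12
namespace Stmt12

set_option linter.unusedSectionVars false
set_option maxHeartbeats 1000000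

open SimpleGraph

variable {V : Type*}

section StepK

variable {E : Set (Set V)} {t : ℕ} {u w : V}
variable (hconn : HConnected E) (hord : Orderly E) (ht : t = hDist E u w)
variable {p : Fin (t+1) → V} {pe : Fin t → Set V} {q : Fin (t+1) → V} {qe : Fin t → Set V}

include hconn ht

lemma stepK (hp : IsHPath E t p pe) (hp0 : p 0 = u) (hpl : p (Fin.last t) = w)
    (hq : IsHPath E t q qe) (hq0 : q 0 = u) (hql : q (Fin.last t) = w)
    {i : Fin t} (hne : pe i ≠ qe i) (hit2 : i.val + 2 < t)
    (IH : ∀ t', t' < t → 2 ≤ t' → ∀ u' w' : V, t' = hDist E u' w' →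
      ∀ (p' : Fin (t'+1) → V) (pe' : Fin t' → Set V), IsHPath E t' p' pe' → p' 0 = u' →
        p' (Fin.last t') = w' →
      ∀ (q' : Fin (t'+1) → V) (qe' : Fin t' → Set V), IsHPath E t' q' qe' → q' 0 = u' →
        q' (Fin.last t') = w' → ∀ i' : Fin t', pe' i' = qe' i')
    {y : V} (hy1 : y ∈ qe i) (hy2 : y ∈ pe ⟨i.val + 1, by omega⟩) (hy3 : y ∉ pe i) :
    False := by
  have hyd1 : hDist E u y ≤ i.val + 1 := head_bound hq hq0 i hy1
  have hyd2 : hDist E y w ≤ t - (i.val + 1) := tail_bound hp hpl ⟨i.val + 1, by omega⟩ hy2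
  have hyd2' : (⟨i.val + 1, by omega⟩ : Fin t).val = i.val + 1 := rfl
  have htri := hDist_triangle hconn u y w
  have hyd3 : hDist E u y = i.val + 1 := by omega
  -- the comparison paths of length i.val + 2
  set R1 : Fin (i.val + 2 + 1) → V := fun k => p ⟨k.val, by omega⟩ with hR1def
  set R1e : Fin (i.val + 2) → Set V := fun k => pe ⟨k.val, by omega⟩ with hR1edef
  set R2 : Fin (i.val + 2 + 1) → V := fun k =>
    if h : k.val ≤ i.val then q ⟨k.val, by omega⟩
    else if k.val = i.val + 1 then y else p ⟨i.val + 2, by omega⟩ with hR2def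
  set R2e : Fin (i.val + 2) → Set V := fun k =>
    if h : k.val ≤ i.val then qe ⟨k.val, by omega⟩ else pe ⟨i.val + 1, by omega⟩ with hR2edef
  have hev1 : ∀ m : Fin (i.val + 2 + 1), ∀ h : m.val ≤ i.val, R2 m = q ⟨m.val, by omega⟩ := by
    intro m h; simp only [hR2def, dif_pos h]
  have hev2 : ∀ m : Fin (i.val + 2 + 1), m.val = i.val + 1 → R2 m = y := by
    intro m h; simp only [hR2def, dif_neg (by omega : ¬ m.val ≤ i.val), if_pos h]
  have hev3 : ∀ m : Fin (i.val + 2 + 1), m.val = i.val + 2 → R2 m = p ⟨i.val + 2, by omega⟩ := by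
    intro m h
    simp only [hR2def, dif_neg (by omega : ¬ m.val ≤ i.val), if_neg (by omega : ¬ m.val = i.val + 1)]
  have hee1 : ∀ m : Fin (i.val + 2), ∀ h : m.val ≤ i.val, R2e m = qe ⟨m.val, by omega⟩ := by
    intro m h; simp only [hR2edef, dif_pos h]
  have hee2 : ∀ m : Fin (i.val + 2), m.val = i.val + 1 → R2e m = pe ⟨i.val + 1, by omega⟩ := by
    intro m h; simp only [hR2edef, dif_neg (by omega : ¬ m.val ≤ i.val)]
  -- distances pin down the vertices of R2
  have hval : ∀ k : Fin (i.val + 2 + 1), hDist E u (R2 k) = k.val := by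
    intro k
    by_cases h1 : k.val ≤ i.val
    · rw [hev1 k h1]
      exact vertex_head_eq hconn ht hq hq0 hql ⟨k.val, by omega⟩
    · by_cases h2 : k.val = i.val + 1
      · rw [hev2 k h2, hyd3, h2]
      · rw [hev3 k (by omega)]
        have hh := vertex_head_eq hconn ht hp hp0 hpl ⟨i.val + 2, by omega⟩
        have hmkv : (⟨i.val + 2, by omega⟩ : Fin (t+1)).val = i.val + 2 := rfl
        rw [hh, hmkv]; omega
  have hval1 : ∀ k : Fin (i.val + 2 + 1), hDist E u (R1 k) = k.val := by
    intro k
    exact vertex_head_eq hconn ht hp hp0 hpl ⟨k.val, by omega⟩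
  have hR1path : IsHPath E (i.val + 2) R1 R1e := by
    refine ⟨?_, ?_, ?_, ?_⟩
    · intro a b hab
      apply Fin.ext
      have ha := hval1 a
      have hb := hval1 b
      rw [hab] at ha; omega
    · intro a b hab
      apply Fin.ext
      have := hp.2.1 hab
      have := congrArg Fin.val this
      simpa using this
    · intro k; exact hp.2.2.1 _
    · intro k
      constructor
      · have e1 : R1 k.castSucc = p ⟨k.val, by omega⟩ := congrArg p (Fin.ext (by simp))
        rw [e1]; exact memc hp (by omega)
      · have e2 : R1 k.succ = p ⟨k.val + 1, by omega⟩ := congrArg p (Fin.ext (by simp))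
        rw [e2]; exact mems hp (by omega)
  have hR2path : IsHPath E (i.val + 2) R2 R2e := by
    refine ⟨?_, ?_, ?_, ?_⟩
    · intro a b hab
      apply Fin.ext
      have ha := hval a
      have hb := hval b
      rw [hab] at ha; omega
    · intro a b hab
      have hat : a.val ≤ i.val + 1 := by omega
      have hbt : b.val ≤ i.val + 1 := by omega
      by_cases h1 : a.val ≤ i.val
      · by_cases h2 : b.val ≤ i.val
        · rw [hee1 a h1, hee1 b h2] at hab
          have := hq.2.1 hab
          have := congrArg Fin.val this
          apply Fin.ext; simpa using this
        · rw [hee1 a h1, hee2 b (by omega)] at hab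
          have := cross_edge_eq hconn ht hq hq0 hql hp hp0 hpl hab
          have := congrArg Fin.val this
          simp at this; omega
      · by_cases h2 : b.val ≤ i.val
        · rw [hee2 a (by omega), hee1 b h2] at hab
          have := cross_edge_eq hconn ht hp hp0 hpl hq hq0 hql hab
          have := congrArg Fin.val this
          simp at this; omega
        · apply Fin.ext; omega
    · intro k
      by_cases h1 : k.val ≤ i.val
      · rw [hee1 k h1]; exact hq.2.2.1 _
      · rw [hee2 k (by omega)]; exact hp.2.2.1 _
    · intro k
      have hcs : (k.castSucc : Fin (i.val + 2 + 1)).val = k.val := rfl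
      have hsc : (k.succ : Fin (i.val + 2 + 1)).val = k.val + 1 := rfl
      by_cases h1 : k.val < i.val
      · rw [hee1 k (by omega)]
        constructor
        · rw [hev1 k.castSucc (by omega)]
          exact memc hq (by omega)
        · rw [hev1 k.succ (by omega)]
          have e2 : q ⟨(k.succ : Fin (i.val + 2 + 1)).val, by omega⟩ = q ⟨k.val + 1, by omega⟩ :=
            congrArg q (Fin.ext (by simp))
          rw [e2]; exact mems hq (by omega)
      · by_cases h2 : k.val = i.val
        · rw [hee1 k (by omega)]
          constructor
          · rw [hev1 k.castSucc (by omega)]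
            exact memc hq (by omega)
          · rw [hev2 k.succ (by omega)]
            have : (⟨(k.castSucc : Fin (i.val+2+1)).val, by omega⟩ : Fin t) = i :=
              fin_mk_eq (by omega)
            have h3 : qe ⟨k.val, by omega⟩ = qe i := congrArg qe (fin_mk_eq (by omega))
            rw [h3]; exact hy1
        · have h3 : k.val = i.val + 1 := by omega
          rw [hee2 k (by omega)]
          constructor
          · rw [hev2 k.castSucc (by omega)]
            exact hy2
          · rw [hev3 k.succ (by omega)]
            exact mems hp (by omega)
  have hR10 : R1 0 = u := by
    have : R1 0 = p 0 := congrArg p (Fin.ext (by simp))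
    rw [this, hp0]
  have hR1l : R1 (Fin.last _) = p ⟨i.val + 2, by omega⟩ := congrArg p (Fin.ext (by simp [Fin.last]))
  have hR20 : R2 0 = u := by
    rw [hev1 0 (by simp)]
    have : q ⟨(0 : Fin (i.val+2+1)).val, by omega⟩ = q 0 := congrArg q (Fin.ext (by simp))
    rw [this, hq0]
  have hR2l : R2 (Fin.last _) = p ⟨i.val + 2, by omega⟩ := hev3 _ (by simp [Fin.last])
  have hdist : (i.val + 2 : ℕ) = hDist E u (p ⟨i.val + 2, by omega⟩) := by
    have := vertex_head_eq hconn ht hp hp0 hpl ⟨i.val + 2, by omega⟩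
    rw [this]
  have := IH (i.val + 2) (by omega) (by omega) u (p ⟨i.val + 2, by omega⟩) hdist
    R1 R1e hR1path hR10 hR1l R2 R2e hR2path hR20 hR2l ⟨i.val, by omega⟩
  rw [hee1 ⟨i.val, by omega⟩ (by simp)] at this
  simp only [hR1edef] at this
  apply hne
  calc pe i = pe ⟨i.val, i.isLt⟩ := rfl
  _ = qe ⟨i.val, i.isLt⟩ := this
  _ = qe i := rfl

end StepK

end Stmt12
namespace Stmt12

set_option linter.unusedSectionVars false
set_option maxHeartbeats 1000000

open SimpleGraph

variable {V : Type*}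

section StepLast

variable {E : Set (Set V)} {t : ℕ} {u w : V} {T : SimpleGraph V}
variable (hconn : HConnected E) (hord : Orderly E) (hT : T.IsTree)
  (hsub : ∀ e ∈ E, (T.induce e).Connected) (ht : t = hDist E u w)
variable {p : Fin (t+1) → V} {pe : Fin t → Set V} {q : Fin (t+1) → V} {qe : Fin t → Set V}

include hconn hord hT hsub ht

lemma step_last (hp : IsHPath E t p pe) (hp0 : p 0 = u) (hpl : p (Fin.last t) = w)
    (hq : IsHPath E t q qe) (hq0 : q 0 = u) (hql : q (Fin.last t) = w)
    {i : Fin t} (hne : pe i ≠ qe i)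
    (hag : ∀ j : Fin t, j.val < i.val → pe j = qe j)
    (hit : i.val + 1 < t) (hit2 : i.val + 2 = t)
    {z : V} (hz1 : z ∈ pe i) (hz2 : z ∈ qe i)
    (hz3 : ∀ _ : 0 < i.val, z ∈ pe ⟨i.val - 1, by omega⟩) : False := by
  have hag' : ∀ j : Fin t, j.val < i.val → qe j = pe j := fun j hj => (hag j hj).symm
  have hz3' : ∀ _ : 0 < i.val, z ∈ qe ⟨i.val - 1, by omega⟩ := by
    intro h
    rw [← hag _ (by simp; omega)]
    exact hz3 h
  set i1 : Fin t := ⟨i.val + 1, hit⟩ with hi1def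
  set a : V := p ⟨i.val + 1, by omega⟩ with ha_def
  set b : V := q ⟨i.val + 1, by omega⟩ with hb_def
  have haD1 : a ∈ pe i := by
    have := mems hp i.isLt
    rwa [show (⟨i.val, i.isLt⟩ : Fin t) = i from Fin.ext rfl] at this
  have haD2 : a ∈ pe i1 := memc hp hit
  have hbB1 : b ∈ qe i := by
    have := mems hq i.isLt
    rwa [show (⟨i.val, i.isLt⟩ : Fin t) = i from Fin.ext rfl] at this
  have hbB2 : b ∈ qe i1 := memc hq hit
  have haB : a ∉ qe i :=
    notin_next hconn ht hord hp hp0 hpl hq hq0 hql hne hz1 hz2 hz3 hag hit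
  have hbA : b ∉ pe i :=
    notin_next hconn ht hord hq hq0 hql hp hp0 hpl (Ne.symm hne) hz2 hz1 hz3' hag' hit
  have hwp1 : w ∈ pe i1 := mem_w hp hpl hit (by omega)
  have hwq1 : w ∈ qe i1 := mem_w hq hql hit (by omega)
  have hwpi : w ∉ pe i := by
    intro hw
    have hb := head_bound hp hp0 i hw
    have := hDist_self E w
    omega
  have hwqi : w ∉ qe i := by
    intro hw
    have hb := head_bound hq hq0 i hw
    omega
  have hF4 : ∀ c, c ∈ pe i → c ∈ qe i → (c ∈ pe i1 ∨ c ∈ qe i1) → False := by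
    intro c h1 h2 h3
    exact noSJ hconn ht hord hp hp0 hpl hq hq0 hql hne hz1 hz2 hz3 hag h1 h2
      (le_refl _) hit h3
  -- the tree path between the two (i+1)-st vertices
  obtain ⟨W1, hW1⟩ := edge_walk (hsub _ (hp.2.2.1 i)) haD1 hz1
  obtain ⟨W2, hW2⟩ := edge_walk (hsub _ (hq.2.2.1 i)) hz2 hbB1
  have hsupp1 : ∀ y ∈ (tp hT a b).support, y ∈ pe i ∨ y ∈ qe i := by
    apply tp_support_sub hT (W1.append W2)
    intro y hy
    rcases (Walk.mem_support_append_iff _ _).mp hy with h | h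
    · exact Or.inl (hW1 y h)
    · exact Or.inr (hW2 y h)
  obtain ⟨W3, hW3⟩ := tail_walk hsub hp hpl (t - (i.val+1)) (i.val+1) hit rfl a haD2
  obtain ⟨W4, hW4⟩ := tail_walk hsub hq hql (t - (i.val+1)) (i.val+1) hit rfl b hbB2
  have hsupp2 : ∀ y ∈ (tp hT a b).support, y ∈ pe i1 ∨ y ∈ qe i1 := by
    have h := tp_support_sub hT (W3.append W4.reverse)
      (U := {y | ∃ j, i.val + 1 ≤ j ∧ ∃ (hj : j < t), y ∈ pe ⟨j, hj⟩ ∨ y ∈ qe ⟨j, hj⟩})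
      (by
        intro y hy
        rcases (Walk.mem_support_append_iff _ _).mp hy with h | h
        · obtain ⟨j, hj1, hj2, hj3⟩ := hW3 y h
          exact ⟨j, hj1, hj2, Or.inl hj3⟩
        · rw [Walk.support_reverse, List.mem_reverse] at h
          obtain ⟨j, hj1, hj2, hj3⟩ := hW4 y h
          exact ⟨j, hj1, hj2, Or.inr hj3⟩)
    intro y hy
    obtain ⟨j, hj1, hj2, hj3⟩ := h y hy
    have : (⟨j, hj2⟩ : Fin t) = i1 := Fin.ext (by simp [hi1def]; omega)
    rwa [this] at hj3
  by_cases hg : pe i1 = qe i1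
  · -- the last edges coincide
    have hsupp2' : ∀ y ∈ (tp hT a b).support, y ∈ pe i1 := by
      intro y hy
      rcases hsupp2 y hy with h | h
      · exact h
      · rwa [hg]
    obtain ⟨x, y, hxy, hxs, hys, hxA, hxB, hyB, hyA⟩ :=
      crossing (A := pe i) (B := qe i) (tp hT a b) (fun c hc => hsupp1 c hc)
        (fun c hc hcc => hF4 c hcc.1 hcc.2 (Or.inl (hsupp2' c hc))) haD1 hbB1
    rcases adj_dichot hT hxy u with hcase | hcase
    · have hmem := tp_head_mem hconn hT hsub ht hp hp0 i.isLt
        (show x ∈ pe ⟨i.val, i.isLt⟩ from hxA) y hcase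
      obtain ⟨j, hj1, hj2, hj3⟩ := hmem
      by_cases hji : j = i.val
      · exact hyA (by rwa [show (⟨j, hj2⟩ : Fin t) = i from fin_mk_eq hji] at hj3)
      · exact cross_disj hconn ht hp hp0 hp hpl hj3 (hsupp2' y hys) (by simp [hi1def]; omega)
    · have hmem := tp_head_mem hconn hT hsub ht hq hq0 i.isLt
        (show y ∈ qe ⟨i.val, i.isLt⟩ from hyB) x hcase
      obtain ⟨j, hj1, hj2, hj3⟩ := hmem
      by_cases hji : j = i.val
      · exact hxB (by rwa [show (⟨j, hj2⟩ : Fin t) = i from fin_mk_eq hji] at hj3)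
      · exact cross_disj hconn ht hq hq0 hp hpl hj3 (hsupp2' x hxs) (by simp [hi1def]; omega)
  · -- the last edges differ
    have hS'p : ∀ c, c ∈ pe i1 → c ∈ qe i1 → c ∉ pe i := by
      intro c h1 h2 h3
      rcases hord (pe i1) (hp.2.2.1 _) (qe i1) (hq.2.2.1 _) hg ⟨c, h1, h2⟩
          (pe i) (hp.2.2.1 _) with h | h
      · exact hwpi (h ⟨hwp1, hwq1⟩)
      · rw [Set.eq_empty_iff_forall_notMem] at h
        exact h c ⟨⟨h1, h2⟩, h3⟩
    have hS'q : ∀ c, c ∈ pe i1 → c ∈ qe i1 → c ∉ qe i := by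
      intro c h1 h2 h3
      rcases hord (pe i1) (hp.2.2.1 _) (qe i1) (hq.2.2.1 _) hg ⟨c, h1, h2⟩
          (qe i) (hq.2.2.1 _) with h | h
      · exact hwqi (h ⟨hwp1, hwq1⟩)
      · rw [Set.eq_empty_iff_forall_notMem] at h
        exact h c ⟨⟨h1, h2⟩, h3⟩
    have hpei1 : pe i ≠ pe i1 := by
      intro h
      have := congrArg Fin.val (hp.2.1 h)
      simp [hi1def] at this
    have hqei1 : qe i ≠ qe i1 := by
      intro h
      have := congrArg Fin.val (hq.2.1 h)
      simp [hi1def] at this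
    have hDq : ∀ c, c ∈ pe i → c ∈ pe i1 → c ∉ qe i1 := by
      intro c h1 h2 h3
      rcases hord (pe i) (hp.2.2.1 _) (pe i1) (hp.2.2.1 _) hpei1 ⟨c, h1, h2⟩
          (qe i1) (hq.2.2.1 _) with h | h
      · exact hS'p a haD2 (h ⟨haD1, haD2⟩) haD1
      · rw [Set.eq_empty_iff_forall_notMem] at h
        exact h c ⟨⟨h1, h2⟩, h3⟩
    have hBp : ∀ c, c ∈ qe i → c ∈ qe i1 → c ∉ pe i1 := by
      intro c h1 h2 h3
      rcases hord (qe i) (hq.2.2.1 _) (qe i1) (hq.2.2.1 _) hqei1 ⟨c, h1, h2⟩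
          (pe i1) (hp.2.2.1 _) with h | h
      · exact hS'q b (h ⟨hbB1, hbB2⟩) hbB2 hbB1
      · rw [Set.eq_empty_iff_forall_notMem] at h
        exact h c ⟨⟨h1, h2⟩, h3⟩
    obtain ⟨x, y, hxy, hxs, hys, hxA, hxB, hyB, hyA⟩ :=
      crossing (A := pe i ∩ pe i1) (B := qe i ∪ qe i1) (tp hT a b)
        (by
          intro c hc
          rcases hsupp1 c hc with h1 | h1
          · rcases hsupp2 c hc with h2 | h2
            · exact Or.inl ⟨h1, h2⟩
            · exact Or.inr (Or.inr h2)
          · exact Or.inr (Or.inl h1))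
        (by
          intro c hc hcc
          obtain ⟨⟨hc1, hc2⟩, hc3⟩ := hcc
          rcases hc3 with h | h
          · exact hF4 c hc1 h (Or.inl hc2)
          · exact hDq c hc1 hc2 h)
        ⟨haD1, haD2⟩ (Or.inl hbB1)
    rcases hsupp2 y hys with hy1 | hy1
    · -- y in the last edge of p
      have hynp : y ∉ pe i := fun h => hyA ⟨h, hy1⟩
      have hyqi : y ∈ qe i := by
        rcases hsupp1 y hys with h | h
        · exact absurd h hynp
        · exact h
      rcases adj_dichot hT hxy u with hcase | hcase
      · have hmem := tp_head_mem hconn hT hsub ht hp hp0 i.isLt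
          (show x ∈ pe ⟨i.val, i.isLt⟩ from hxA.1) y hcase
        obtain ⟨j, hj1, hj2, hj3⟩ := hmem
        by_cases hji : j = i.val
        · exact hynp (by rwa [show (⟨j, hj2⟩ : Fin t) = i from fin_mk_eq hji] at hj3)
        · exact cross_disj hconn ht hp hp0 hp hpl hj3 hy1 (by simp [hi1def]; omega)
      · have hmem := tp_head_mem hconn hT hsub ht hq hq0 i.isLt
          (show y ∈ qe ⟨i.val, i.isLt⟩ from hyqi) x hcase
        obtain ⟨j, hj1, hj2, hj3⟩ := hmem
        by_cases hji : j = i.val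
        · exact hxB (Or.inl (by rwa [show (⟨j, hj2⟩ : Fin t) = i from fin_mk_eq hji] at hj3))
        · exact cross_disj hconn ht hq hq0 hp hpl hj3 hxA.2 (by simp [hi1def]; omega)
    · -- y in the last edge of q
      rcases adj_dichot hT hxy w with hcase | hcase
      · have hmem := tp_mem_of_edge hT (hsub _ (hp.2.2.1 i1)) hxA.2 hwp1 y hcase
        rcases hsupp1 y hys with h | h
        · exact hS'p y hmem hy1 h
        · exact hS'q y hmem hy1 h
      · have hmem := tp_mem_of_edge hT (hsub _ (hq.2.2.1 i1)) hy1 hwq1 x hcase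
        exact hDq x hxA.1 hxA.2 hmem

end StepLast

lemma main {E : Set (Set V)} {T : SimpleGraph V} (hconn : HConnected E) (hord : Orderly E)
    (hT : T.IsTree) (hsub : ∀ e ∈ E, (T.induce e).Connected) :
    ∀ t, 2 ≤ t → ∀ u w : V, t = hDist E u w →
      ∀ (p : Fin (t+1) → V) (pe : Fin t → Set V), IsHPath E t p pe → p 0 = u →
        p (Fin.last t) = w →
      ∀ (q : Fin (t+1) → V) (qe : Fin t → Set V), IsHPath E t q qe → q 0 = u →
        q (Fin.last t) = w → ∀ i : Fin t, pe i = qe i := by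
  intro t
  induction t using Nat.strong_induction_on with
  | _ t IH =>
  intro ht2 u w ht p pe hp hp0 hpl q qe hq hq0 hql
  have key : ∀ n, ∀ i : Fin t, i.val = n → pe i = qe i := by
    intro n
    induction n using Nat.strong_induction_on with
    | _ n IHi =>
    intro i hi
    by_contra hne
    have hag : ∀ j : Fin t, j.val < i.val → pe j = qe j := by
      intro j hj
      exact IHi j.val (by omega) j rfl
    obtain ⟨z, hz1, hz2, hz3⟩ := step1 hconn hT hsub ht hp hp0 hpl hq hq0 hql hne hag
    by_cases hcase1 : i.val + 1 = t
    · -- i is the last index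
      have h0 : 0 < i.val := by omega
      have hwp : w ∈ pe i := by
        have := mem_w hp hpl i.isLt (by omega)
        rwa [show (⟨i.val, i.isLt⟩ : Fin t) = i from Fin.ext rfl] at this
      have hwq : w ∈ qe i := by
        have := mem_w hq hql i.isLt (by omega)
        rwa [show (⟨i.val, i.isLt⟩ : Fin t) = i from Fin.ext rfl] at this
      have hsubS := subS hconn ht hord hp hq hne h0 hz1 hz2 (hz3 h0)
      have hw2 : w ∈ pe ⟨i.val - 1, by omega⟩ := hsubS ⟨hwp, hwq⟩
      have hb := head_bound hp hp0 ⟨i.val - 1, by omega⟩ hw2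
      have hv : (⟨i.val - 1, by omega⟩ : Fin t).val = i.val - 1 := rfl
      omega
    · have hit : i.val + 1 < t := by omega
      by_cases hcase2 : i.val + 2 = t
      · exact step_last hconn hord hT hsub ht hp hp0 hpl hq hq0 hql hne hag hit hcase2
          hz1 hz2 hz3
      · have hit2 : i.val + 2 < t := by omega
        rcases stepXY hconn hord hT hsub ht hp hp0 hpl hq hq0 hql hne hag hit hz1 hz2 hz3 with
          ⟨y, hy1, hy2, hy3⟩ | ⟨x, hx1, hx2, hx3⟩
        · exact stepK hconn ht hp hp0 hpl hq hq0 hql hne hit2 (fun t' h => IH t' h)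
            hy1 hy2 hy3
        · exact stepK hconn ht hq hq0 hql hp hp0 hpl (Ne.symm hne) hit2 (fun t' h => IH t' h)
            hx1 hx2 hx3
  exact fun i => key i.val i rfl

end Stmt12

/-- In a connected orderly hypertree without nested edges, any two
shortest paths (of length `t = d_H(u,w) ≥ 2`) between the same pair of vertices traverse
exactly the same sequence of edges. -/
theorem stmt_12 {V : Type*} [Fintype V] (E : Set (Set V))
    (hcard : ∀ e ∈ E, 2 ≤ e.ncard) (hconn : HConnected E) (hnest : NoNestedEdges E)
    (hord : Orderly E) (htree : IsHypertree E)
    (u w : V) (t : ℕ) (ht : t = hDist E u w) (ht2 : 2 ≤ t)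
    (p : Fin (t + 1) → V) (pe : Fin t → Set V) (hp : IsHPath E t p pe)
    (hp0 : p 0 = u) (hpl : p (Fin.last t) = w)
    (q : Fin (t + 1) → V) (qe : Fin t → Set V) (hq : IsHPath E t q qe)
    (hq0 : q 0 = u) (hql : q (Fin.last t) = w) :
    ∀ i : Fin t, pe i = qe i := by
  obtain ⟨T, hT, hsub⟩ := htree
  exact Stmt12.main hconn hord hT hsub t ht2 u w ht p pe hp hp0 hpl q qe hq hq0 hql
end

section
/- Let H=(V,E) and H'=(V,E') be connected orderly hypertrees on the same finite vertex set V, neither containing nested edges. If d_H(u,v) = d_{H'}(u,v) for all u, v ∈ V, then E = E'. In other words, the distances between all pairs of vertices of a connected orderly hypertree uniquely determine the hypertree. -/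
open Set

variable {V : Type*}

section Aux

open SimpleGraph

variable {V : Type*}


lemma walk_meet {T : SimpleGraph V} {a b c : V} (P : T.Walk a b) (hP : P.IsPath)
    (Q : T.Walk b c) (hQ : Q.IsPath) :
    ∃ (m : V) (W : T.Walk a c), W.IsPath ∧
      (∀ x ∈ W.support, x ∈ P.support ∨ x ∈ Q.support) ∧
      m ∈ P.support ∧ m ∈ Q.support ∧ m ∈ W.support := by
  classical
  revert hP Q hQ
  induction P with
  | nil =>
      intro hP Q hQ
      exact ⟨_, Q, hQ, fun x hx => Or.inr hx, by simp, Q.start_mem_support,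
        Q.start_mem_support⟩
  | @cons u v _ h P' ih =>
      intro hP Q hQ
      rw [SimpleGraph.Walk.cons_isPath_iff] at hP
      by_cases hu : u ∈ Q.support
      · refine ⟨u, Q.dropUntil u hu, hQ.dropUntil hu,
          fun x hx => Or.inr (Q.support_dropUntil_subset hu hx), by simp, hu,
          (Q.dropUntil u hu).start_mem_support⟩
      · obtain ⟨m, W', hW', hsub, hmP, hmQ, hmW⟩ := ih hP.1 Q hQ
        have huW' : u ∉ W'.support := fun hx => by
          rcases hsub u hx with h' | h'
          · exact hP.2 h'
          · exact hu h'
        refine ⟨m, SimpleGraph.Walk.cons h W', ?_, ?_, ?_, hmQ, ?_⟩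
        · rw [SimpleGraph.Walk.cons_isPath_iff]; exact ⟨hW', huW'⟩
        · intro x hx
          rw [SimpleGraph.Walk.support_cons] at hx
          rcases List.mem_cons.mp hx with hx' | hx'
          · exact Or.inl (by simp [hx'])
          · rcases hsub x hx' with h' | h'
            · exact Or.inl (by simp [h'])
            · exact Or.inr h'
        · simp [hmP]
        · rw [SimpleGraph.Walk.support_cons]; exact List.mem_cons_of_mem _ hmW

lemma exists_path_in_edge {T : SimpleGraph V} {e : Set V} (hc : (T.induce e).Connected)
    {x y : V} (hx : x ∈ e) (hy : y ∈ e) :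
    ∃ w : T.Walk x y, w.IsPath ∧ ∀ z ∈ w.support, z ∈ e := by
  classical
  obtain ⟨w0⟩ := hc.preconnected ⟨x, hx⟩ ⟨y, hy⟩
  let f : T.induce e →g T := ⟨Subtype.val, fun {p q} h => h⟩
  have w1 : T.Walk x y := w0.map f
  refine ⟨(w0.map f).bypass, SimpleGraph.Walk.bypass_isPath _, fun z hz => ?_⟩
  have := (w0.map f).support_bypass_subset hz
  rw [SimpleGraph.Walk.support_map] at this
  obtain ⟨z', _, rfl⟩ := List.mem_map.mp this
  exact z'.2

lemma tree_helly {T : SimpleGraph V} (hT : T.IsTree) {e1 e2 e3 : Set V}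
    (h1 : (T.induce e1).Connected) (h2 : (T.induce e2).Connected)
    (h3 : (T.induce e3).Connected)
    {a b c : V} (ha1 : a ∈ e1) (ha2 : a ∈ e2) (hb1 : b ∈ e1) (hb3 : b ∈ e3)
    (hc2 : c ∈ e2) (hc3 : c ∈ e3) : ∃ m, m ∈ e1 ∧ m ∈ e2 ∧ m ∈ e3 := by
  obtain ⟨P, hPp, hPe⟩ := exists_path_in_edge h1 ha1 hb1
  obtain ⟨Q, hQp, hQe⟩ := exists_path_in_edge h3 hb3 hc3
  obtain ⟨R, hRp, hRe⟩ := exists_path_in_edge h2 ha2 hc2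
  obtain ⟨m, W, hWp, _, hmP, hmQ, hmW⟩ := walk_meet P hPp Q hQp
  have hWR : W = R := by
    have := hT.IsAcyclic.path_unique ⟨W, hWp⟩ ⟨R, hRp⟩
    exact congrArg Subtype.val this
  exact ⟨m, hPe m hmP, hRe m (hWR ▸ hmW), hQe m hmQ⟩


lemma three_edge {T : SimpleGraph V} (hT : T.IsTree) {E : Set (Set V)}
    (hord : Orderly E) (hsub : ∀ e ∈ E, (T.induce e).Connected)
    {e1 e2 e3 : Set V} (h1 : e1 ∈ E) (h2 : e2 ∈ E) (h3 : e3 ∈ E) :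
    ∃ e ∈ E, e1 ∩ e2 ⊆ e ∧ e1 ∩ e3 ⊆ e ∧ e2 ∩ e3 ⊆ e := by
  by_cases h12 : e1 = e2
  · subst h12
    exact ⟨e1, h1, inter_subset_left, inter_subset_left, inter_subset_left⟩
  by_cases h13 : e1 = e3
  · subst h13
    exact ⟨e1, h1, inter_subset_left, inter_subset_left,
      (inter_comm e2 e1) ▸ inter_subset_left⟩
  by_cases h23 : e2 = e3
  · subst h23
    exact ⟨e2, h2, inter_subset_right, inter_subset_right, inter_subset_left⟩
  by_cases hn12 : (e1 ∩ e2).Nonempty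
  · by_cases hn13 : (e1 ∩ e3).Nonempty
    · by_cases hn23 : (e2 ∩ e3).Nonempty
      · obtain ⟨a, ha1, ha2⟩ := hn12
        obtain ⟨b, hb1, hb3⟩ := hn13
        obtain ⟨c, hc2, hc3⟩ := hn23
        obtain ⟨m, hm1, hm2, hm3⟩ := tree_helly hT (hsub e1 h1) (hsub e2 h2)
          (hsub e3 h3) ha1 ha2 hb1 hb3 hc2 hc3
        rcases hord e1 h1 e2 h2 h12 ⟨a, ha1, ha2⟩ e3 h3 with hss | hdisj
        · exact ⟨e3, h3, hss, inter_subset_right, inter_subset_right⟩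
        · exact absurd hdisj (by
            refine Set.Nonempty.ne_empty ⟨m, ⟨hm1, hm2⟩, hm3⟩)
      · refine ⟨e1, h1, inter_subset_left, inter_subset_left, ?_⟩
        rw [Set.not_nonempty_iff_eq_empty] at hn23
        rw [hn23]; exact Set.empty_subset _
    · refine ⟨e2, h2, inter_subset_right, ?_, inter_subset_left⟩
      rw [Set.not_nonempty_iff_eq_empty] at hn13
      rw [hn13]; exact Set.empty_subset _
  · refine ⟨e3, h3, ?_, inter_subset_right, inter_subset_right⟩
    rw [Set.not_nonempty_iff_eq_empty] at hn12
    rw [hn12]; exact Set.empty_subset _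

lemma conformal_aux [Fintype V] {E : Set (Set V)} (hord : Orderly E)
    (htree : IsHypertree E) :
    ∀ n : ℕ, ∀ U : Set V, U.ncard = n → 2 ≤ n →
      (∀ x ∈ U, ∀ y ∈ U, x ≠ y → ∃ e ∈ E, x ∈ e ∧ y ∈ e) → ∃ e ∈ E, U ⊆ e := by
  obtain ⟨T, hT, hsub⟩ := htree
  intro n
  induction n using Nat.strong_induction_on with
  | _ n ih =>
    intro U hcardU h2n hcov
    rcases eq_or_lt_of_le h2n with h2 | h3
    · obtain ⟨x, y, hxy, rfl⟩ := Set.ncard_eq_two.mp (hcardU.trans h2.symm)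
      obtain ⟨e, he, hxe, hye⟩ := hcov x (by simp) y (by simp) hxy
      exact ⟨e, he, by intro z hz; rcases hz with rfl | rfl; exacts [hxe, hye]⟩
    · -- n ≥ 3
      have hUfin : U.Finite := Set.toFinite U
      have hne : U.Nonempty := Set.nonempty_of_ncard_ne_zero (by omega)
      obtain ⟨x, hx⟩ := hne
      have hcard1 : (U \ {x}).ncard = n - 1 := by
        rw [Set.ncard_diff_singleton_of_mem hx, hcardU]
      have hne1 : (U \ {x}).Nonempty := Set.nonempty_of_ncard_ne_zero (by omega)
      obtain ⟨y, hy⟩ := hne1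
      have hcard2 : ((U \ {x}) \ {y}).ncard = n - 2 := by
        rw [Set.ncard_diff_singleton_of_mem hy, hcard1]
        omega
      have hne2 : ((U \ {x}) \ {y}).Nonempty :=
        Set.nonempty_of_ncard_ne_zero (by omega)
      obtain ⟨w, hw⟩ := hne2
      have hyU : y ∈ U := hy.1
      have hwU : w ∈ U := hw.1.1
      have hxy : x ≠ y := fun h => hy.2 (by simp [h.symm])
      have hxw : x ≠ w := fun h => hw.1.2 (by simp [h.symm])
      have hyw : y ≠ w := fun h => hw.2 (by simp [h.symm])
      have key : ∀ z ∈ U, ∃ e ∈ E, U \ {z} ⊆ e := by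
        intro z hz
        refine ih (n-1) (by omega) (U \ {z}) ?_ (by omega) ?_
        · rw [Set.ncard_diff_singleton_of_mem hz, hcardU]
        · intro p hp q hq hpq
          exact hcov p hp.1 q hq.1 hpq
      obtain ⟨f1, hf1E, hf1⟩ := key x hx
      obtain ⟨f2, hf2E, hf2⟩ := key y hyU
      obtain ⟨f3, hf3E, hf3⟩ := key w hwU
      obtain ⟨e, heE, hi12, hi13, hi23⟩ := three_edge hT hord hsub hf1E hf2E hf3E
      refine ⟨e, heE, fun z hz => ?_⟩
      by_cases hzx : z = x
      · subst hzx
        exact hi23 ⟨hf2 ⟨hz, hxy⟩, hf3 ⟨hz, hxw⟩⟩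
      by_cases hzy : z = y
      · subst hzy
        exact hi13 ⟨hf1 ⟨hz, fun h => hxy (Set.mem_singleton_iff.mp h).symm⟩, hf3 ⟨hz, hyw⟩⟩
      · exact hi12 ⟨hf1 ⟨hz, hzx⟩, hf2 ⟨hz, hzy⟩⟩

end Aux

section Dist

variable {V : Type*}

lemma hDist_eq_one {E : Set (Set V)} {e : Set V} (he : e ∈ E) {u v : V}
    (hu : u ∈ e) (hv : v ∈ e) (huv : u ≠ v) : hDist E u v = 1 := by
  set S := {t | ∃ vv : Fin (t + 1) → V, ∃ ee : Fin t → Set V,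
    IsHPath E t vv ee ∧ vv 0 = u ∧ vv (Fin.last t) = v} with hS
  have h1 : 1 ∈ S := by
    refine ⟨![u, v], ![e], ⟨?_, ?_, ?_, ?_⟩, rfl, rfl⟩
    · intro i j hij
      fin_cases i <;> fin_cases j <;> simp_all
    · intro i j _
      exact Subsingleton.elim i j
    · intro i
      fin_cases i
      exact he
    · intro i
      fin_cases i
      exact ⟨hu, hv⟩
  have h0 : (0 : ℕ) ∉ S := by
    rintro ⟨vv, ee, _, hv0, hvl⟩
    exact huv (by rw [← hv0, ← hvl]; rfl)
  have hmem : sInf S ∈ S := Nat.sInf_mem ⟨1, h1⟩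
  have hle : sInf S ≤ 1 := Nat.sInf_le h1
  have : sInf S ≠ 0 := fun h => h0 (h ▸ hmem)
  show sInf S = 1
  omega

lemma exists_edge_of_hDist_eq_one {E : Set (Set V)} (hconn : HConnected E) {u v : V}
    (h : hDist E u v = 1) : ∃ e ∈ E, u ∈ e ∧ v ∈ e := by
  set S := {t | ∃ vv : Fin (t + 1) → V, ∃ ee : Fin t → Set V,
    IsHPath E t vv ee ∧ vv 0 = u ∧ vv (Fin.last t) = v} with hS
  have hne : S.Nonempty := by
    obtain ⟨t, vv, ee, hp, h0, hl⟩ := hconn u v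
    exact ⟨t, vv, ee, hp, h0, hl⟩
  have hmem : sInf S ∈ S := Nat.sInf_mem hne
  have h' : sInf S = 1 := h
  rw [h'] at hmem
  obtain ⟨vv, ee, ⟨_, _, hE, hcond⟩, h0, hl⟩ := hmem
  refine ⟨ee 0, hE 0, ?_, ?_⟩
  · rw [← h0]
    exact (hcond 0).1
  · rw [← hl]
    exact (hcond 0).2

end Dist

section Main

variable {V : Type*}

lemma edge_subset_of_dist [Fintype V] {E E' : Set (Set V)}
    (hcard' : ∀ e ∈ E', 2 ≤ e.ncard)
    (hconn : HConnected E) (hconn' : HConnected E')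
    (hnest' : NoNestedEdges E')
    (hord : Orderly E) (hord' : Orderly E')
    (htree : IsHypertree E) (htree' : IsHypertree E')
    (hdist : ∀ u v : V, hDist E u v = hDist E' u v) : E' ⊆ E := by
  intro e' he'
  have cov1 : ∀ x ∈ e', ∀ y ∈ e', x ≠ y → ∃ e ∈ E, x ∈ e ∧ y ∈ e := by
    intro x hx y hy hxy
    apply exists_edge_of_hDist_eq_one hconn
    rw [hdist]
    exact hDist_eq_one he' hx hy hxy
  obtain ⟨e, heE, hsub1⟩ :=
    conformal_aux hord htree e'.ncard e' rfl (hcard' e' he') cov1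
  have cov2 : ∀ x ∈ e, ∀ y ∈ e, x ≠ y → ∃ f ∈ E', x ∈ f ∧ y ∈ f := by
    intro x hx y hy hxy
    apply exists_edge_of_hDist_eq_one hconn'
    rw [← hdist]
    exact hDist_eq_one heE hx hy hxy
  have hcard_e : 2 ≤ e.ncard :=
    le_trans (hcard' e' he') (Set.ncard_le_ncard hsub1 (Set.toFinite e))
  obtain ⟨e'', he''E, hsub2⟩ :=
    conformal_aux hord' htree' e.ncard e rfl hcard_e cov2
  have h12 : e' = e'' := hnest' e' he' e'' he''E (hsub1.trans hsub2)
  have hee : e = e' := Set.Subset.antisymm (h12 ▸ hsub2) hsub1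
  exact hee ▸ heE

end Main

/-- Two connected orderly hypertrees without nested edges on the same
finite vertex set that induce the same distance function are equal: the pairwise vertex
distances of a connected orderly hypertree uniquely determine it. -/
theorem stmt_13 {V : Type*} [Fintype V] (E E' : Set (Set V))
    (hcard : ∀ e ∈ E, 2 ≤ e.ncard) (hcard' : ∀ e ∈ E', 2 ≤ e.ncard)
    (hconn : HConnected E) (hconn' : HConnected E')
    (hnest : NoNestedEdges E) (hnest' : NoNestedEdges E')
    (hord : Orderly E) (hord' : Orderly E')
    (htree : IsHypertree E) (htree' : IsHypertree E')
    (hdist : ∀ u v : V, hDist E u v = hDist E' u v) :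
    E = E' := by
  apply Set.Subset.antisymm
  · exact edge_subset_of_dist hcard hconn' hconn hnest hord' hord htree' htree
      (fun u v => (hdist u v).symm)
  · exact edge_subset_of_dist hcard' hconn hconn' hnest' hord hord' htree htree' hdist
end

section
/- Let Δ ≥ 2 and let T be a finite rooted tree with ℓ ≥ 1 leaves in which every vertex has (undirected) degree at most Δ. Then the path depth of T satisfies pd(T) ≤ 2Δ(⌈log_Δ ℓ⌉ + 1). -/
open SimpleGraph Set Function
open scoped Classical

set_option linter.unusedSectionVars false
set_option linter.unusedVariables false
set_option maxHeartbeats 1000000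


/-- `PathDepthLE G w n` captures the path depth game played on the connected component of
the vertex `w` in the forest `G`: it holds iff player `π_min` can force the game to end
within `n` rounds, i.e. the path depth of the tree which is the component of `w` is at
most `n`.  Either the current tree (component of `w`) is a single vertex, or `π_min`
selects a path with at least one edge inside the current tree and deletes its edges,
after which `π_max` selects any component of the result inside the current tree (given by
a representative `w'` reachable from `w` in `G`) as the new tree. -/
inductive PathDepthLE {V : Type*} : SimpleGraph V → V → ℕ → Prop
  | single (G : SimpleGraph V) (w : V) (n : ℕ)
      (h : ∀ x : V, G.Reachable w x → x = w) : PathDepthLE G w n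
  | step (G : SimpleGraph V) (w : V) (n : ℕ) (u v : V) (p : G.Walk u v)
      (hp : p.IsPath) (hne : p.edges ≠ []) (hu : G.Reachable w u)
      (h : ∀ w' : V, G.Reachable w w' →
        PathDepthLE (G.deleteEdges {ed | ed ∈ p.edges}) w' n) :
      PathDepthLE G w (n + 1)

theorem PathDepthLE.mono {V : Type*} {G : SimpleGraph V} {w : V} {n m : ℕ}
    (h : PathDepthLE G w n) (hnm : n ≤ m) : PathDepthLE G w m := by
  induction h generalizing m with
  | single G w n h => exact .single G w m h
  | step G w n u v p hp hne hu h IH =>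
    obtain ⟨m', rfl⟩ : ∃ m', m = m' + 1 := ⟨m - 1, by omega⟩
    exact .step G w m' u v p hp hne hu (fun w' hw' => IH w' hw' (by omega))

namespace PD14

variable {V : Type*} [Fintype V]

/-- Depth of a vertex: distance from the root. -/
noncomputable def dep (T : SimpleGraph V) (root v : V) : ℕ := T.dist root v

/-- Parent of a vertex: a neighbour closer to the root (the root is its own parent). -/
noncomputable def par (T : SimpleGraph V) (root v : V) : V :=
  if h : ∃ u, T.Adj v u ∧ T.dist root u + 1 = T.dist root v then h.choose else v

/-- `Desc T root x y` : `x` is a descendant of `y` (iterated parent). -/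
def Desc (T : SimpleGraph V) (root : V) (x y : V) : Prop := ∃ n, (par T root)^[n] x = y

variable {T : SimpleGraph V} {root : V}

lemma dep_root : dep T root root = 0 := SimpleGraph.dist_self

lemma dep_eq_zero_iff (hT : T.IsTree) {v : V} : dep T root v = 0 ↔ v = root := by
  unfold dep
  rw [(hT.isConnected root v).dist_eq_zero_iff]
  exact eq_comm

lemma exists_dist_path (hT : T.IsTree) (v : V) :
    ∃ p : T.Walk root v, p.IsPath ∧ p.length = dep T root v := by
  classical
  obtain ⟨q, hq⟩ := (hT.isConnected root v).exists_walk_length_eq_dist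
  exact ⟨q.bypass, q.bypass_isPath,
    le_antisymm (le_trans q.length_bypass_le hq.le) (SimpleGraph.dist_le _)⟩

/-- Every path from the root has length equal to the depth of its end. -/
lemma path_length_eq (hT : T.IsTree) {v : V} (p : T.Walk root v) (hp : p.IsPath) :
    p.length = dep T root v := by
  obtain ⟨q, hq, hql⟩ := exists_dist_path hT v
  have := hT.IsAcyclic.path_unique ⟨p, hp⟩ ⟨q, hq⟩
  rw [show p = q from congrArg Subtype.val this]
  exact hql

/-- A vertex on a root-path has depth at most the length, strictly less if not the endpoint. -/
lemma dep_mem_support_le (hT : T.IsTree) {v x : V} (p : T.Walk root v) (hp : p.IsPath)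
    (hx : x ∈ p.support) : dep T root x ≤ p.length ∧ (x ≠ v → dep T root x < p.length) := by
  classical
  have hsp := p.take_spec hx
  have hlen : (p.takeUntil x hx).length + (p.dropUntil x hx).length = p.length := by
    conv_rhs => rw [← hsp]
    rw [SimpleGraph.Walk.length_append]
  have h1 : dep T root x ≤ (p.takeUntil x hx).length := SimpleGraph.dist_le _
  constructor
  · omega
  · intro hxv
    have : (p.dropUntil x hx).length ≠ 0 := by
      intro h0
      have := (p.dropUntil x hx)
      cases hd : p.dropUntil x hx with
      | nil => exact hxv rfl
      | cons h q => rw [hd] at h0; simp at h0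
    omega

lemma dep_pos_of_ne_root (hT : T.IsTree) {v : V} (hv : v ≠ root) : 0 < dep T root v := by
  rcases Nat.eq_zero_or_pos (dep T root v) with h | h
  · exact absurd ((dep_eq_zero_iff hT).mp h) hv
  · exact h

/-- Existence part of the parent. -/
lemma exists_par (hT : T.IsTree) {v : V} (hv : v ≠ root) :
    ∃ u, T.Adj v u ∧ T.dist root u + 1 = T.dist root v := by
  obtain ⟨p, hp, hl⟩ := exists_dist_path (root := root) hT v
  have hd : 0 < p.length := by rw [hl]; exact dep_pos_of_ne_root hT hv
  set u := p.getVert (p.length - 1) with hu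
  have hadj : T.Adj u v := by
    have := p.adj_getVert_succ (i := p.length - 1) (by omega)
    rw [show p.length - 1 + 1 = p.length from by omega, p.getVert_length] at this
    exact this
  have hmem : u ∈ p.support := by
    rw [SimpleGraph.Walk.mem_support_iff_exists_getVert]
    exact ⟨p.length - 1, rfl, by omega⟩
  have hune : u ≠ v := fun h => hadj.ne h
  have h1 : dep T root u < p.length := (dep_mem_support_le hT p hp hmem).2 hune
  have h3 : dep T root v ≤ T.dist root u + 1 := by
    obtain ⟨pu, hpu, hpul⟩ := exists_dist_path (root := root) hT u
    have := SimpleGraph.dist_le (pu.concat hadj)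
    rwa [SimpleGraph.Walk.length_concat, hpul] at this
  exact ⟨u, hadj.symm, by unfold dep at *; omega⟩

lemma par_spec (hT : T.IsTree) {v : V} (hv : v ≠ root) :
    T.Adj v (par T root v) ∧ dep T root (par T root v) + 1 = dep T root v := by
  have h := exists_par hT hv
  rw [par, dif_pos h]
  exact h.choose_spec

lemma par_root : par T root root = root := by
  rw [par, dif_neg]
  rintro ⟨u, -, hu⟩
  rw [SimpleGraph.dist_self] at hu
  omega

/-- concat of a path avoiding the new endpoint is a path -/
lemma isPath_concat {G : SimpleGraph V} {a b c : V} {p : G.Walk a b} (hp : p.IsPath)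
    (h : G.Adj b c) (hc : c ∉ p.support) : (p.concat h).IsPath := by
  rw [← SimpleGraph.Walk.isPath_reverse_iff, SimpleGraph.Walk.reverse_concat]
  refine SimpleGraph.Walk.IsPath.cons hp.reverse ?_
  simpa [SimpleGraph.Walk.support_reverse] using hc

lemma low_nbr_unique (hT : T.IsTree) {a a' b : V} (h : T.Adj a b) (h' : T.Adj a' b)
    (hd : dep T root b = dep T root a + 1) (hd' : dep T root b = dep T root a' + 1) :
    a = a' := by
  obtain ⟨p, hp, hl⟩ := exists_dist_path (root := root) hT a
  obtain ⟨p', hp', hl'⟩ := exists_dist_path (root := root) hT a'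
  have hbp : b ∉ p.support := fun hb => by
    have := (dep_mem_support_le hT p hp hb).1; omega
  have hbp' : b ∉ p'.support := fun hb => by
    have := (dep_mem_support_le hT p' hp' hb).1; omega
  have hq : (p.concat h).IsPath := isPath_concat hp h hbp
  have hq' : (p'.concat h').IsPath := isPath_concat hp' h' hbp'
  have := hT.IsAcyclic.path_unique ⟨p.concat h, hq⟩ ⟨p'.concat h', hq'⟩
  have heq : p.concat h = p'.concat h' := congrArg Subtype.val this
  obtain ⟨hv, -⟩ := SimpleGraph.Walk.concat_inj heq
  exact hv

/-- adjacency/depth dichotomy in a tree -/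
lemma adj_dep (hT : T.IsTree) {a b : V} (h : T.Adj a b) :
    dep T root b = dep T root a + 1 ∨ dep T root a = dep T root b + 1 := by
  -- wlog dep a ≤ dep b
  have main : ∀ a b : V, T.Adj a b → dep T root a ≤ dep T root b →
      dep T root b = dep T root a + 1 := by
    intro a b hab hle
    obtain ⟨p, hp, hl⟩ := exists_dist_path (root := root) hT a
    have hbp : b ∉ p.support := by
      intro hb
      obtain ⟨h1, h2⟩ := dep_mem_support_le hT p hp hb
      rcases eq_or_ne b a with rfl | hne
      · exact hab.ne rfl
      · have := h2 hne; omega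
    have hq : (p.concat hab).IsPath := isPath_concat hp hab hbp
    have := path_length_eq hT (p.concat hab) hq
    rw [SimpleGraph.Walk.length_concat, hl] at this
    omega
  rcases le_total (dep T root a) (dep T root b) with hle | hle
  · exact Or.inl (main a b h hle)
  · exact Or.inr (main b a h.symm hle)

lemma par_unique (hT : T.IsTree) {a b : V} (h : T.Adj a b)
    (hd : dep T root b = dep T root a + 1) : par T root b = a := by
  have hb : b ≠ root := by
    intro hb; rw [hb, dep_root] at hd; omega
  obtain ⟨h1, h2⟩ := par_spec hT hb
  exact low_nbr_unique hT h1.symm h (by unfold dep at *; omega) hd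

lemma kid_dep (hT : T.IsTree) {c v : V} (hadj : T.Adj v c) (hpar : par T root c = v) :
    dep T root c = dep T root v + 1 := by
  have hc : c ≠ root := by
    intro hc; rw [hc, par_root] at hpar; rw [hc, ← hpar] at hadj; exact hadj.ne rfl
  have := (par_spec hT hc).2
  rw [hpar] at this
  unfold dep at *; omega

/-! ### Descendants -/

lemma desc_refl (x : V) : Desc T root x x := ⟨0, rfl⟩

lemma desc_trans {x y z : V} (h1 : Desc T root x y) (h2 : Desc T root y z) :
    Desc T root x z := by
  obtain ⟨m, hm⟩ := h1; obtain ⟨n, hn⟩ := h2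
  exact ⟨n + m, by rw [Function.iterate_add_apply, hm, hn]⟩

lemma desc_par {x : V} (hx : x ≠ root) : Desc T root x (par T root x) := ⟨1, rfl⟩

lemma desc_norm (hT : T.IsTree) {x y : V} (h : Desc T root x y) :
    dep T root y ≤ dep T root x ∧
      (par T root)^[dep T root x - dep T root y] x = y := by
  obtain ⟨n, hn⟩ := h
  induction n generalizing x y with
  | zero => subst hn; simp
  | succ n IH =>
    by_cases hx : x = root
    · have : (par T root)^[n+1] x = x := by
        rw [hx]; exact Function.iterate_fixed par_root _
      rw [this] at hn; subst hn; simp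
    · have hs : (par T root)^[n+1] x = (par T root)^[n] (par T root x) :=
        Function.iterate_succ_apply _ _ _
      rw [hs] at hn
      obtain ⟨h1, h2⟩ := IH hn
      have hdp : dep T root (par T root x) + 1 = dep T root x := (par_spec hT hx).2
      constructor
      · omega
      · have : dep T root x - dep T root y = (dep T root (par T root x) - dep T root y) + 1 := by
          omega
        rw [this, Function.iterate_succ_apply, h2]

lemma desc_dep_le (hT : T.IsTree) {x y : V} (h : Desc T root x y) :
    dep T root y ≤ dep T root x := (desc_norm hT h).1

lemma desc_eq_of_dep_eq (hT : T.IsTree) {x y : V} (h : Desc T root x y)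
    (hd : dep T root x = dep T root y) : x = y := by
  have := (desc_norm hT h).2
  rw [hd, Nat.sub_self] at this
  exact this.symm ▸ rfl

lemma desc_iter (x : V) (i : ℕ) : Desc T root x ((par T root)^[i] x) := ⟨i, rfl⟩

lemma iter_desc_of_le {x y : V} {n : ℕ} (h : (par T root)^[n] x = y) {i : ℕ} (hi : i ≤ n) :
    Desc T root ((par T root)^[i] x) y :=
  ⟨n - i, by rw [← Function.iterate_add_apply, Nat.sub_add_cancel hi, h]⟩

lemma desc_comparable {x x' z : V} (h : Desc T root z x) (h' : Desc T root z x') :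
    Desc T root x x' ∨ Desc T root x' x := by
  obtain ⟨a, ha⟩ := h; obtain ⟨b, hb⟩ := h'
  rcases le_total a b with hab | hab
  · left; exact ⟨b - a, by rw [← ha, ← Function.iterate_add_apply, Nat.sub_add_cancel hab, hb]⟩
  · right; exact ⟨a - b, by rw [← hb, ← Function.iterate_add_apply, Nat.sub_add_cancel hab, ha]⟩

/-- Depth along ancestor chains. -/
lemma dep_iter (hT : T.IsTree) {x y : V} (h : Desc T root x y) {i : ℕ}
    (hi : i ≤ dep T root x - dep T root y) :
    dep T root ((par T root)^[i] x) = dep T root x - i := by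
  induction i with
  | zero => simp
  | succ i IH =>
    have h1 : dep T root ((par T root)^[i] x) = dep T root x - i := IH (by omega)
    have hle := desc_dep_le hT h
    have hne : (par T root)^[i] x ≠ root := by
      intro hr
      rw [hr, dep_root] at h1
      omega
    have := (par_spec hT hne).2
    rw [Function.iterate_succ_apply']
    omega

/-! ### Chain walks -/

/-- The walk from a vertex up its ancestor chain, inside an arbitrary graph `G`
whose relevant edges are present. -/
noncomputable def chainW (G : SimpleGraph V) (T : SimpleGraph V) (root x : V) :
    (n : ℕ) → (∀ i < n, G.Adj ((par T root)^[i] x) ((par T root)^[i+1] x)) →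
      G.Walk x ((par T root)^[n] x)
  | 0, _ => SimpleGraph.Walk.nil
  | n+1, h =>
    (chainW G T root x n (fun i hi => h i (Nat.lt_succ_of_lt hi))).concat
      (h n n.lt_succ_self)

lemma support_chainW (G : SimpleGraph V) (x : V) (n : ℕ) (h) :
    (chainW G T root x n h).support = (List.range (n+1)).map (fun i => (par T root)^[i] x) := by
  induction n with
  | zero => simp [chainW]
  | succ n IH =>
    rw [chainW, SimpleGraph.Walk.support_concat, IH, List.range_succ (n := n+1)]
    simp

lemma edges_chainW (G : SimpleGraph V) (x : V) (n : ℕ) (h) :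
    (chainW G T root x n h).edges =
      (List.range n).map (fun i => s((par T root)^[i] x, (par T root)^[i+1] x)) := by
  induction n with
  | zero => simp [chainW]
  | succ n IH =>
    rw [chainW, SimpleGraph.Walk.edges_concat, IH, List.range_succ (n := n)]
    simp

lemma isPath_chainW (hT : T.IsTree) (G : SimpleGraph V) {x y : V} (hd : Desc T root x y)
    {n : ℕ} (hn : n ≤ dep T root x - dep T root y) (h) :
    (chainW G T root x n h).IsPath := by
  rw [SimpleGraph.Walk.isPath_def, support_chainW]
  refine List.Nodup.map_on ?_ List.nodup_range
  intro i hi j hj hij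
  rw [List.mem_range] at hi hj
  have h1 : dep T root ((par T root)^[i] x) = dep T root x - i := dep_iter hT hd (by omega)
  have h2 : dep T root ((par T root)^[j] x) = dep T root x - j := dep_iter hT hd (by omega)
  have hle := desc_dep_le hT hd
  rw [hij] at h1
  omega

/-! ### Transfer: reachable + descendant gives the chain inside `G` -/

lemma key1 (hT : T.IsTree) {G : SimpleGraph V} (hG : G ≤ T) {x y : V}
    (hr : G.Reachable x y) (hd : Desc T root x y) :
    ∀ i < dep T root x - dep T root y,
      G.Adj ((par T root)^[i] x) ((par T root)^[i+1] x) := by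
  classical
  set n := dep T root x - dep T root y with hn
  have hle := desc_dep_le hT hd
  have hnorm := (desc_norm hT hd).2
  -- T-adjacency along the chain
  have tadj : ∀ i < n, T.Adj ((par T root)^[i] x) ((par T root)^[i+1] x) := by
    intro i hi
    have h1 : dep T root ((par T root)^[i] x) = dep T root x - i := dep_iter hT hd (by omega)
    have hne : (par T root)^[i] x ≠ root := by
      intro hr'
      rw [hr', dep_root] at h1
      have : dep T root y = 0 := by omega
      omega
    have := (par_spec hT hne).1
    rwa [← Function.iterate_succ_apply' (par T root) i x] at this
  -- the T-chain walk, as a path to y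
  have tpath : (chainW T T root x n tadj).IsPath := isPath_chainW hT T hd le_rfl tadj
  set tc : T.Walk x y := (chainW T T root x n tadj).copy rfl hnorm with htc
  have tcpath : tc.IsPath := by rw [htc]; simpa using tpath
  -- the G-path
  obtain ⟨q0⟩ := hr
  set q := q0.bypass with hqdef
  have hqp : q.IsPath := q0.bypass_isPath
  have hedges : ∀ e ∈ q.edges, e ∈ T.edgeSet := fun e he =>
    (SimpleGraph.edgeSet_subset_edgeSet.2 hG) (q.edges_subset_edgeSet he)
  set qT := q.transfer T hedges with hqT
  have hqTp : qT.IsPath := hqp.transfer _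
  have hune := hT.IsAcyclic.path_unique ⟨qT, hqTp⟩ ⟨tc, tcpath⟩
  have heq : qT = tc := congrArg Subtype.val hune
  intro i hi
  have hmem : s((par T root)^[i] x, (par T root)^[i+1] x) ∈ tc.edges := by
    rw [htc, SimpleGraph.Walk.edges_copy, edges_chainW]
    simp only [List.mem_map, List.mem_range]
    exact ⟨i, hi, rfl⟩
  rw [← heq, hqT, SimpleGraph.Walk.edges_transfer] at hmem
  exact q.adj_of_mem_edges hmem

/-! ### chainTo -/

/-- The chain walk from `x` up to an ancestor `y`, inside `G`. -/
noncomputable def chainTo (hT : T.IsTree) {G : SimpleGraph V} (hG : G ≤ T) {x y : V}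
    (hr : G.Reachable x y) (hd : Desc T root x y) : G.Walk x y :=
  (chainW G T root x (dep T root x - dep T root y) (key1 hT hG hr hd)).copy rfl
    (desc_norm hT hd).2

lemma edges_chainTo (hT : T.IsTree) {G : SimpleGraph V} (hG : G ≤ T) {x y : V}
    (hr : G.Reachable x y) (hd : Desc T root x y) {e : Sym2 V} :
    e ∈ (chainTo hT hG hr hd).edges ↔
      ∃ i < dep T root x - dep T root y, e = s((par T root)^[i] x, (par T root)^[i+1] x) := by
  rw [chainTo, SimpleGraph.Walk.edges_copy, edges_chainW]
  simp only [List.mem_map, List.mem_range]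
  constructor
  · rintro ⟨i, hi, rfl⟩; exact ⟨i, hi, rfl⟩
  · rintro ⟨i, hi, rfl⟩; exact ⟨i, hi, rfl⟩

lemma support_chainTo (hT : T.IsTree) {G : SimpleGraph V} (hG : G ≤ T) {x y : V}
    (hr : G.Reachable x y) (hd : Desc T root x y) {z : V} :
    z ∈ (chainTo hT hG hr hd).support ↔
      ∃ i ≤ dep T root x - dep T root y, z = (par T root)^[i] x := by
  rw [chainTo, SimpleGraph.Walk.support_copy, support_chainW]
  simp only [List.mem_map, List.mem_range]
  constructor
  · rintro ⟨i, hi, rfl⟩; exact ⟨i, by omega, rfl⟩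
  · rintro ⟨i, hi, rfl⟩; exact ⟨i, by omega, rfl⟩

lemma isPath_chainTo (hT : T.IsTree) {G : SimpleGraph V} (hG : G ≤ T) {x y : V}
    (hr : G.Reachable x y) (hd : Desc T root x y) : (chainTo hT hG hr hd).IsPath := by
  rw [chainTo]
  simpa using isPath_chainW hT G hd le_rfl _

lemma edges_chainTo_ne_nil (hT : T.IsTree) {G : SimpleGraph V} (hG : G ≤ T) {x y : V}
    (hr : G.Reachable x y) (hd : Desc T root x y) (hxy : dep T root y < dep T root x) :
    (chainTo hT hG hr hd).edges ≠ [] := by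
  intro h
  have : s((par T root)^[0] x, (par T root)^[0+1] x) ∈ (chainTo hT hG hr hd).edges :=
    (edges_chainTo hT hG hr hd).2 ⟨0, by omega, rfl⟩
  rw [h] at this
  simp at this

/-! ### Component roots -/

lemma exists_cRoot (G : SimpleGraph V) (w : V) :
    ∃ r, G.Reachable w r ∧ ∀ z, G.Reachable w z → dep T root r ≤ dep T root z := by
  obtain ⟨r, hr, hmin⟩ := Set.exists_min_image {z | G.Reachable w z} (dep T root)
    (Set.toFinite _) ⟨w, SimpleGraph.Reachable.refl w⟩
  exact ⟨r, hr, fun z hz => hmin z hz⟩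

/-- The root of the component of `w` in `G`: its vertex of minimal depth. -/
noncomputable def cRoot (T : SimpleGraph V) (root : V) (G : SimpleGraph V) (w : V) : V :=
  (exists_cRoot (T := T) (root := root) G w).choose

lemma cRoot_reach (G : SimpleGraph V) (w : V) : G.Reachable w (cRoot T root G w) :=
  (exists_cRoot G w).choose_spec.1

lemma cRoot_min {G : SimpleGraph V} {w z : V} (hz : G.Reachable w z) :
    dep T root (cRoot T root G w) ≤ dep T root z :=
  (exists_cRoot G w).choose_spec.2 z hz

/-- Everything in the component of `w` is a descendant of the component root. -/
lemma key2 (hT : T.IsTree) {G : SimpleGraph V} (hG : G ≤ T) {w x : V}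
    (hx : G.Reachable w x) : Desc T root x (cRoot T root G w) := by
  have aux : ∀ (a c : V) (q : G.Walk a c), G.Reachable w a →
      (∀ z, G.Reachable w z → dep T root c ≤ dep T root z) → Desc T root a c := by
    intro a c q
    induction q with
    | nil => intro _ _; exact desc_refl _
    | @cons u v c' hadj q IH =>
      intro hu hmin
      have hv : G.Reachable w v := hu.trans hadj.reachable
      have hdv := IH hv hmin
      have hTadj : T.Adj u v := hG hadj
      rcases adj_dep hT hTadj with h | h
      · -- v is a child of u
        have hp : par T root v = u := par_unique hT hTadj h
        obtain ⟨m, hm⟩ := hdv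
        cases m with
        | zero =>
          -- then v = c', contradicting minimality of c'
          simp only [Function.iterate_zero, id] at hm
          have := hmin u hu
          rw [← hm] at this
          omega
        | succ m =>
          rw [Function.iterate_succ_apply, hp] at hm
          exact ⟨m, hm⟩
      · -- u is a child of v
        have hp : par T root u = v := par_unique hT hTadj.symm h
        obtain ⟨m, hm⟩ := hdv
        exact ⟨m + 1, by rw [Function.iterate_succ_apply, hp]; exact hm⟩
  obtain ⟨q⟩ : G.Reachable x (cRoot T root G w) := hx.symm.trans (cRoot_reach G w)
  exact aux _ _ q hx (fun z hz => cRoot_min hz)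

lemma cRoot_eq_of (hT : T.IsTree) {G : SimpleGraph V} (hG : G ≤ T) {w r : V}
    (hr : G.Reachable w r) (hmin : ∀ z, G.Reachable w z → dep T root r ≤ dep T root z) :
    cRoot T root G w = r := by
  have h1 : Desc T root r (cRoot T root G w) := key2 hT hG hr
  have h2 : dep T root r ≤ dep T root (cRoot T root G w) := hmin _ (cRoot_reach G w)
  have h3 := desc_dep_le hT h1
  exact (desc_eq_of_dep_eq hT h1 (by omega)).symm

/-! ### Kids and leaves -/

/-- The children of `v` inside `G`. -/
def kids (G T : SimpleGraph V) (root v : V) : Set V := {c | G.Adj v c ∧ par T root c = v}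

/-- The leaves of the component of `w` lying (weakly) below `v`. -/
def lvs (G T : SimpleGraph V) (root w v : V) : Set V :=
  {x | G.Reachable w x ∧ Desc T root x v ∧ kids G T root x = ∅}

/-- The number of leaves of the component of `w` below `v`. -/
noncomputable def L (G T : SimpleGraph V) (root w v : V) : ℕ := (lvs G T root w v).ncard

lemma kid_desc {G : SimpleGraph V} {c v : V} (h : c ∈ kids G T root v) : Desc T root c v :=
  ⟨1, by simpa using h.2⟩

lemma kid_dep' (hT : T.IsTree) {G : SimpleGraph V} (hG : G ≤ T) {c v : V}
    (h : c ∈ kids G T root v) : dep T root c = dep T root v + 1 :=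
  kid_dep hT (hG h.1) h.2

lemma kid_ne {G : SimpleGraph V} {c v : V} (h : c ∈ kids G T root v) : c ≠ v :=
  fun he => (he ▸ h.1).ne rfl

lemma kids_mono {G G' : SimpleGraph V} (h : G' ≤ G) (v : V) :
    kids G' T root v ⊆ kids G T root v := fun c hc => ⟨h hc.1, hc.2⟩

lemma kids_ncard_le (hT : T.IsTree) {G : SimpleGraph V} (hG : G ≤ T) {Δ : ℕ}
    (hdeg : ∀ v : V, (T.neighborSet v).ncard ≤ Δ) (v : V) :
    (kids G T root v).ncard ≤ Δ := by
  refine le_trans (Set.ncard_le_ncard ?_ (Set.toFinite _)) (hdeg v)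
  intro c hc
  exact hG hc.1

/-- If `x` is strictly below `v` in the same component, there is a kid of `v` above `x`. -/
lemma kid_between (hT : T.IsTree) {G : SimpleGraph V} (hG : G ≤ T) {x v : V}
    (hr : G.Reachable x v) (hd : Desc T root x v) (hne : x ≠ v) :
    ∃ c ∈ kids G T root v, Desc T root x c := by
  have hle := desc_dep_le hT hd
  have hlt : dep T root v < dep T root x := by
    rcases Nat.lt_or_ge (dep T root v) (dep T root x) with h | h
    · exact h
    · exact absurd (desc_eq_of_dep_eq hT hd (by omega)) hne
  set n := dep T root x - dep T root v with hn
  have hnorm := (desc_norm hT hd).2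
  have hadj := key1 hT hG hr hd (n - 1) (by omega)
  have hiter : (par T root)^[(n-1)+1] x = v := by
    rw [show (n-1)+1 = n from by omega]; exact hnorm
  refine ⟨(par T root)^[n-1] x, ⟨?_, ?_⟩, desc_iter x (n-1)⟩
  · rw [← hiter]
    exact hadj.symm
  · rw [← hiter, Function.iterate_succ_apply']

/-- Deepest vertex of the component below `x`. -/
lemma exists_deepest {G : SimpleGraph V} {w x : V} (hx : G.Reachable w x) :
    ∃ y, (G.Reachable w y ∧ Desc T root y x) ∧
      ∀ z, G.Reachable w z → Desc T root z x → dep T root z ≤ dep T root y := by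
  obtain ⟨y, hy, hmax⟩ := Set.exists_max_image {z | G.Reachable w z ∧ Desc T root z x}
    (dep T root) (Set.toFinite _) ⟨x, hx, desc_refl x⟩
  exact ⟨y, hy, fun z h1 h2 => hmax z ⟨h1, h2⟩⟩

noncomputable def deepest (T : SimpleGraph V) (root : V) (G : SimpleGraph V) (w x : V)
    (hx : G.Reachable w x) : V :=
  (exists_deepest (T := T) (root := root) hx).choose

lemma deepest_mem_lvs (hT : T.IsTree) {G : SimpleGraph V} (hG : G ≤ T) {w x : V}
    (hx : G.Reachable w x) : deepest T root G w x hx ∈ lvs G T root w x := by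
  unfold deepest
  obtain ⟨⟨h1, h2⟩, h3⟩ := (exists_deepest (T := T) (root := root) hx).choose_spec
  refine ⟨h1, h2, ?_⟩
  rw [Set.eq_empty_iff_forall_notMem]
  intro c hc
  have hcd := kid_dep' hT hG hc
  have hcr : G.Reachable w c := h1.trans hc.1.reachable
  have hcx : Desc T root c x := desc_trans (kid_desc hc) h2
  have := h3 c hcr hcx
  omega

lemma lvs_nonempty (hT : T.IsTree) {G : SimpleGraph V} (hG : G ≤ T) {w x : V}
    (hx : G.Reachable w x) : (lvs G T root w x).Nonempty :=
  ⟨_, deepest_mem_lvs hT hG hx⟩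

lemma L_pos (hT : T.IsTree) {G : SimpleGraph V} (hG : G ≤ T) {w x : V}
    (hx : G.Reachable w x) : 1 ≤ L G T root w x := by
  exact (Set.ncard_pos (Set.toFinite _)).2 (lvs_nonempty hT hG hx)

lemma lvs_mono_cone {G : SimpleGraph V} {w v v' : V} (hd : Desc T root v v') :
    lvs G T root w v ⊆ lvs G T root w v' :=
  fun x hx => ⟨hx.1, desc_trans hx.2.1 hd, hx.2.2⟩

lemma L_mono_cone {G : SimpleGraph V} {w v v' : V} (hd : Desc T root v v') :
    L G T root w v ≤ L G T root w v' :=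
  Set.ncard_le_ncard (lvs_mono_cone hd) (Set.toFinite _)

/-- Two distinct leaves of the same component are incomparable. -/
lemma lvs_incomp (hT : T.IsTree) {G : SimpleGraph V} (hG : G ≤ T) {w v x x' : V}
    (hx : x ∈ lvs G T root w v) (hx' : x' ∈ lvs G T root w v) (hd : Desc T root x x') :
    x = x' := by
  by_contra hne
  obtain ⟨c, hc, -⟩ := kid_between hT hG (hx.1.symm.trans hx'.1) hd hne
  rw [hx'.2.2] at hc
  exact hc

/-- Monotonicity of leaf counts under shrinking of the graph/component. -/
lemma L_mono (hT : T.IsTree) {G G' : SimpleGraph V} (hG : G ≤ T) (hG' : G' ≤ G)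
    {w w' : V} (hww' : G.Reachable w w') (v : V) :
    L G' T root w' v ≤ L G T root w v := by
  classical
  have hreach : ∀ x ∈ lvs G' T root w' v, G.Reachable w x := fun x hx =>
    hww'.trans ((hx.1).mono hG')
  have hG'T : G' ≤ T := le_trans hG' hG
  set f : V → V := fun x => if h : G.Reachable w x then deepest T root G w x h else x with hf
  refine Set.ncard_le_ncard_of_injOn f ?_ ?_ (Set.toFinite _)
  · intro x hx
    have hgx : G.Reachable w x := hreach x hx
    have := deepest_mem_lvs (root := root) hT hG hgx
    rw [hf]; simp only [dif_pos hgx]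
    exact ⟨this.1, desc_trans this.2.1 hx.2.1, this.2.2⟩
  · intro x hx x' hx' heq
    have hgx : G.Reachable w x := hreach x hx
    have hgx' : G.Reachable w x' := hreach x' hx'
    rw [hf] at heq; simp only [dif_pos hgx, dif_pos hgx'] at heq
    have d1 : Desc T root (deepest T root G w x hgx) x :=
      (deepest_mem_lvs (root := root) hT hG hgx).2.1
    have d2 : Desc T root (deepest T root G w x' hgx') x' :=
      (deepest_mem_lvs (root := root) hT hG hgx').2.1
    rw [heq] at d1
    rcases desc_comparable d1 d2 with h | h
    · exact lvs_incomp hT hG'T hx hx' h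
    · exact (lvs_incomp hT hG'T hx' hx h).symm

/-! ### Preservation lemmas: deleting edges away from a cone -/

lemma cone_reach_pres (hT : T.IsTree) {G : SimpleGraph V} (hG : G ≤ T) {E : Set (Sym2 V)}
    {w h x : V} (hE : ∀ a b : V, s(a, b) ∈ E → ¬ Desc T root a h)
    (hh : G.Reachable w h) (hx : G.Reachable w x) (hdx : Desc T root x h) :
    (G.deleteEdges E).Reachable h x := by
  have hadj := key1 hT hG (hx.symm.trans hh) hdx
  have hnorm := (desc_norm hT hdx).2
  set n := dep T root x - dep T root h with hn
  have hadj' : ∀ i < n, (G.deleteEdges E).Adj ((par T root)^[i] x) ((par T root)^[i+1] x) := by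
    intro i hi
    rw [SimpleGraph.deleteEdges_adj]
    refine ⟨hadj i hi, fun hmem => ?_⟩
    exact hE _ _ hmem (iter_desc_of_le hnorm (le_of_lt hi))
  have : (G.deleteEdges E).Reachable x ((par T root)^[n] x) :=
    ⟨chainW (G.deleteEdges E) T root x n hadj'⟩
  rw [hnorm] at this
  exact this.symm

lemma kids_pres (hT : T.IsTree) {G : SimpleGraph V} {E : Set (Sym2 V)} {h x : V}
    (hE : ∀ a b : V, s(a, b) ∈ E → ¬ Desc T root a h) (hdx : Desc T root x h) :
    kids (G.deleteEdges E) T root x = kids G T root x := by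
  apply Set.eq_of_subset_of_subset (kids_mono (SimpleGraph.deleteEdges_le E) x)
  intro c hc
  refine ⟨?_, hc.2⟩
  rw [SimpleGraph.deleteEdges_adj]
  refine ⟨hc.1, fun hmem => ?_⟩
  exact hE _ _ hmem hdx

lemma lvs_pres (hT : T.IsTree) {G : SimpleGraph V} (hG : G ≤ T) {E : Set (Sym2 V)}
    {w w' h : V} (hE : ∀ a b : V, s(a, b) ∈ E → ¬ Desc T root a h)
    (hww' : G.Reachable w w') (hh : (G.deleteEdges E).Reachable w' h) :
    L (G.deleteEdges E) T root w' h = L G T root w h := by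
  have hwh : G.Reachable w h := hww'.trans (hh.mono (SimpleGraph.deleteEdges_le E))
  refine le_antisymm (L_mono hT hG (SimpleGraph.deleteEdges_le E) hww' h) ?_
  refine Set.ncard_le_ncard ?_ (Set.toFinite _)
  intro x hx
  refine ⟨hh.trans (cone_reach_pres hT hG hE hwh hx.1 hx.2.1), hx.2.1, ?_⟩
  rw [kids_pres hT hE hx.2.1]
  exact hx.2.2

/-! ### Heavy vertices -/

/-- `v` is heavy: it is in the component of `w` and has more than `t` leaves below it. -/
def Heavy (G T : SimpleGraph V) (root w : V) (t : ℕ) (v : V) : Prop :=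
  G.Reachable w v ∧ t < L G T root w v

/-- minimal heavy vertex: heavy with no heavy kid -/
def MinHv (G T : SimpleGraph V) (root w : V) (t : ℕ) (v : V) : Prop :=
  Heavy G T root w t v ∧ ∀ c ∈ kids G T root v, ¬ Heavy G T root w t c

lemma exists_minHv (hT : T.IsTree) {G : SimpleGraph V} (hG : G ≤ T) {w : V} {t : ℕ} {v : V}
    (hv : Heavy G T root w t v) : ∃ m, MinHv G T root w t m ∧ Desc T root m v := by
  have main : ∀ (N : ℕ) (v : V), Fintype.card V - dep T root v ≤ N →
      Heavy G T root w t v → ∃ m, MinHv G T root w t m ∧ Desc T root m v := by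
    intro N
    induction N with
    | zero =>
      intro v hN hv
      exfalso
      obtain ⟨p, hp, hl⟩ := exists_dist_path (root := root) hT v
      have := hp.length_lt
      unfold dep at *
      omega
    | succ N IH =>
      intro v hN hv
      by_cases hk : ∀ c ∈ kids G T root v, ¬ Heavy G T root w t c
      · exact ⟨v, ⟨hv, hk⟩, desc_refl v⟩
      · push_neg at hk
        obtain ⟨c, hc, hch⟩ := hk
        have hdc : dep T root c = dep T root v + 1 := kid_dep' hT hG hc
        obtain ⟨m, hm, hmd⟩ := IH c (by omega) hch
        exact ⟨m, hm, desc_trans hmd (kid_desc hc)⟩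
  exact main (Fintype.card V - dep T root v) v le_rfl hv

/-- Distinct minimal heavy vertices are incomparable. -/
lemma minHv_incomp (hT : T.IsTree) {G : SimpleGraph V} (hG : G ≤ T) {w : V} {t : ℕ}
    {v v' : V} (h : MinHv G T root w t v) (h' : MinHv G T root w t v')
    (hd : Desc T root v v') : v = v' := by
  by_contra hne
  obtain ⟨c, hc, hcd⟩ := kid_between hT hG (h.1.1.symm.trans h'.1.1) hd hne
  refine h'.2 c hc ⟨h'.1.1.trans hc.1.reachable, ?_⟩
  exact lt_of_lt_of_le h.1.2 (L_mono_cone hcd)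

/-- Counting bound on minimal heavy vertices. -/
lemma minHv_count (hT : T.IsTree) {G : SimpleGraph V} (hG : G ≤ T) {w : V} {t : ℕ} :
    {v | MinHv G T root w t v}.ncard * (t + 1) ≤ L G T root w (cRoot T root G w) := by
  classical
  set M := {v | MinHv G T root w t v} with hM
  have hMfin : M.Finite := Set.toFinite _
  set Mf := hMfin.toFinset with hMf
  have hdisj : ∀ v ∈ Mf, ∀ v' ∈ Mf, v ≠ v' →
      Disjoint ((lvs G T root w v).toFinset) ((lvs G T root w v').toFinset) := by
    intro v hv v' hv' hne
    rw [Finset.disjoint_left]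
    intro x hx hx'
    rw [Set.mem_toFinset] at hx hx'
    rw [hMf, Set.Finite.mem_toFinset] at hv hv'
    rcases desc_comparable hx.2.1 hx'.2.1 with h | h
    · exact hne (minHv_incomp hT hG hv hv' h)
    · exact hne (minHv_incomp hT hG hv' hv h).symm
  have hsub : Mf.biUnion (fun v => (lvs G T root w v).toFinset) ⊆
      (lvs G T root w (cRoot T root G w)).toFinset := by
    intro x hx
    rw [Finset.mem_biUnion] at hx
    obtain ⟨v, hv, hx⟩ := hx
    rw [Set.mem_toFinset] at hx ⊢
    exact ⟨hx.1, key2 hT hG hx.1, hx.2.2⟩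
  have hcard := Finset.card_biUnion hdisj
  have hsum : ∀ v ∈ Mf, t + 1 ≤ ((lvs G T root w v).toFinset).card := by
    intro v hv
    rw [hMf, Set.Finite.mem_toFinset] at hv
    have : t < L G T root w v := hv.1.2
    rw [L, Set.ncard_eq_toFinset_card'] at this
    omega
  calc M.ncard * (t+1) = Mf.card * (t+1) := by
        rw [hMf, Set.ncard_eq_toFinset_card _ hMfin]
    _ ≤ ∑ v ∈ Mf, ((lvs G T root w v).toFinset).card := by
        have := Finset.card_nsmul_le_sum Mf (fun v => (lvs G T root w v).toFinset.card)
          (t+1) hsum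
        simpa [smul_eq_mul, mul_comm] using this
    _ = (Mf.biUnion (fun v => (lvs G T root w v).toFinset)).card := hcard.symm
    _ ≤ ((lvs G T root w (cRoot T root G w)).toFinset).card := Finset.card_le_card hsub
    _ = L G T root w (cRoot T root G w) := by
        rw [L, Set.ncard_eq_toFinset_card']

/-! ### Chain separation -/

/-- After deleting the edges of an ancestor chain, distinct chain vertices are separated. -/
lemma chain_sep (hT : T.IsTree) {G : SimpleGraph V} (hG : G ≤ T) {v r : V}
    (hr : G.Reachable v r) (hd : Desc T root v r) {a b : V}
    (ha : ∃ i ≤ dep T root v - dep T root r, a = (par T root)^[i] v)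
    (hb : ∃ j ≤ dep T root v - dep T root r, b = (par T root)^[j] v)
    (hreach : (G.deleteEdges {ed | ed ∈ (chainTo hT hG hr hd).edges}).Reachable a b) :
    a = b := by
  set n := dep T root v - dep T root r with hn
  set E : Set (Sym2 V) := {ed | ed ∈ (chainTo hT hG hr hd).edges} with hE
  have key : ∀ i j : ℕ, i ≤ n → j ≤ n → i < j →
      ¬ (G.deleteEdges E).Reachable ((par T root)^[i] v) ((par T root)^[j] v) := by
    intro i j hi hj hij hreach'
    set x := (par T root)^[i] v with hx
    set y := (par T root)^[j] v with hy
    have hdxy : Desc T root x y := by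
      rw [hx, hy]
      exact ⟨j - i, by rw [← Function.iterate_add_apply, Nat.sub_add_cancel (le_of_lt hij)]⟩
    have hdnorm := (desc_norm hT hd).2
    have hdep := desc_dep_le hT hd
    have hdx : dep T root x = dep T root v - i := dep_iter hT hd (by omega)
    have hdy : dep T root y = dep T root v - j := dep_iter hT hd (by omega)
    have hlty : dep T root y < dep T root x := by omega
    have hadj := key1 hT (le_trans (SimpleGraph.deleteEdges_le E) hG) hreach' hdxy 0
      (by omega)
    simp only [Function.iterate_zero, id, Function.iterate_one] at hadj
    have hadj := hadj
    rw [SimpleGraph.deleteEdges_adj] at hadj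
    refine hadj.2 ?_
    rw [hE]
    show s(x, par T root x) ∈ (chainTo hT hG hr hd).edges
    rw [edges_chainTo]
    refine ⟨i, by omega, ?_⟩
    rw [hx, Function.iterate_succ_apply']
  obtain ⟨i, hi, rfl⟩ := ha
  obtain ⟨j, hj, rfl⟩ := hb
  rcases lt_trichotomy i j with h | h | h
  · exact absurd hreach (key i j hi hj h)
  · rw [h]
  · exact absurd hreach.symm (key j i hj hi h)

/-! ### Star mode -/

lemma heavy_cRoot {G : SimpleGraph V} {w : V} {t : ℕ}
    (h : ¬ L G T root w (cRoot T root G w) ≤ t) : Heavy G T root w t (cRoot T root G w) :=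
  ⟨cRoot_reach G w, by omega⟩

lemma kid_reach {G : SimpleGraph V} {w v c : V} (hv : G.Reachable w v)
    (hc : c ∈ kids G T root v) : G.Reachable w c := hv.trans hc.1.reachable

lemma not_heavy_le {G : SimpleGraph V} {w : V} {t : ℕ} {c : V} (hr : G.Reachable w c)
    (h : ¬ Heavy G T root w t c) : L G T root w c ≤ t := by
  by_contra hlt
  exact h ⟨hr, by omega⟩

/-- a heavy component root with no heavy vertex besides itself has two kids -/
lemma star_two_kids (hT : T.IsTree) {G : SimpleGraph V} (hG : G ≤ T) {w : V} {t : ℕ}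
    (ht : 1 ≤ t) (hr : Heavy G T root w t (cRoot T root G w))
    (hlight : ∀ c ∈ kids G T root (cRoot T root G w), L G T root w c ≤ t) :
    ∃ c1 ∈ kids G T root (cRoot T root G w), ∃ c2 ∈ kids G T root (cRoot T root G w),
      c1 ≠ c2 := by
  by_contra hcon
  push_neg at hcon
  set r := cRoot T root G w with hrdef
  rcases Set.eq_empty_or_nonempty (kids G T root r) with hemp | ⟨c, hc⟩
  · have hsub : lvs G T root w r ⊆ {r} := by
      intro x hx
      rcases eq_or_ne x r with rfl | hne
      · rfl
      · obtain ⟨c, hc, -⟩ := kid_between hT hG (hx.1.symm.trans (cRoot_reach G w)) hx.2.1 hne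
        rw [hemp] at hc
        exact absurd hc (Set.notMem_empty c)
    have : L G T root w r ≤ 1 := by
      refine le_trans (Set.ncard_le_ncard hsub (Set.toFinite _)) ?_
      simp
    have := hr.2
    omega
  · have hsub : lvs G T root w r ⊆ lvs G T root w c := by
      intro x hx
      have hne : x ≠ r := by
        rintro rfl
        rw [hx.2.2] at hc
        exact absurd hc (Set.notMem_empty c)
      obtain ⟨c', hc', hd'⟩ := kid_between hT hG (hx.1.symm.trans (cRoot_reach G w)) hx.2.1 hne
      rw [hcon c' hc' c hc] at hd'
      exact ⟨hx.1, hd', hx.2.2⟩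
    have h1 : L G T root w r ≤ L G T root w c :=
      Set.ncard_le_ncard hsub (Set.toFinite _)
    have h2 := hlight c hc
    have := hr.2
    omega

/-- Every nonroot vertex of the component lies below some kid of the root. -/
lemma below_kid (hT : T.IsTree) {G : SimpleGraph V} (hG : G ≤ T) {w x : V}
    (hx : G.Reachable w x) (hne : x ≠ cRoot T root G w) :
    ∃ c ∈ kids G T root (cRoot T root G w), Desc T root x c :=
  kid_between hT hG (hx.symm.trans (cRoot_reach G w)) (key2 hT hG hx) hne

/-! ### The potential function -/

noncomputable def mu (T : SimpleGraph V) (root : V) (G : SimpleGraph V) (w : V)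
    (t Δ : ℕ) : ℕ :=
  if L G T root w (cRoot T root G w) ≤ t then 0
  else if ∀ x, Heavy G T root w t x → x = cRoot T root G w then
    ((kids G T root (cRoot T root G w)).ncard + 1) / 2
  else {v | MinHv G T root w t v}.ncard + (Δ + 1) / 2


/-- Base case: a component with at most one leaf is wiped out in one move. -/
lemma outer_base (hT : T.IsTree) {G : SimpleGraph V} (hG : G ≤ T) {w : V}
    (hL : L G T root w (cRoot T root G w) ≤ 1) (n : ℕ) : PathDepthLE G w (n + 1) := by
  classical
  set r := cRoot T root G w with hrdef
  have hwr : G.Reachable w r := cRoot_reach G w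
  set x : V := deepest T root G w r hwr with hxdef
  have hxl : x ∈ lvs G T root w r := deepest_mem_lvs hT hG hwr
  have huniq : ∀ y ∈ lvs G T root w r, y = x := by
    intro y hy
    have h2 : (lvs G T root w r).ncard ≤ 1 := hL
    rw [Set.ncard_le_one_iff (Set.toFinite _)] at h2
    exact h2 hy hxl
  -- every vertex of the component is on the chain from x to r
  have hmem_chain : ∀ y, G.Reachable w y →
      ∃ i ≤ dep T root x - dep T root r, y = (par T root)^[i] x := by
    intro y hy
    have hdyr : Desc T root y r := key2 hT hG hy
    have hdeep : deepest T root G w y hy ∈ lvs G T root w y := deepest_mem_lvs hT hG hy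
    have hdeep_r : deepest T root G w y hy ∈ lvs G T root w r :=
      ⟨hdeep.1, key2 hT hG hdeep.1, hdeep.2.2⟩
    have hx_eq : deepest T root G w y hy = x := huniq _ hdeep_r
    have hdxy : Desc T root x y := hx_eq ▸ hdeep.2.1
    have h1 := desc_dep_le hT hdxy
    have h2 := desc_dep_le hT hdyr
    refine ⟨dep T root x - dep T root y, by omega, ((desc_norm hT hdxy).2).symm⟩
  rcases eq_or_ne x r with hxr | hxr
  · -- the component is a single vertex
    refine PathDepthLE.single G w _ ?_
    intro z hz
    have hzx := hmem_chain z hz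
    have hwx := hmem_chain w (SimpleGraph.Reachable.refl w)
    rw [hxr] at hzx hwx
    obtain ⟨i, hi, hzi⟩ := hzx
    obtain ⟨j, hj, hwj⟩ := hwx
    simp only [Nat.sub_self, Nat.le_zero] at hi hj
    rw [hzi, hwj, hi, hj]
  · -- delete the whole chain
    have hrx : G.Reachable x r := hxl.1.symm.trans hwr
    have hdx : Desc T root x r := hxl.2.1
    have hdep_lt : dep T root r < dep T root x := by
      have h1 := desc_dep_le hT hdx
      rcases Nat.lt_or_ge (dep T root r) (dep T root x) with h | h
      · exact h
      · exact absurd (desc_eq_of_dep_eq hT hdx (by omega)) hxr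
    refine PathDepthLE.step G w n x r (chainTo hT hG hrx hdx) (isPath_chainTo hT hG hrx hdx)
      (edges_chainTo_ne_nil hT hG hrx hdx hdep_lt) hxl.1 ?_
    intro w' hw'
    refine PathDepthLE.single _ w' _ ?_
    intro z hz
    have hzG : G.Reachable w z :=
      hw'.trans (hz.mono (SimpleGraph.deleteEdges_le _))
    exact chain_sep hT hG hrx hdx (hmem_chain z hzG) (hmem_chain w' hw') hz.symm

/-! ### The inner (single phase) induction -/

lemma inner (hT : T.IsTree) {Δ : ℕ} (hΔ : 2 ≤ Δ)
    (hdeg : ∀ v : V, (T.neighborSet v).ncard ≤ Δ) (k : ℕ)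
    (IH : ∀ G : SimpleGraph V, G ≤ T → ∀ w : V,
      L G T root w (cRoot T root G w) ≤ Δ ^ k → PathDepthLE G w (2 * Δ * (k + 1))) :
    ∀ (j : ℕ) (G : SimpleGraph V), G ≤ T → ∀ w : V,
      L G T root w (cRoot T root G w) ≤ Δ ^ (k + 1) →
      mu T root G w (Δ ^ k) Δ ≤ j →
      PathDepthLE G w (j + 2 * Δ * (k + 1)) := by
  have ht1 : 1 ≤ Δ ^ k := Nat.one_le_pow _ _ (by omega)
  intro j
  induction j with
  | zero =>
    intro G hG w hinv hmu
    by_cases hlight : L G T root w (cRoot T root G w) ≤ Δ ^ k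
    · exact (IH G hG w hlight).mono (by omega)
    · exfalso
      rw [mu, if_neg hlight] at hmu
      split_ifs at hmu with hstar
      · -- star mode: at least one kid
        have hheavy := heavy_cRoot (T := T) (root := root) hlight
        have hkl : ∀ c ∈ kids G T root (cRoot T root G w),
            L G T root w c ≤ Δ ^ k := by
          intro c hc
          exact not_heavy_le (kid_reach (cRoot_reach G w) hc)
            (fun hh => absurd (hstar c hh) (kid_ne hc))
        obtain ⟨c1, hc1, c2, hc2, hne⟩ := star_two_kids hT hG ht1 hheavy hkl
        have : 1 ≤ (kids G T root (cRoot T root G w)).ncard :=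
          (Set.ncard_pos (Set.toFinite _)).2 ⟨c1, hc1⟩
        omega
      · omega
  | succ j jIH =>
    intro G hG w hinv hmu
    by_cases hlight : L G T root w (cRoot T root G w) ≤ Δ ^ k
    · exact (IH G hG w hlight).mono (by omega)
    have hheavy := heavy_cRoot (T := T) (root := root) hlight
    by_cases hstar : ∀ x, Heavy G T root w (Δ ^ k) x → x = cRoot T root G w
    · -- STAR ROUND
      have hwr : G.Reachable w (cRoot T root G w) := cRoot_reach G w
      have hkl : ∀ c ∈ kids G T root (cRoot T root G w), L G T root w c ≤ Δ ^ k := by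
        intro c hc
        exact not_heavy_le (kid_reach hwr hc) (fun hh => absurd (hstar c hh) (kid_ne hc))
      obtain ⟨c1, hc1, c2, hc2, hcne⟩ := star_two_kids hT hG ht1 hheavy hkl
      have hrc1 : G.Reachable w c1 := kid_reach hwr hc1
      have hrc2 : G.Reachable w c2 := kid_reach hwr hc2
      have hl1 := deepest_mem_lvs (root := root) hT hG hrc1
      have hl2 := deepest_mem_lvs (root := root) hT hG hrc2
      set l1 := deepest T root G w c1 hrc1
      set l2 := deepest T root G w c2 hrc2
      have hdepc1 : dep T root c1 = dep T root (cRoot T root G w) + 1 := kid_dep' hT hG hc1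
      have hdepc2 : dep T root c2 = dep T root (cRoot T root G w) + 1 := kid_dep' hT hG hc2
      have hd1r : Desc T root l1 (cRoot T root G w) := desc_trans hl1.2.1 (kid_desc hc1)
      have hd2r : Desc T root l2 (cRoot T root G w) := desc_trans hl2.2.1 (kid_desc hc2)
      have hr1 : G.Reachable l1 (cRoot T root G w) := hl1.1.symm.trans hwr
      have hr2 : G.Reachable l2 (cRoot T root G w) := hl2.1.symm.trans hwr
      set q1 := chainTo hT hG hr1 hd1r with hq1def
      set q2 := chainTo hT hG hr2 hd2r with hq2def
      have hdl1 : dep T root c1 ≤ dep T root l1 := desc_dep_le hT hl1.2.1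
      have hdl2 : dep T root c2 ≤ dep T root l2 := desc_dep_le hT hl2.2.1
      set n1 := dep T root l1 - dep T root (cRoot T root G w) with hn1
      set n2 := dep T root l2 - dep T root (cRoot T root G w) with hn2
      have hn1pos : 1 ≤ n1 := by omega
      have hn2pos : 1 ≤ n2 := by omega
      -- the support of each chain away from the root lies in the respective kid's cone
      have hcone1 : ∀ z ∈ q1.support, z ≠ cRoot T root G w → Desc T root z c1 := by
        intro z hz hzne
        rw [hq1def, support_chainTo] at hz
        obtain ⟨i, hi, rfl⟩ := hz
        have hnorm1 := (desc_norm hT hl1.2.1).2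
        have hin : i ≤ dep T root l1 - dep T root c1 := by
          rcases Nat.lt_or_ge i n1 with h | h
          · omega
          · exfalso
            have : i = n1 := by omega
            rw [this] at hzne
            exact hzne ((desc_norm hT hd1r).2)
        exact iter_desc_of_le hnorm1 hin
      have hcone2 : ∀ z ∈ q2.support, z ≠ cRoot T root G w → Desc T root z c2 := by
        intro z hz hzne
        rw [hq2def, support_chainTo] at hz
        obtain ⟨i, hi, rfl⟩ := hz
        have hnorm2 := (desc_norm hT hl2.2.1).2
        have hin : i ≤ dep T root l2 - dep T root c2 := by
          rcases Nat.lt_or_ge i n2 with h | h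
          · omega
          · exfalso
            have : i = n2 := by omega
            rw [this] at hzne
            exact hzne ((desc_norm hT hd2r).2)
        exact iter_desc_of_le hnorm2 hin
      set p := q1.append q2.reverse with hpdef
      have hsupp2 : q2.reverse.support = cRoot T root G w :: q2.reverse.support.tail :=
        SimpleGraph.Walk.support_eq_cons _
      have hnodup2 : q2.reverse.support.Nodup :=
        ((isPath_chainTo hT hG hr2 hd2r).reverse).support_nodup
      have hpk : p.IsPath := by
        rw [SimpleGraph.Walk.isPath_def, hpdef, SimpleGraph.Walk.support_append,
          List.nodup_append]
        refine ⟨(isPath_chainTo hT hG hr1 hd1r).support_nodup, ?_, ?_⟩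
        · rw [hsupp2] at hnodup2
          exact hnodup2.of_cons
        · rintro z hz1 _ hz2 rfl
          have hzr : z ≠ cRoot T root G w := by
            intro hzr
            rw [hsupp2, List.nodup_cons] at hnodup2
            rw [hzr] at hz2
            exact hnodup2.1 hz2
          have hz2' : z ∈ q2.support := by
            have : z ∈ q2.reverse.support := List.mem_of_mem_tail hz2
            rwa [SimpleGraph.Walk.support_reverse, List.mem_reverse] at this
          have hd1 := hcone1 z hz1 hzr
          have hd2 := hcone2 z hz2' hzr
          rcases desc_comparable hd1 hd2 with h | h
          · exact hcne (desc_eq_of_dep_eq hT h (by omega))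
          · exact hcne (desc_eq_of_dep_eq hT h (by omega)).symm
      have hpedges : p.edges ≠ [] := by
        rw [hpdef, SimpleGraph.Walk.edges_append]
        intro h
        exact (edges_chainTo_ne_nil hT hG hr1 hd1r (by omega)) (List.append_eq_nil_iff.mp h).1
      -- the two root edges are deleted
      have hnorm1 := (desc_norm hT hl1.2.1).2
      have hnorm2 := (desc_norm hT hl2.2.1).2
      have hm1 : s(c1, cRoot T root G w) ∈ q1.edges := by
        rw [hq1def, edges_chainTo]
        refine ⟨n1 - 1, by omega, ?_⟩
        have h1 : (par T root)^[n1 - 1] l1 = c1 := by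
          rw [show n1 - 1 = dep T root l1 - dep T root c1 from by omega]
          exact hnorm1
        have h2 : (par T root)^[(n1 - 1) + 1] l1 = cRoot T root G w := by
          rw [show (n1 - 1) + 1 = n1 from by omega]
          exact (desc_norm hT hd1r).2
        rw [h1, h2]
      have hm2 : s(c2, cRoot T root G w) ∈ q2.edges := by
        rw [hq2def, edges_chainTo]
        refine ⟨n2 - 1, by omega, ?_⟩
        have h1 : (par T root)^[n2 - 1] l2 = c2 := by
          rw [show n2 - 1 = dep T root l2 - dep T root c2 from by omega]
          exact hnorm2
        have h2 : (par T root)^[(n2 - 1) + 1] l2 = cRoot T root G w := by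
          rw [show (n2 - 1) + 1 = n2 from by omega]
          exact (desc_norm hT hd2r).2
        rw [h1, h2]
      have harith : j + 1 + 2 * Δ * (k + 1) = (j + 2 * Δ * (k + 1)) + 1 := by omega
      rw [harith]
      refine PathDepthLE.step G w _ l1 l2 p hpk hpedges hl1.1 ?_
      intro w' hww'
      set G' := G.deleteEdges {ed | ed ∈ p.edges} with hG'def
      have hG'le : G' ≤ G := SimpleGraph.deleteEdges_le _
      have hG'T : G' ≤ T := le_trans hG'le hG
      have hinv' : ∀ z : V, L G' T root w' z ≤ L G T root w z :=
        fun z => L_mono hT hG hG'le hww' z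
      by_cases hr' : G'.Reachable w' (cRoot T root G w)
      · -- the new component still contains the old root
        have hroot' : cRoot T root G' w' = cRoot T root G w := by
          refine cRoot_eq_of hT hG'T hr' ?_
          intro z hz
          exact cRoot_min (hww'.trans (hz.mono hG'le))
        refine jIH G' hG'T w' ?_ ?_
        · rw [hroot']
          exact le_trans (hinv' _) hinv
        · rw [mu, hroot']
          by_cases hl' : L G' T root w' (cRoot T root G w) ≤ Δ ^ k
          · rw [if_pos hl']; omega
          rw [if_neg hl']
          have hstar' : ∀ x, Heavy G' T root w' (Δ ^ k) x → x = cRoot T root G w := by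
            intro x hx
            by_contra hxne
            have hxG : G.Reachable w x := hww'.trans (hx.1.mono hG'le)
            obtain ⟨c, hc, hdc⟩ := below_kid hT hG hxG hxne
            have : L G' T root w' x ≤ Δ ^ k :=
              le_trans (hinv' x) (le_trans (L_mono_cone hdc) (hkl c hc))
            have := hx.2
            omega
          rw [if_pos hstar']
          -- the kid count dropped by (at least) two
          have hksub : kids G' T root (cRoot T root G w) ⊆
              kids G T root (cRoot T root G w) \ {c1, c2} := by
            intro c hc
            refine ⟨kids_mono hG'le _ hc, ?_⟩
            intro hmem
            have hcadj := hc.1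
            rw [hG'def, SimpleGraph.deleteEdges_adj] at hcadj
            refine hcadj.2 ?_
            show s(cRoot T root G w, c) ∈ p.edges
            rw [hpdef, SimpleGraph.Walk.edges_append, List.mem_append]
            rcases hmem with rfl | rfl
            · left; rw [Sym2.eq_swap]; exact hm1
            · right; rw [SimpleGraph.Walk.edges_reverse, List.mem_reverse, Sym2.eq_swap]
              exact hm2
          have hpair : ({c1, c2} : Set V) ⊆ kids G T root (cRoot T root G w) := by
            intro c hc; rcases hc with rfl | rfl
            · exact hc1
            · exact hc2
          have h2le : 2 ≤ (kids G T root (cRoot T root G w)).ncard := by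
            have := Set.ncard_le_ncard hpair (Set.toFinite _)
            rwa [Set.ncard_pair hcne] at this
          have hdiff : (kids G T root (cRoot T root G w) \ {c1, c2}).ncard =
              (kids G T root (cRoot T root G w)).ncard - 2 := by
            rw [Set.ncard_diff hpair (Set.toFinite _), Set.ncard_pair hcne]
          have hle' : (kids G' T root (cRoot T root G w)).ncard ≤
              (kids G T root (cRoot T root G w)).ncard - 2 := by
            rw [← hdiff]
            exact Set.ncard_le_ncard hksub (Set.toFinite _)
          -- the old potential
          rw [mu, if_neg hlight, if_pos hstar] at hmu
          omega
      · -- the new component lies inside a kid's subtree: it is light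
        have hρr : G.Reachable w (cRoot T root G' w') :=
          hww'.trans ((cRoot_reach G' w').mono hG'le)
        have hρne : cRoot T root G' w' ≠ cRoot T root G w := by
          intro h
          exact hr' (h ▸ cRoot_reach G' w')
        obtain ⟨c, hc, hdc⟩ := below_kid hT hG hρr hρne
        have hlightρ : L G' T root w' (cRoot T root G' w') ≤ Δ ^ k :=
          le_trans (hinv' _) (le_trans (L_mono_cone hdc) (hkl c hc))
        refine jIH G' hG'T w' ?_ ?_
        · exact le_trans hlightρ (Nat.pow_le_pow_right (by omega) (by omega))
        · rw [mu, if_pos hlightρ]; omega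
    · -- GENERAL ROUND
      push_neg at hstar
      obtain ⟨v0, hv0, hv0ne⟩ := hstar
      obtain ⟨v, hvmin, hvd⟩ := exists_minHv hT hG hv0
      have hwr : G.Reachable w (cRoot T root G w) := cRoot_reach G w
      have hv0r : Desc T root v0 (cRoot T root G w) := key2 hT hG hv0.1
      have hv0dep : dep T root (cRoot T root G w) < dep T root v0 := by
        have h1 := desc_dep_le hT hv0r
        rcases Nat.lt_or_ge (dep T root (cRoot T root G w)) (dep T root v0) with h | h
        · exact h
        · exact absurd (desc_eq_of_dep_eq hT hv0r (by omega)) hv0ne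
      have hvdep : dep T root v0 ≤ dep T root v := desc_dep_le hT hvd
      have hrv : G.Reachable v (cRoot T root G w) := hvmin.1.1.symm.trans hwr
      have hdvr : Desc T root v (cRoot T root G w) := key2 hT hG hvmin.1.1
      set n := dep T root v - dep T root (cRoot T root G w) with hn
      have hdvr_le := desc_dep_le hT hdvr
      have hnpos : 1 ≤ n := by omega
      have hnormv := (desc_norm hT hdvr).2
      have harith : j + 1 + 2 * Δ * (k + 1) = (j + 2 * Δ * (k + 1)) + 1 := by omega
      rw [harith]
      set q := chainTo hT hG hrv hdvr with hqdef
      refine PathDepthLE.step G w _ v (cRoot T root G w) q (isPath_chainTo hT hG hrv hdvr)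
        (edges_chainTo_ne_nil hT hG hrv hdvr (by omega)) hvmin.1.1 ?_
      intro w' hww'
      set G' := G.deleteEdges {ed | ed ∈ q.edges} with hG'def
      have hG'le : G' ≤ G := SimpleGraph.deleteEdges_le _
      have hG'T : G' ≤ T := le_trans hG'le hG
      have hinv' : ∀ z : V, L G' T root w' z ≤ L G T root w z :=
        fun z => L_mono hT hG hG'le hww' z
      set CS : V → Prop := fun z => ∃ i ≤ n, z = (par T root)^[i] v with hCSdef
      have hCSr : CS (cRoot T root G w) := ⟨n, le_rfl, hnormv.symm⟩
      have hCSv : CS v := ⟨0, by omega, rfl⟩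
      have hCSup : ∀ z h', CS z → Desc T root z h' → G.Reachable w h' → CS h' := by
        rintro z h' ⟨a, ha, rfl⟩ hdesc hreach
        have hdvh : Desc T root v h' := desc_trans (desc_iter v a) hdesc
        have hdh := desc_dep_le hT hdvh
        have hrh : dep T root (cRoot T root G w) ≤ dep T root h' := cRoot_min hreach
        exact ⟨dep T root v - dep T root h', by omega, ((desc_norm hT hdvh).2).symm⟩
      have hsep : ∀ a b, CS a → CS b → G'.Reachable a b → a = b := by
        intro a b ha hb hrab
        exact chain_sep hT hG hrv hdvr ha hb hrab
      have hdw'r : Desc T root w' (cRoot T root G w) := key2 hT hG hww'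
      have hw'dep := desc_dep_le hT hdw'r
      set nw := dep T root w' - dep T root (cRoot T root G w) with hnw
      have hnormw := (desc_norm hT hdw'r).2
      have hfind : ∃ i, CS ((par T root)^[i] w') := ⟨nw, by rw [hnormw]; exact hCSr⟩
      set i0 := Nat.find hfind with hi0def
      have hi0 : CS ((par T root)^[i0] w') := Nat.find_spec hfind
      have hi0min : ∀ i < i0, ¬ CS ((par T root)^[i] w') := fun i hi => Nat.find_min hfind hi
      have hi0le : i0 ≤ nw := Nat.find_min' hfind (by rw [hnormw]; exact hCSr)
      set u := (par T root)^[i0] w' with hudef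
      have hadjw := key1 hT hG (hww'.symm.trans hwr) hdw'r
      have hadjw' : ∀ i < i0, G'.Adj ((par T root)^[i] w') ((par T root)^[i+1] w') := by
        intro i hi
        rw [hG'def, SimpleGraph.deleteEdges_adj]
        refine ⟨hadjw i (by omega), ?_⟩
        intro hmem
        simp only [Set.mem_setOf_eq] at hmem
        rw [hqdef, edges_chainTo] at hmem
        obtain ⟨a, han, heq⟩ := hmem
        rw [Sym2.eq_iff] at heq
        have d1 : dep T root ((par T root)^[i] w') = dep T root w' - i :=
          dep_iter hT hdw'r (by omega)
        have d2 : dep T root ((par T root)^[i+1] w') = dep T root w' - (i+1) :=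
          dep_iter hT hdw'r (by omega)
        have d3 : dep T root ((par T root)^[a] v) = dep T root v - a :=
          dep_iter hT hdvr (by omega)
        have d4 : dep T root ((par T root)^[a+1] v) = dep T root v - (a+1) :=
          dep_iter hT hdvr (by omega)
        rcases heq with ⟨h1, h2⟩ | ⟨h1, h2⟩
        · exact hi0min i (by omega) ⟨a, by omega, h1⟩
        · rw [h1] at d1
          rw [h2] at d2
          omega
      have hwu : G'.Reachable w' u := ⟨chainW G' T root w' i0 hadjw'⟩
      have hρG : G.Reachable w (cRoot T root G' w') :=
        hww'.trans ((cRoot_reach G' w').mono hG'le)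
      have hρCS : CS (cRoot T root G' w') := by
        have hduρ : Desc T root u (cRoot T root G' w') := key2 hT hG'T hwu
        exact hCSup u _ hi0 hduρ hρG
      have hcr' : cRoot T root G' w' = u :=
        hsep _ _ hρCS hi0 ((cRoot_reach G' w').symm.trans hwu)
      obtain ⟨su, hsu, huv⟩ := hi0
      have hdur : Desc T root u (cRoot T root G w) := by
        rw [huv]; exact iter_desc_of_le hnormv hsu
      have hi0' : CS u := ⟨su, hsu, huv⟩
      refine jIH G' hG'T w' ?_ ?_
      · rw [hcr']
        exact le_trans (hinv' u) (le_trans (L_mono_cone hdur) hinv)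
      · rw [mu, hcr']
        by_cases hl' : L G' T root w' u ≤ Δ ^ k
        · rw [if_pos hl']; omega
        rw [if_neg hl']
        have hEcs : ∀ a b : V, s(a,b) ∈ {ed | ed ∈ q.edges} → CS a := by
          intro a b hmem
          simp only [Set.mem_setOf_eq] at hmem
          rw [hqdef, edges_chainTo] at hmem
          obtain ⟨i, hi, heq⟩ := hmem
          rw [Sym2.eq_iff] at heq
          rcases heq with ⟨h1, h2⟩ | ⟨h1, h2⟩
          · exact ⟨i, by omega, h1⟩
          · exact ⟨i+1, by omega, h1⟩
        have hEh : ∀ h' : V, G'.Reachable w' h' → h' ≠ u →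
            ∀ a b : V, s(a,b) ∈ {ed | ed ∈ q.edges} → ¬ Desc T root a h' := by
          intro h' hreach' hne a b hmem hdesc
          have haCS := hEcs a b hmem
          have hh'G : G.Reachable w h' := hww'.trans (hreach'.mono hG'le)
          have hh'CS : CS h' := hCSup a h' haCS hdesc hh'G
          exact hne (hsep h' u hh'CS hi0' (hreach'.symm.trans hwu))
        have hLpres : ∀ h', G'.Reachable w' h' → h' ≠ u →
            L G' T root w' h' = L G T root w h' := by
          intro h' h1 h2
          exact lvs_pres hT hG (hEh h' h1 h2) hww' h1
        by_cases hstar' : ∀ x, Heavy G' T root w' (Δ ^ k) x → x = u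
        · rw [if_pos hstar']
          have hkΔ : (kids G' T root u).ncard ≤ Δ := kids_ncard_le hT hG'T hdeg u
          rw [mu, if_neg hlight, if_neg (by push_neg; exact ⟨v0, hv0, hv0ne⟩)] at hmu
          have hm1 : 1 ≤ {x | MinHv G T root w (Δ^k) x}.ncard :=
            (Set.ncard_pos (Set.toFinite _)).2 ⟨v, hvmin⟩
          have hdiv : ((kids G' T root u).ncard + 1)/2 ≤ (Δ+1)/2 :=
            Nat.div_le_div_right (by omega)
          omega
        · rw [if_neg hstar']
          have hMsub : {x | MinHv G' T root w' (Δ^k) x} ⊆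
              {x | MinHv G T root w (Δ^k) x} \ {v} := by
            intro y hy
            have hyu : y ≠ u := by
              rintro rfl
              push_neg at hstar'
              obtain ⟨x0, hx0, hx0ne⟩ := hstar'
              have hdx0 : Desc T root x0 u := hcr' ▸ key2 hT hG'T hx0.1
              obtain ⟨c, hcy, hdc⟩ := kid_between hT hG'T (hx0.1.symm.trans hwu) hdx0 hx0ne
              refine hy.2 c hcy ⟨kid_reach hwu hcy, ?_⟩
              exact lt_of_lt_of_le hx0.2 (L_mono_cone hdc)
            have hyw : G'.Reachable w' y := hy.1.1
            have hyG : G.Reachable w y := hww'.trans (hyw.mono hG'le)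
            have hLy : L G' T root w' y = L G T root w y := hLpres y hyw hyu
            have hkidsy : kids G' T root y = kids G T root y :=
              kids_pres hT (hEh y hyw hyu) (desc_refl y)
            refine ⟨⟨⟨hyG, by rw [← hLy]; exact hy.1.2⟩, ?_⟩, ?_⟩
            · intro c hcy hHc
              have hcy' : c ∈ kids G' T root y := by rw [hkidsy]; exact hcy
              have hcw' : G'.Reachable w' c := hyw.trans hcy'.1.reachable
              have hcu : c ≠ u := by
                rintro rfl
                have hCSy : CS y := hCSup u y hi0' (kid_desc hcy) hyG
                exact hyu (hsep y u hCSy hi0' (hyw.symm.trans hwu))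
              have hLc : L G' T root w' c = L G T root w c := hLpres c hcw' hcu
              exact hy.2 c hcy' ⟨hcw', by rw [hLc]; exact hHc.2⟩
            · simp only [Set.mem_singleton_iff]
              intro hyv
              rw [hyv] at hyw hyu
              exact hyu (hsep v u hCSv hi0' (hyw.symm.trans hwu))
          have hvM : v ∈ {x | MinHv G T root w (Δ^k) x} := hvmin
          have hm1 : 1 ≤ {x | MinHv G T root w (Δ^k) x}.ncard :=
            (Set.ncard_pos (Set.toFinite _)).2 ⟨v, hvM⟩
          have hMle : {x | MinHv G' T root w' (Δ^k) x}.ncard ≤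
              {x | MinHv G T root w (Δ^k) x}.ncard - 1 := by
            refine le_trans (Set.ncard_le_ncard hMsub (Set.toFinite _)) ?_
            rw [Set.ncard_diff_singleton_of_mem hvM]
          rw [mu, if_neg hlight, if_neg (by push_neg; exact ⟨v0, hv0, hv0ne⟩)] at hmu
          omega

lemma desc_root (hT : T.IsTree) (v : V) : Desc T root v root := by
  have main : ∀ (N : ℕ) (v : V), dep T root v ≤ N → Desc T root v root := by
    intro N
    induction N with
    | zero =>
      intro v h
      rw [Nat.le_zero] at h
      rw [(dep_eq_zero_iff hT).mp h]
      exact desc_refl _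
    | succ N IHn =>
      intro v h
      by_cases hv : v = root
      · rw [hv]; exact desc_refl _
      · have hp := (par_spec hT hv).2
        exact desc_trans (desc_par hv) (IHn (par T root v) (by omega))
  exact main _ v le_rfl

/-! ### The outer induction -/

lemma outer (hT : T.IsTree) {Δ : ℕ} (hΔ : 2 ≤ Δ)
    (hdeg : ∀ v : V, (T.neighborSet v).ncard ≤ Δ) :
    ∀ (k : ℕ) (G : SimpleGraph V), G ≤ T → ∀ w : V,
      L G T root w (cRoot T root G w) ≤ Δ ^ k → PathDepthLE G w (2 * Δ * (k + 1)) := by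
  intro k
  induction k with
  | zero =>
    intro G hG w hL
    obtain ⟨m, hm⟩ : ∃ m, 2 * Δ * (0 + 1) = m + 1 := ⟨2 * Δ - 1, by omega⟩
    rw [hm]
    exact outer_base hT hG (by simpa using hL) m
  | succ k IHk =>
    intro G hG w hL
    have hmu : mu T root G w (Δ ^ k) Δ ≤ 2 * Δ := by
      rw [mu]
      split_ifs with h1 h2
      · omega
      · have := kids_ncard_le (root := root) hT hG hdeg (cRoot T root G w)
        omega
      · have hc := minHv_count (root := root) hT hG (w := w) (t := Δ ^ k)
        have hpow : Δ ^ (k + 1) = Δ * Δ ^ k := by rw [pow_succ]; ring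
        have hmle : {v | MinHv G T root w (Δ ^ k) v}.ncard ≤ Δ - 1 := by
          by_contra hcon
          push_neg at hcon
          have h2' : Δ ≤ {v | MinHv G T root w (Δ ^ k) v}.ncard := by omega
          have e1 : Δ * (Δ ^ k + 1) ≤ {v | MinHv G T root w (Δ ^ k) v}.ncard * (Δ ^ k + 1) :=
            Nat.mul_le_mul_right _ h2'
          have e2 : Δ * (Δ ^ k + 1) ≤ Δ * Δ ^ k :=
            le_trans e1 (le_trans hc (hL.trans_eq hpow))
          rw [Nat.mul_add, Nat.mul_one] at e2
          omega
        omega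
    have hres := inner hT hΔ hdeg k IHk (2 * Δ) G hG w hL hmu
    have harith : 2 * Δ * (k + 1 + 1) = 2 * Δ + 2 * Δ * (k + 1) := by ring
    rw [harith]
    exact hres

end PD14


/-- Let `Δ ≥ 2` and let `T` be a finite rooted tree with `ℓ ≥ 1` leaves
(vertices all of whose neighbours are their parent, i.e. vertices with no children) in
which every vertex has degree at most `Δ`.  Then the path depth of `T` is at most
`2Δ(⌈log_Δ ℓ⌉ + 1)`. -/
theorem stmt_14 {V : Type*} [Fintype V] (T : SimpleGraph V) (hT : T.IsTree) (root : V)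
    (Δ : ℕ) (hΔ : 2 ≤ Δ)
    (hdeg : ∀ v : V, (T.neighborSet v).ncard ≤ Δ)
    (ℓ : ℕ) (hℓpos : 1 ≤ ℓ)
    (hℓ : ℓ = {v : V | ∀ x : V, T.Adj v x → T.dist root x + 1 = T.dist root v}.ncard) :
    PathDepthLE T root (2 * Δ * (Nat.clog Δ ℓ + 1)) := by
  classical
  have hcr : PD14.cRoot T root T root = root := by
    refine PD14.cRoot_eq_of hT le_rfl (SimpleGraph.Reachable.refl root) ?_
    intro z hz
    rw [PD14.dep_root]
    exact Nat.zero_le _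
  have hset : PD14.lvs T T root root root =
      {v : V | ∀ x : V, T.Adj v x → T.dist root x + 1 = T.dist root v} := by
    ext v
    simp only [PD14.lvs, Set.mem_setOf_eq]
    constructor
    · rintro ⟨-, -, hk⟩ x hadj
      rcases PD14.adj_dep hT hadj with h | h
      · exfalso
        have hpar : PD14.par T root x = v := PD14.par_unique hT hadj h
        have hmem : x ∈ PD14.kids T T root v := ⟨hadj, hpar⟩
        rw [hk] at hmem
        exact Set.notMem_empty x hmem
      · exact h.symm
    · intro h
      refine ⟨hT.isConnected.preconnected root v, PD14.desc_root hT v, ?_⟩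
      rw [Set.eq_empty_iff_forall_notMem]
      intro c hc
      have h1 : PD14.dep T root c = PD14.dep T root v + 1 :=
        PD14.kid_dep' hT le_rfl hc
      have h2 := h c hc.1
      unfold PD14.dep at h1
      omega
  have hLT : PD14.L T T root root root = ℓ := by
    rw [PD14.L, hset, ← hℓ]
  refine PD14.outer (root := root) hT hΔ hdeg (Nat.clog Δ ℓ) T le_rfl root ?_
  rw [hcr, hLT]
  exact Nat.le_pow_clog (by omega) ℓ
end

section
/- Let Δ ≥ 3 be odd and k ≥ 1, and let T_Δ^k be the complete rooted tree of depth k in which every vertex at depth less than k has exactly Δ children and every vertex at depth k is a leaf. Then the path depth of T_Δ^k satisfies pd(T_Δ^k) ≥ k(Δ−1)/2. -/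
/-- The complete rooted `Δ`-ary tree of depth `k`: vertices are the words over `Fin Δ` of
length at most `k` (the root being the empty word, and depth being word length), and each
vertex of depth less than `k` is joined to its `Δ` children, obtained by prepending a
letter. -/
def CompleteTree (Δ k : ℕ) : SimpleGraph {l : List (Fin Δ) // l.length ≤ k} :=
  SimpleGraph.fromRel fun a b => ∃ i : Fin Δ, (b : List (Fin Δ)) = i :: (a : List (Fin Δ))


namespace Stmt15

open SimpleGraph


open SimpleGraph

lemma mem_support_of_mem_edges' {A : Type*} {G : SimpleGraph A} {a b x : A} {e : Sym2 A}
    (q : G.Walk a b) (he : e ∈ q.edges) (hx : x ∈ e) : x ∈ q.support := by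
  induction e using Sym2.ind with
  | _ y z =>
    rcases Sym2.mem_iff.mp hx with rfl | rfl
    · exact q.fst_mem_support_of_mem_edges he
    · exact q.snd_mem_support_of_mem_edges he

lemma edge_at_start_unique {A : Type*} {G : SimpleGraph A} :
    ∀ {a b : A} (p : G.Walk a b), p.IsPath → ∀ {e₁ e₂ : Sym2 A},
      e₁ ∈ p.edges → e₂ ∈ p.edges → a ∈ e₁ → a ∈ e₂ → e₁ = e₂ := by
  intro a b p
  induction p with
  | nil => simp
  | @cons u v w h q ih =>
    intro hp e₁ e₂ h1 h2 m1 m2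
    rw [SimpleGraph.Walk.cons_isPath_iff] at hp
    rw [SimpleGraph.Walk.edges_cons, List.mem_cons] at h1 h2
    rcases h1 with rfl | h1
    · rcases h2 with rfl | h2
      · rfl
      · exact absurd (mem_support_of_mem_edges' q h2 m2) hp.2
    · exact absurd (mem_support_of_mem_edges' q h1 m1) hp.2

lemma three_edges {A : Type*} {G : SimpleGraph A} :
    ∀ {a b : A} (p : G.Walk a b), p.IsPath → ∀ {x : A} {e₁ e₂ e₃ : Sym2 A},
      e₁ ∈ p.edges → e₂ ∈ p.edges → e₃ ∈ p.edges →
      x ∈ e₁ → x ∈ e₂ → x ∈ e₃ → e₁ ≠ e₂ → e₁ ≠ e₃ → e₂ ≠ e₃ → False := by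
  intro a b p
  induction p with
  | nil => simp
  | @cons u v w h q ih =>
    intro hp x e₁ e₂ e₃ h1 h2 h3 m1 m2 m3 d12 d13 d23
    have hp' := (SimpleGraph.Walk.cons_isPath_iff h q).mp hp
    rw [SimpleGraph.Walk.edges_cons, List.mem_cons] at h1 h2 h3
    rcases h1 with rfl | h1
    · have h2' := h2.resolve_left (fun hh => d12 hh.symm)
      have h3' := h3.resolve_left (fun hh => d13 hh.symm)
      rcases Sym2.mem_iff.mp m1 with rfl | rfl
      · exact hp'.2 (mem_support_of_mem_edges' q h2' m2)
      · exact d23 (edge_at_start_unique q hp'.1 h2' h3' m2 m3)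
    · rcases h2 with rfl | h2
      · have h3' := h3.resolve_left (fun hh => d23 hh.symm)
        rcases Sym2.mem_iff.mp m2 with rfl | rfl
        · exact hp'.2 (mem_support_of_mem_edges' q h1 m1)
        · exact d13 (edge_at_start_unique q hp'.1 h1 h3' m1 m3)
      · rcases h3 with rfl | h3
        · rcases Sym2.mem_iff.mp m3 with rfl | rfl
          · exact hp'.2 (mem_support_of_mem_edges' q h1 m1)
          · exact d12 (edge_at_start_unique q hp'.1 h1 h2 m1 m2)
        · exact ih hp'.1 h1 h2 h3 m1 m2 m3 d12 d13 d23

lemma cross {A : Type*} {G : SimpleGraph A} (P : A → Prop) :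
    ∀ {a b : A} (q : G.Walk a b), P a → ¬ P b →
      ∃ x y, s(x, y) ∈ q.edges ∧ P x ∧ ¬ P y := by
  intro a b q
  induction q with
  | nil => intro h1 h2; exact absurd h1 h2
  | @cons u v w h q ih =>
    intro h1 h2
    by_cases hv : P v
    · obtain ⟨x, y, hm, hx, hy⟩ := ih hv h2
      exact ⟨x, y, by rw [SimpleGraph.Walk.edges_cons]; exact List.mem_cons_of_mem _ hm, hx, hy⟩
    · exact ⟨u, v, by rw [SimpleGraph.Walk.edges_cons]; exact List.mem_cons_self, h1, hv⟩

lemma cross_support {A : Type*} [DecidableEq A] {G : SimpleGraph A} {a b x y : A}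
    (q : G.Walk a b) (P : A → Prop) (hx : x ∈ q.support) (hy : y ∈ q.support)
    (hPx : P x) (hPy : ¬ P y) :
    ∃ u u', s(u, u') ∈ q.edges ∧ P u ∧ ¬ P u' := by
  have hspec := q.take_spec hx
  rw [← hspec, SimpleGraph.Walk.mem_support_append_iff] at hy
  rcases hy with hy | hy
  · obtain ⟨u, u', hm, hu, hu'⟩ :=
      cross (fun z => ¬ P z) ((q.takeUntil x hx).dropUntil y hy) hPy (not_not_intro hPx)
    refine ⟨u', u, ?_, not_not.mp hu', hu⟩
    rw [Sym2.eq_swap]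
    exact (q.edges_takeUntil_subset hx) ((q.takeUntil x hx).edges_dropUntil_subset hy hm)
  · obtain ⟨u, u', hm, hu, hu'⟩ :=
      cross P ((q.dropUntil x hx).takeUntil y hy) hPx hPy
    exact ⟨u, u', (q.edges_dropUntil_subset hx) ((q.dropUntil x hx).edges_takeUntil_subset hy hm), hu, hu'⟩



open SimpleGraph

variable {Δ k : ℕ}

abbrev Vtx (Δ k : ℕ) := {l : List (Fin Δ) // l.length ≤ k}

def Intact (G : SimpleGraph (Vtx Δ k)) (v : List (Fin Δ)) : Prop :=
  ∀ x y : Vtx Δ k, v <:+ x.val → (∃ j : Fin Δ, y.val = j :: x.val) → G.Adj x y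

def Good (G : SimpleGraph (Vtx Δ k)) (r : Vtx Δ k) (c k' : ℕ) : Prop :=
  r.val.length + k' ≤ k ∧ ∃ S : Finset (Fin Δ), c ≤ S.card ∧ ∀ i ∈ S,
    ∃ v : Vtx Δ k, v.val = i :: r.val ∧ G.Adj r v ∧ Intact G v.val

lemma suffix_disj {t : List (Fin Δ)} {i j : Fin Δ} (hij : i ≠ j) {x : List (Fin Δ)}
    (hi : (i :: t) <:+ x) (hj : (j :: t) <:+ x) : False := by
  rcases List.suffix_or_suffix_of_suffix hi hj with h | h
  · exact hij (by injection h.eq_of_length (by simp))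
  · exact hij (by injection (h.eq_of_length (by simp)).symm)

lemma vne_len {x y : Vtx Δ k} (h : x.val.length ≠ y.val.length) : x ≠ y :=
  fun he => h (by rw [he])

lemma vne_cons {x y : Vtx Δ k} {i j : Fin Δ} {l : List (Fin Δ)}
    (hx : x.val = i :: l) (hy : y.val = j :: l) (hij : i ≠ j) : x ≠ y := by
  intro he
  have h2 : i :: l = j :: l := by rw [← hx, he, hy]
  exact hij (by injection h2)

/-- If the walk touches the subtree of the child `c = i :: t` and also some vertex outside
it, then the parent edge `s(t, c)` is among the walk's edges. -/
lemma parent_edge {G : SimpleGraph (Vtx Δ k)} (hle : G ≤ CompleteTree Δ k)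
    {a b : Vtx Δ k} (q : G.Walk a b) {t c : Vtx Δ k} {i : Fin Δ} (hc : c.val = i :: t.val)
    (hin : ∃ x ∈ q.support, c.val <:+ x.val) (hout : ∃ y ∈ q.support, ¬ c.val <:+ y.val) :
    s(t, c) ∈ q.edges := by
  classical
  obtain ⟨x, hxs, hx⟩ := hin
  obtain ⟨y, hys, hy⟩ := hout
  obtain ⟨u, u', hm, hu, hu'⟩ := cross_support q (fun z => c.val <:+ z.val) hxs hys hx hy
  have hadj : G.Adj u u' := q.adj_of_mem_edges hm
  have hct := hle hadj
  rw [CompleteTree, SimpleGraph.fromRel_adj] at hct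
  obtain ⟨hne, hrel⟩ := hct
  rcases hrel with ⟨j, hj⟩ | ⟨j, hj⟩
  · exfalso
    apply hu'
    have : c.val <:+ j :: u.val := hu.trans (List.suffix_cons j u.val)
    rwa [← hj] at this
  · have h2 : c.val <:+ j :: u'.val := by rw [← hj]; exact hu
    rcases List.suffix_cons_iff.mp h2 with heq | hsuf
    · have hji : j = i ∧ u'.val = t.val := by
        have := heq.symm.trans hc
        exact ⟨by injection this, by injection this⟩
      have hu't : u' = t := Subtype.ext hji.2
      have huc : u = c := Subtype.ext (by rw [hj, hji.2, hji.1]; exact hc.symm)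
      rw [← hu't, ← huc, Sym2.eq_swap]
      exact hm
    · exact absurd hsuf hu'

/-- Three distinct touched child subtrees of a vertex are impossible for a path. -/
lemma three_touched {G : SimpleGraph (Vtx Δ k)} (hle : G ≤ CompleteTree Δ k)
    {a b : Vtx Δ k} (p : G.Walk a b) (hp : p.IsPath) {t : Vtx Δ k}
    {i₁ i₂ i₃ : Fin Δ} (h12 : i₁ ≠ i₂) (h13 : i₁ ≠ i₃) (h23 : i₂ ≠ i₃)
    (hlen : t.val.length + 1 ≤ k)
    (h1 : ∃ x ∈ p.support, (i₁ :: t.val) <:+ x.val)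
    (h2 : ∃ x ∈ p.support, (i₂ :: t.val) <:+ x.val)
    (h3 : ∃ x ∈ p.support, (i₃ :: t.val) <:+ x.val) : False := by
  have hcl : ∀ i : Fin Δ, (i :: t.val).length ≤ k := fun i => by simpa using hlen
  set c₁ : Vtx Δ k := ⟨i₁ :: t.val, hcl i₁⟩
  set c₂ : Vtx Δ k := ⟨i₂ :: t.val, hcl i₂⟩
  set c₃ : Vtx Δ k := ⟨i₃ :: t.val, hcl i₃⟩
  have hout : ∀ (i j : Fin Δ), i ≠ j → (∃ x ∈ p.support, (j :: t.val) <:+ x.val) →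
      ∃ y ∈ p.support, ¬ (i :: t.val) <:+ y.val := by
    intro i j hij ⟨x, hxs, hx⟩
    exact ⟨x, hxs, fun hs => suffix_disj hij hs hx⟩
  have e₁ : s(t, c₁) ∈ p.edges := parent_edge hle p rfl h1 (hout i₁ i₂ h12 h2)
  have e₂ : s(t, c₂) ∈ p.edges := parent_edge hle p rfl h2 (hout i₂ i₁ h12.symm h1)
  have e₃ : s(t, c₃) ∈ p.edges := parent_edge hle p rfl h3 (hout i₃ i₁ h13.symm h1)
  have hne : ∀ (x y : Vtx Δ k), x ≠ y → (x.val.length ≠ t.val.length) →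
      (y.val.length ≠ t.val.length) → s(t, x) ≠ s(t, y) := by
    intro x y hxy hx hy h
    rcases Sym2.eq_iff.mp h with ⟨_, h2⟩ | ⟨h1, h2⟩
    · exact hxy h2
    · exact hy (by rw [← h1])
  refine three_edges p hp e₁ e₂ e₃ (Sym2.mem_mk_left _ _) (Sym2.mem_mk_left _ _)
    (Sym2.mem_mk_left _ _) ?_ ?_ ?_
  · exact hne c₁ c₂ (vne_cons rfl rfl h12) (by simp [c₁]) (by simp [c₂])
  · exact hne c₁ c₃ (vne_cons rfl rfl h13) (by simp [c₁]) (by simp [c₃])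
  · exact hne c₂ c₃ (vne_cons rfl rfl h23) (by simp [c₂]) (by simp [c₃])

/-- Goodness transfers to the graph with a path's edges deleted, for children whose
subtrees are untouched by the path. -/
lemma good_step {G : SimpleGraph (Vtx Δ k)} {a b : Vtx Δ k} (p : G.Walk a b)
    {r : Vtx Δ k} {c k' : ℕ} (hlen : r.val.length + k' ≤ k)
    (T : Finset (Fin Δ)) (hc : c ≤ T.card)
    (hgood : ∀ i ∈ T, ∃ v : Vtx Δ k, v.val = i :: r.val ∧ G.Adj r v ∧ Intact G v.val)
    (hT : ∀ i ∈ T, ¬ ∃ x ∈ p.support, (i :: r.val) <:+ x.val) :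
    Good (G.deleteEdges {ed | ed ∈ p.edges}) r c k' := by
  refine ⟨hlen, T, hc, fun i hi => ?_⟩
  obtain ⟨v, hv, hadj, hI⟩ := hgood i hi
  refine ⟨v, hv, ?_, ?_⟩
  · rw [SimpleGraph.deleteEdges_adj]
    refine ⟨hadj, fun hmem => hT i hi ⟨v, p.snd_mem_support_of_mem_edges hmem, hv ▸ List.suffix_refl _⟩⟩
  · intro x y hx hy
    rw [SimpleGraph.deleteEdges_adj]
    exact ⟨hI x y hx hy, fun hmem => hT i hi ⟨x, p.fst_mem_support_of_mem_edges hmem, hv ▸ hx⟩⟩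

lemma children_good {G : SimpleGraph (Vtx Δ k)} {v : Vtx Δ k} (hI : Intact G v.val)
    (hlen : v.val.length + 1 ≤ k) (j : Fin Δ) :
    ∃ w : Vtx Δ k, w.val = j :: v.val ∧ G.Adj v w ∧ Intact G w.val := by
  refine ⟨⟨j :: v.val, by simpa using hlen⟩, rfl,
    hI v _ (List.suffix_refl _) ⟨j, rfl⟩,
    fun x y hx hy => hI x y ((List.suffix_cons _ _).trans hx) hy⟩

lemma main {G : SimpleGraph (Vtx Δ k)} {w : Vtx Δ k} {n : ℕ} (hpd : PathDepthLE G w n) :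
    ∀ (r : Vtx Δ k) (c k' : ℕ), G ≤ CompleteTree Δ k → G.Reachable w r →
      Good G r c k' → 1 ≤ c → 1 ≤ k' → 3 ≤ Δ → Odd Δ →
      c / 2 + (k' - 1) * ((Δ - 1) / 2) ≤ n := by
  induction hpd with
  | single G w n h =>
    intro r c k' hle hreach hgood hc hk' hΔ hodd
    exfalso
    obtain ⟨hlen, S, hcard, hS⟩ := hgood
    obtain ⟨i, hi⟩ := Finset.card_pos.mp (show 0 < S.card by omega)
    obtain ⟨v, hv, hadj, _⟩ := hS i hi
    have hr : r = w := h r hreach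
    have hv' : v = w := h v (hreach.trans hadj.reachable)
    have hvv : v.val = i :: v.val := by rw [hr, ← hv'] at hv; exact hv
    have hlc := congrArg List.length hvv
    simp at hlc
  | step G w n u vv p hp hne hu h ih =>
    intro r c k' hle hreach hgood hc hk' hΔ hodd
    classical
    obtain ⟨hlen, S₀, hcard0, hS₀⟩ := hgood
    obtain ⟨S, hSsub, hScard⟩ := Finset.exists_subset_card_eq hcard0
    have hS : ∀ i ∈ S, ∃ v : Vtx Δ k, v.val = i :: r.val ∧ G.Adj r v ∧ Intact G v.val :=
      fun i hi => hS₀ i (hSsub hi)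
    have hle' : G.deleteEdges {ed | ed ∈ p.edges} ≤ CompleteTree Δ k :=
      le_trans (SimpleGraph.deleteEdges_le _) hle
    obtain ⟨Q, hQ⟩ := hodd
    have hlen1 : r.val.length + 1 ≤ k := by omega
    rcases lt_or_ge c 3 with hc2 | hc3
    · -- c ≤ 2
      rcases Nat.lt_or_ge k' 2 with hk1 | hk2
      · -- k' = 1
        have e0 : k' - 1 = 0 := by omega
        rw [e0]
        omega
      · -- k' ≥ 2
        obtain ⟨m, rfl⟩ : ∃ m, k' = m + 2 := ⟨k' - 2, by omega⟩
        have e1 : m + 2 - 1 = m + 1 := rfl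
        have e2 : m + 1 - 1 = m := rfl
        by_cases hex : ∃ i ∈ S, ¬ ∃ x ∈ p.support, (i :: r.val) <:+ x.val
        · -- some child subtree untouched: descend to it with all Δ grandchildren
          obtain ⟨i, hiS, hT⟩ := hex
          obtain ⟨v, hv, hadj, hI⟩ := hS i hiS
          have hlenv : v.val.length + (m + 1) ≤ k := by rw [hv]; simp; omega
          have hlenv1 : v.val.length + 1 ≤ k := by omega
          have hUT : ∀ j ∈ (Finset.univ : Finset (Fin Δ)),
              ¬ ∃ x ∈ p.support, (j :: v.val) <:+ x.val := by
            rintro j - ⟨x, hxs, hx⟩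
            exact hT ⟨x, hxs, by rw [← hv]; exact ((List.suffix_cons j v.val).trans hx)⟩
          have hgood' : Good (G.deleteEdges {ed | ed ∈ p.edges}) v Δ (m + 1) :=
            good_step p hlenv Finset.univ (by simp) (fun j _ => children_good hI hlenv1 j) hUT
          have hrec := ih v (hreach.trans hadj.reachable) v Δ (m + 1) hle'
            (SimpleGraph.Reachable.refl v) hgood' (by omega) (by omega) hΔ ⟨Q, hQ⟩
          rw [e2] at hrec
          rw [e1, show (m + 1) * ((Δ - 1) / 2) = m * ((Δ - 1) / 2) + (Δ - 1) / 2 from by ring]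
          set E := m * ((Δ - 1) / 2) with hE
          omega
        · -- all child subtrees in S touched
          push_neg at hex
          obtain rfl | rfl := (show c = 1 ∨ c = 2 by omega)
          · -- c = 1
            obtain ⟨i, hiS⟩ := Finset.card_pos.mp (show 0 < S.card by omega)
            obtain ⟨v, hv, hadj, hI⟩ := hS i hiS
            have hlenv : v.val.length + (m + 1) ≤ k := by rw [hv]; simp; omega
            have hlenv1 : v.val.length + 1 ≤ k := by omega
            set D := Finset.univ.filter
              (fun j : Fin Δ => ∃ x ∈ p.support, (j :: v.val) <:+ x.val) with hD
            have hD2 : D.card ≤ 2 := by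
              by_contra hcon
              push_neg at hcon
              obtain ⟨T, hTsub, hT3⟩ := Finset.exists_subset_card_eq (s := D) (n := 3) (by omega)
              obtain ⟨j₁, j₂, j₃, h12, h13, h23, rfl⟩ := Finset.card_eq_three.mp hT3
              have ht : ∀ j ∈ ({j₁, j₂, j₃} : Finset (Fin Δ)),
                  ∃ x ∈ p.support, (j :: v.val) <:+ x.val :=
                fun j hj => (Finset.mem_filter.mp (hTsub hj)).2
              exact three_touched hle p hp h12 h13 h23 hlenv1
                (ht j₁ (by simp)) (ht j₂ (by simp)) (ht j₃ (by simp))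
            have hUcard : Δ - 2 ≤ (Finset.univ \ D).card := by
              rw [Finset.card_sdiff_of_subset (Finset.subset_univ D), Finset.card_univ, Fintype.card_fin]
              omega
            have hUT : ∀ j ∈ Finset.univ \ D, ¬ ∃ x ∈ p.support, (j :: v.val) <:+ x.val := by
              intro j hj hx
              exact (Finset.mem_sdiff.mp hj).2 (Finset.mem_filter.mpr ⟨Finset.mem_univ j, hx⟩)
            have hgood' : Good (G.deleteEdges {ed | ed ∈ p.edges}) v (Δ - 2) (m + 1) :=
              good_step p hlenv _ hUcard (fun j _ => children_good hI hlenv1 j) hUT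
            have hrec := ih v (hreach.trans hadj.reachable) v (Δ - 2) (m + 1) hle'
              (SimpleGraph.Reachable.refl v) hgood' (by omega) (by omega) hΔ ⟨Q, hQ⟩
            rw [e2] at hrec
            rw [e1, show (m + 1) * ((Δ - 1) / 2) = m * ((Δ - 1) / 2) + (Δ - 1) / 2 from by ring]
            set E := m * ((Δ - 1) / 2) with hE
            omega
          · -- c = 2
            obtain ⟨i₁, i₂, hi12, rfl⟩ := Finset.card_eq_two.mp hScard
            obtain ⟨v₁, hv₁, hadj₁, hI₁⟩ := hS i₁ (by simp)
            have ht₁ := hex i₁ (by simp)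
            have ht₂ := hex i₂ (by simp)
            have hlenv : v₁.val.length + (m + 1) ≤ k := by rw [hv₁]; simp; omega
            have hlenv1 : v₁.val.length + 1 ≤ k := by omega
            have hpe : s(r, v₁) ∈ p.edges := by
              refine parent_edge hle p hv₁ (by rw [hv₁]; exact ht₁) ?_
              obtain ⟨x₂, hx₂s, hx₂⟩ := ht₂
              refine ⟨x₂, hx₂s, fun hs => ?_⟩
              rw [hv₁] at hs
              exact suffix_disj hi12 hs hx₂
            set D := Finset.univ.filter
              (fun j : Fin Δ => ∃ x ∈ p.support, (j :: v₁.val) <:+ x.val) with hD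
            have hD1 : D.card ≤ 1 := by
              by_contra hcon
              push_neg at hcon
              obtain ⟨T, hTsub, hT2⟩ := Finset.exists_subset_card_eq (s := D) (n := 2) (by omega)
              obtain ⟨j₁, j₂, h12, rfl⟩ := Finset.card_eq_two.mp hT2
              have ht : ∀ j ∈ ({j₁, j₂} : Finset (Fin Δ)),
                  ∃ x ∈ p.support, (j :: v₁.val) <:+ x.val :=
                fun j hj => (Finset.mem_filter.mp (hTsub hj)).2
              have hcl : ∀ j : Fin Δ, (j :: v₁.val).length ≤ k := fun j => by simpa using hlenv1
              have he₁ : s(v₁, (⟨j₁ :: v₁.val, hcl j₁⟩ : Vtx Δ k)) ∈ p.edges := by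
                refine parent_edge hle p rfl (ht j₁ (by simp)) ?_
                obtain ⟨x, hxs, hx⟩ := ht j₂ (by simp)
                exact ⟨x, hxs, fun hs => suffix_disj h12 hs hx⟩
              have he₂ : s(v₁, (⟨j₂ :: v₁.val, hcl j₂⟩ : Vtx Δ k)) ∈ p.edges := by
                refine parent_edge hle p rfl (ht j₂ (by simp)) ?_
                obtain ⟨x, hxs, hx⟩ := ht j₁ (by simp)
                exact ⟨x, hxs, fun hs => suffix_disj h12.symm hs hx⟩
              refine three_edges p hp he₁ he₂ hpe (Sym2.mem_mk_left _ _)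
                (Sym2.mem_mk_left _ _) (Sym2.mem_mk_right _ _) ?_ ?_ ?_
              · intro hh
                rcases Sym2.eq_iff.mp hh with ⟨-, hww⟩ | ⟨hvw, -⟩
                · exact vne_cons (x := (⟨j₁ :: v₁.val, hcl j₁⟩ : Vtx Δ k))
                    (y := (⟨j₂ :: v₁.val, hcl j₂⟩ : Vtx Δ k)) rfl rfl h12 hww
                · exact vne_len (x := v₁) (y := (⟨j₂ :: v₁.val, hcl j₂⟩ : Vtx Δ k))
                    (by simp) hvw
              · intro hh
                rcases Sym2.eq_iff.mp hh with ⟨hvr, -⟩ | ⟨-, hwv⟩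
                · exact vne_len (x := v₁) (y := r) (by rw [hv₁]; simp) hvr
                · exact vne_len (x := (⟨j₁ :: v₁.val, hcl j₁⟩ : Vtx Δ k)) (y := r)
                    (by simp [hv₁]; omega) hwv
              · intro hh
                rcases Sym2.eq_iff.mp hh with ⟨hvr, -⟩ | ⟨-, hwv⟩
                · exact vne_len (x := v₁) (y := r) (by rw [hv₁]; simp) hvr
                · exact vne_len (x := (⟨j₂ :: v₁.val, hcl j₂⟩ : Vtx Δ k)) (y := r)
                    (by simp [hv₁]; omega) hwv
            have hUcard : Δ - 1 ≤ (Finset.univ \ D).card := by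
              rw [Finset.card_sdiff_of_subset (Finset.subset_univ D), Finset.card_univ, Fintype.card_fin]
              omega
            have hUT : ∀ j ∈ Finset.univ \ D, ¬ ∃ x ∈ p.support, (j :: v₁.val) <:+ x.val := by
              intro j hj hx
              exact (Finset.mem_sdiff.mp hj).2 (Finset.mem_filter.mpr ⟨Finset.mem_univ j, hx⟩)
            have hgood' : Good (G.deleteEdges {ed | ed ∈ p.edges}) v₁ (Δ - 1) (m + 1) :=
              good_step p hlenv _ hUcard (fun j _ => children_good hI₁ hlenv1 j) hUT
            have hrec := ih v₁ (hreach.trans hadj₁.reachable) v₁ (Δ - 1) (m + 1) hle'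
              (SimpleGraph.Reachable.refl v₁) hgood' (by omega) (by omega) hΔ ⟨Q, hQ⟩
            rw [e2] at hrec
            rw [e1, show (m + 1) * ((Δ - 1) / 2) = m * ((Δ - 1) / 2) + (Δ - 1) / 2 from by ring]
            set E := m * ((Δ - 1) / 2) with hE
            omega
    · -- c ≥ 3 : stay at r, at most two child subtrees touched
      set D := S.filter (fun i => ∃ x ∈ p.support, (i :: r.val) <:+ x.val) with hD
      have hD2 : D.card ≤ 2 := by
        by_contra hcon
        push_neg at hcon
        obtain ⟨T, hTsub, hT3⟩ := Finset.exists_subset_card_eq (s := D) (n := 3) (by omega)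
        obtain ⟨j₁, j₂, j₃, h12, h13, h23, rfl⟩ := Finset.card_eq_three.mp hT3
        have ht : ∀ j ∈ ({j₁, j₂, j₃} : Finset (Fin Δ)),
            ∃ x ∈ p.support, (j :: r.val) <:+ x.val :=
          fun j hj => (Finset.mem_filter.mp (hTsub hj)).2
        exact three_touched hle p hp h12 h13 h23 hlen1
          (ht j₁ (by simp)) (ht j₂ (by simp)) (ht j₃ (by simp))
      have hDsub : D ⊆ S := by rw [hD]; exact Finset.filter_subset _ _
      have hUcard : c - 2 ≤ (S \ D).card := by
        rw [Finset.card_sdiff_of_subset hDsub]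
        omega
      have hUT : ∀ i ∈ S \ D, ¬ ∃ x ∈ p.support, (i :: r.val) <:+ x.val := by
        intro i hi hx
        have h' := Finset.mem_sdiff.mp hi
        exact h'.2 (Finset.mem_filter.mpr ⟨h'.1, hx⟩)
      have hgood' : Good (G.deleteEdges {ed | ed ∈ p.edges}) r (c - 2) k' :=
        good_step p hlen _ hUcard (fun i hi => hS i (Finset.mem_sdiff.mp hi).1) hUT
      have hrec := ih r hreach r (c - 2) k' hle'
        (SimpleGraph.Reachable.refl r) hgood' (by omega) hk' hΔ ⟨Q, hQ⟩
      set E := (k' - 1) * ((Δ - 1) / 2) with hE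
      omega


end Stmt15

/-- For odd `Δ ≥ 3` and `k ≥ 1`, the path depth of the complete rooted
`Δ`-ary tree of depth `k` is at least `k(Δ−1)/2`. -/
theorem stmt_15 (Δ k : ℕ) (hΔ : 3 ≤ Δ) (hodd : Odd Δ) (hk : 1 ≤ k) :
    ∀ n : ℕ, PathDepthLE (CompleteTree Δ k) ⟨[], by simp⟩ n → k * (Δ - 1) / 2 ≤ n := by
  intro n hpd
  have hgood : Stmt15.Good (CompleteTree Δ k) ⟨[], by simp⟩ Δ k := by
    refine ⟨by simp, Finset.univ, by simp, fun i _ => ?_⟩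
    refine ⟨⟨[i], by simpa using hk⟩, rfl, ?_, ?_⟩
    · rw [CompleteTree, SimpleGraph.fromRel_adj]
      refine ⟨?_, Or.inl ⟨i, rfl⟩⟩
      intro hh
      have := congrArg (fun z : Stmt15.Vtx Δ k => z.val.length) hh
      simp at this
    · rintro x y hx ⟨j, hy⟩
      rw [CompleteTree, SimpleGraph.fromRel_adj]
      refine ⟨?_, Or.inl ⟨j, hy⟩⟩
      intro hh
      have := congrArg (fun z : Stmt15.Vtx Δ k => z.val.length) hh
      simp [hy] at this
  have hmain := Stmt15.main hpd ⟨[], by simp⟩ Δ k le_rfl (SimpleGraph.Reachable.refl _)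
    hgood (by omega) hk hΔ hodd
  obtain ⟨Q, hQ⟩ := hodd
  obtain ⟨m, rfl⟩ : ∃ m, k = m + 1 := ⟨k - 1, by omega⟩
  have e2 : m + 1 - 1 = m := rfl
  rw [e2, show (Δ - 1) / 2 = Q from by omega, show Δ / 2 = Q from by omega] at hmain
  rw [show Δ - 1 = 2 * Q from by omega,
    show (m + 1) * (2 * Q) = (Q + m * Q) * 2 from by ring,
    Nat.mul_div_cancel _ (by norm_num : (0:ℕ) < 2)]
  exact hmain
end
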